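/- arXiv:1707.08264 — 8 statements merged into one kernel-verified Lean document; each statement's English description precedes it below -/
import Mathlib

section
/- Let α > 1, 𝔞 > 0, and let L : (0,∞) → (0,∞) be a continuous slowly varying function. Assume the function t ↦ e^{−t}·t^α/L(t) is strictly decreasing on [𝔞,∞), and for all sufficiently large s > 0 let u(s) be the unique element of [𝔞,∞) with e^{−u(s)}·u(s)^α/L(u(s)) = 1/s. Then u(s) − (log s + α·log log s − log L(log s)) → 0 as s → +∞. -/
open Filter Real Set

/-- A positive function is slowly varying (at `+∞`) if `L (c * t) / L t → 1`
as `t → +∞` for every `c > 0`. -/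
def SlowlyVarying (L : ℝ → ℝ) : Prop :=
  ∀ c : ℝ, 0 < c → Filter.Tendsto (fun t => L (c * t) / L t) Filter.atTop (nhds 1)


lemma uct_aux (h : ℝ → ℝ) (hc : Continuous h)
    (hs : ∀ u : ℝ, Filter.Tendsto (fun x => h (x + u) - h x) Filter.atTop (nhds 0))
    {ε : ℝ} (hε : 0 < ε) :
    ∃ X : ℝ, ∀ x ≥ X, ∀ u ∈ Set.Icc (0:ℝ) 1, |h (x + u) - h x| ≤ ε := by
  have hε4 : 0 < ε / 4 := by linarith
  -- pointwise eventual bound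
  have hpt : ∀ u : ℝ, ∃ X : ℝ, ∀ x ≥ X, |h (x + u) - h x| ≤ ε / 4 := by
    intro u
    have := (NormedAddCommGroup.tendsto_nhds_zero.mp (hs u)) (ε / 4) hε4
    rw [Filter.eventually_atTop] at this
    obtain ⟨X, hX⟩ := this
    exact ⟨X, fun x hx => by simpa [Real.norm_eq_abs] using (hX x hx).le⟩
  -- Baire category
  set F : ℕ → Set ℝ := fun n =>
    {v | ∀ x ≥ (n : ℝ), |h (x + v) - h x| ≤ ε / 4} ∪ (Set.Iic 0 ∪ Set.Ici 2) with hF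
  have hFc : ∀ n, IsClosed (F n) := by
    intro n
    apply IsClosed.union
    · have he : {v | ∀ x ≥ (n : ℝ), |h (x + v) - h x| ≤ ε / 4}
          = ⋂ (x : ℝ) (_ : (n : ℝ) ≤ x), {v | |h (x + v) - h x| ≤ ε / 4} := by
        ext v; simp [Set.mem_iInter]
      rw [he]
      refine isClosed_iInter fun x => isClosed_iInter fun _ => ?_
      exact isClosed_le
        (((hc.comp (continuous_const.add continuous_id)).sub continuous_const).abs)
        continuous_const
    · exact isClosed_Iic.union isClosed_Ici
  have hFU : ⋃ n, F n = Set.univ := by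
    ext v
    simp only [Set.mem_iUnion, Set.mem_univ, iff_true]
    obtain ⟨X, hX⟩ := hpt v
    exact ⟨⌈X⌉₊, Or.inl fun x hx => hX x (le_trans (Nat.le_ceil X) hx)⟩
  have hd := dense_iUnion_interior_of_closed hFc hFU
  obtain ⟨v, hvU, hv02⟩ := hd.exists_mem_open isOpen_Ioo
    (⟨1, by norm_num, by norm_num⟩ : (Set.Ioo (0:ℝ) 2).Nonempty)
  obtain ⟨n, hvn⟩ := Set.mem_iUnion.mp hvU
  obtain ⟨r, hr, hball⟩ := Metric.mem_nhds_iff.mp (mem_interior_iff_mem_nhds.mp hvn)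
  set δ : ℝ := min (r / 2) ((2 - v) / 2) with hδdef
  have hv0 : 0 < v := hv02.1
  have hv2 : v < 2 := hv02.2
  have hδ : 0 < δ := lt_min (by linarith) (by linarith)
  have hδr : δ < r := lt_of_le_of_lt (min_le_left _ _) (by linarith)
  have hδ2 : δ ≤ (2 - v) / 2 := min_le_right _ _
  have hG : ∀ w ∈ Set.Icc (0:ℝ) δ, ∀ x ≥ (n : ℝ), |h (x + (v + w)) - h x| ≤ ε / 4 := by
    intro w hw
    have hmem : v + w ∈ F n := by
      apply hball
      rw [Metric.mem_ball, Real.dist_eq]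
      have : |v + w - v| = |w| := by ring_nf
      rw [this, abs_of_nonneg hw.1]; linarith [hw.2]
    have h02 : 0 < v + w ∧ v + w < 2 := ⟨by linarith [hw.1], by linarith [hw.2]⟩
    rcases hmem with hm | hm
    · exact hm
    · exfalso; rcases hm with hm | hm
      · exact absurd hm (by simp; linarith [h02.1])
      · exact absurd hm (by simp; linarith [h02.2])
  have hsmall : ∀ x ≥ (n : ℝ) + 2, ∀ w ∈ Set.Icc (0:ℝ) δ,
      |h (x + w) - h x| ≤ ε / 2 := by
    intro x hx w hw
    have hxv : (n : ℝ) ≤ x - v := by linarith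
    have A := hG w hw (x - v) hxv
    have B := hG 0 ⟨le_refl 0, hδ.le⟩ (x - v) hxv
    rw [show x - v + (v + w) = x + w by ring] at A
    rw [show x - v + (v + 0) = x by ring] at B
    have A' := abs_le.mp A
    have B' := abs_le.mp B
    rw [abs_le]; constructor <;> linarith [A'.1, A'.2, B'.1, B'.2]
  -- chaining over [0,1]
  set N : ℕ := max 1 ⌈1 / δ⌉₊ with hN
  have hNpos : (0:ℝ) < N := by
    have : 1 ≤ N := le_max_left _ _
    exact_mod_cast Nat.lt_of_lt_of_le Nat.zero_lt_one this
  have hNδ : 1 / (N : ℝ) ≤ δ := by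
    have h1 : 1 / δ ≤ (⌈1 / δ⌉₊ : ℝ) := Nat.le_ceil _
    have h2 : ((⌈1 / δ⌉₊ : ℕ) : ℝ) ≤ (N : ℝ) := by exact_mod_cast le_max_right 1 ⌈1 / δ⌉₊
    rw [div_le_iff₀ hNpos]
    have := (div_le_iff₀ hδ).mp (le_trans h1 h2)
    linarith
  have hgr : ∀ᶠ x in Filter.atTop, ∀ i ∈ Finset.range (N + 1),
      |h (x + (i : ℝ) / (N : ℝ)) - h x| ≤ ε / 4 := by
    rw [Filter.eventually_all_finset]
    intro i _
    obtain ⟨X, hX⟩ := hpt ((i : ℝ) / (N : ℝ))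
    exact Filter.eventually_atTop.mpr ⟨X, hX⟩
  obtain ⟨X, hX⟩ := Filter.eventually_atTop.mp (hgr.and (eventually_ge_atTop ((n : ℝ) + 2)))
  refine ⟨X, fun x hx u hu => ?_⟩
  obtain ⟨hg, hxn⟩ := hX x hx
  set i : ℕ := ⌊u * N⌋₊ with hi
  have hiN : i ≤ N := by
    have h1 : u * N ≤ (N : ℝ) := by nlinarith [hu.2, hNpos]
    calc i = ⌊u * (N:ℝ)⌋₊ := rfl
      _ ≤ ⌊(N : ℝ)⌋₊ := Nat.floor_mono h1
      _ = N := Nat.floor_natCast N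
  have hvi_le : (i : ℝ) / N ≤ u := by
    rw [div_le_iff₀ hNpos]
    exact Nat.floor_le (mul_nonneg hu.1 hNpos.le)
  have hui : u - (i : ℝ) / N ≤ δ := by
    have h1 : u * N < (i : ℝ) + 1 := Nat.lt_floor_add_one (u * N)
    have h2 : u ≤ ((i : ℝ) + 1) / N := by
      rw [le_div_iff₀ hNpos]; linarith
    have h3 : ((i : ℝ) + 1) / N - (i:ℝ)/N = 1 / N := by field_simp; ring
    linarith [hNδ]
  have hmem : u - (i : ℝ) / N ∈ Set.Icc (0:ℝ) δ := ⟨by linarith, hui⟩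
  have hdiv0 : (0:ℝ) ≤ (i : ℝ) / N := by positivity
  have A := hsmall (x + (i : ℝ) / N) (by linarith) (u - (i:ℝ)/N) hmem
  rw [show x + (i : ℝ) / N + (u - (i : ℝ) / N) = x + u by ring] at A
  have B := hg i (Finset.mem_range.mpr (Nat.lt_succ_of_le hiN))
  have A' := abs_le.mp A
  have B' := abs_le.mp B
  rw [abs_le]; constructor <;> linarith [A'.1, A'.2, B'.1, B'.2]

lemma pert_aux (h : ℝ → ℝ) (hc : Continuous h)
    (hs : ∀ u : ℝ, Filter.Tendsto (fun x => h (x + u) - h x) Filter.atTop (nhds 0))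
    {x w : ℝ → ℝ} (hx : Filter.Tendsto x Filter.atTop Filter.atTop)
    (hw : Filter.Tendsto w Filter.atTop (nhds 0)) :
    Filter.Tendsto (fun s => h (x s + w s) - h (x s)) Filter.atTop (nhds 0) := by
  rw [NormedAddCommGroup.tendsto_nhds_zero]
  intro ε hε
  obtain ⟨X, hX⟩ := uct_aux h hc hs (half_pos hε)
  have h1 : ∀ᶠ s in Filter.atTop, X + 1 ≤ x s := hx.eventually_ge_atTop (X + 1)
  have h2 : ∀ᶠ s in Filter.atTop, |w s| ≤ 1 := by
    have := NormedAddCommGroup.tendsto_nhds_zero.mp hw 1 one_pos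
    exact this.mono fun s hs => by simpa [Real.norm_eq_abs] using hs.le
  filter_upwards [h1, h2] with s hs1 hs2
  rw [Real.norm_eq_abs]
  rcases le_or_gt 0 (w s) with hws | hws
  · have := hX (x s) (by linarith) (w s) ⟨hws, by rwa [abs_of_nonneg hws] at hs2⟩
    linarith
  · have hw1 : -w s ∈ Set.Icc (0:ℝ) 1 := ⟨by linarith, by rw [abs_of_neg hws] at hs2; linarith⟩
    have habs := abs_le.mp hs2
    have := hX (x s + w s) (by linarith) (-(w s)) hw1
    rw [show x s + w s + -(w s) = x s by ring] at this
    rw [abs_sub_comm] at this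
    linarith

lemma lin_aux (h : ℝ → ℝ) (hc : Continuous h)
    (hs : ∀ u : ℝ, Filter.Tendsto (fun x => h (x + u) - h x) Filter.atTop (nhds 0)) :
    Filter.Tendsto (fun x => h x / x) Filter.atTop (nhds 0) := by
  rw [NormedAddCommGroup.tendsto_nhds_zero]
  intro ε hε
  have hε3 : 0 < ε / 3 := by linarith
  obtain ⟨X, hX⟩ := uct_aux h hc hs hε3
  set Y : ℝ := max X 1 with hY
  have hY1 : (1:ℝ) ≤ Y := le_max_right _ _
  have hYX : X ≤ Y := le_max_left _ _
  obtain ⟨M, hM⟩ := (isCompact_Icc : IsCompact (Set.Icc Y (Y + 1))).exists_bound_of_continuousOn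
    hc.continuousOn
  have hM' : ∀ y ∈ Set.Icc Y (Y + 1), |h y| ≤ M := fun y hy => by
    simpa [Real.norm_eq_abs] using hM y hy
  have key : ∀ n : ℕ, ∀ y ∈ Set.Icc Y (Y + n + 1), |h y| ≤ M + ε / 3 * n := by
    intro n
    induction n with
    | zero =>
      intro y hy
      push_cast at hy ⊢
      simpa using hM' y ⟨hy.1, by linarith [hy.2]⟩
    | succ n ih =>
      intro y hy
      push_cast at hy ⊢
      rcases le_or_gt y (Y + n + 1) with h1 | h1
      · have := ih y ⟨hy.1, by push_cast; linarith⟩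
        linarith
      · have ihy := ih (y - 1) ⟨by linarith, by push_cast; linarith [hy.2]⟩
        have hstep := hX (y - 1) (by linarith) 1 ⟨zero_le_one, le_refl 1⟩
        rw [show y - 1 + 1 = y by ring] at hstep
        have a1 := abs_le.mp ihy
        have a2 := abs_le.mp hstep
        rw [abs_le]; constructor <;> linarith
  have hqt : ∀ x ≥ Y, |h x| ≤ M + ε / 3 * (x - Y) := by
    intro x hxY
    have hn := Nat.lt_floor_add_one (x - Y)
    have hn' := Nat.floor_le (by linarith : (0:ℝ) ≤ x - Y)
    have hk := key ⌊x - Y⌋₊ x ⟨hxY, by linarith⟩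
    have : ε / 3 * (⌊x - Y⌋₊ : ℝ) ≤ ε / 3 * (x - Y) :=
      mul_le_mul_of_nonneg_left hn' hε3.le
    linarith
  have hMx : ∀ᶠ x : ℝ in Filter.atTop, |M * x⁻¹| < ε / 3 := by
    have : Filter.Tendsto (fun x : ℝ => M * x⁻¹) Filter.atTop (nhds 0) := by
      simpa using tendsto_inv_atTop_zero.const_mul M
    have := NormedAddCommGroup.tendsto_nhds_zero.mp this (ε / 3) hε3
    exact this.mono fun s hs => by rwa [Real.norm_eq_abs] at hs
  filter_upwards [eventually_ge_atTop Y, eventually_ge_atTop (1:ℝ), hMx] with x hx1 hx2 hx3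
  have hx0 : (0:ℝ) < x := by linarith
  have hMx' : M < ε / 3 * x := by
    have : M * x⁻¹ < ε / 3 := lt_of_abs_lt hx3
    calc M = M * x⁻¹ * x := by field_simp
      _ < ε / 3 * x := by exact mul_lt_mul_of_pos_right this hx0
  have h1 := hqt x hx1
  rw [Real.norm_eq_abs, abs_div, abs_of_pos hx0, div_lt_iff₀ hx0]
  have h2 : ε / 3 * (x - Y) ≤ ε / 3 * x := by nlinarith
  have h3 : 0 < ε / 3 * x := by positivity
  linarith

/-- Lemma 2.4: asymptotics of the inverse profile `u` defined implicitly by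
`e^{-u(s)} u(s)^α / L(u(s)) = 1/s`. -/
theorem stmt2 (α a : ℝ) (hα : 1 < α) (ha : 0 < a)
    (L : ℝ → ℝ) (hLpos : ∀ t > (0:ℝ), 0 < L t)
    (hLcont : ContinuousOn L (Set.Ioi 0))
    (hLslow : SlowlyVarying L)
    (hmono : StrictAntiOn (fun t => Real.exp (-t) * t ^ α / L t) (Set.Ici a))
    (u : ℝ → ℝ)
    (hu : ∀ᶠ s in Filter.atTop, u s ∈ Set.Ici a ∧
      Real.exp (-(u s)) * (u s) ^ α / L (u s) = 1 / s) :
    Filter.Tendsto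
      (fun s => u s - (Real.log s + α * Real.log (Real.log s) - Real.log (L (Real.log s))))
      Filter.atTop (nhds 0) := by
  set m : ℝ → ℝ :=
    fun s => Real.log s + α * Real.log (Real.log s) - Real.log (L (Real.log s)) with hmdef
  suffices hkey : Filter.Tendsto (fun s => u s - m s) Filter.atTop (nhds 0) by
    simpa only [hmdef] using hkey
  set h : ℝ → ℝ := fun x => Real.log (L (Real.exp x)) with hhdef
  have hhc : Continuous h :=
    (hLcont.comp_continuous Real.continuous_exp fun x => Set.mem_Ioi.mpr (Real.exp_pos x)).log
      fun x => (hLpos _ (Real.exp_pos x)).ne'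
  have hhs : ∀ c : ℝ, Filter.Tendsto (fun x => h (x + c) - h x) Filter.atTop (nhds 0) := by
    intro c
    have h1 : Filter.Tendsto (fun x => L (Real.exp c * Real.exp x) / L (Real.exp x))
        Filter.atTop (nhds 1) :=
      (hLslow (Real.exp c) (Real.exp_pos c)).comp Real.tendsto_exp_atTop
    have h2 : Filter.Tendsto
        (fun x => Real.log (L (Real.exp c * Real.exp x) / L (Real.exp x)))
        Filter.atTop (nhds 0) := by
      have := (Real.continuousAt_log one_ne_zero).tendsto.comp h1
      simpa [Real.log_one, Function.comp_def] using this
    apply h2.congr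
    intro x
    rw [Real.log_div (hLpos _ (by positivity)).ne' (hLpos _ (Real.exp_pos x)).ne']
    simp only [hhdef]
    rw [Real.exp_add, mul_comm]
  have hlin := lin_aux h hhc hhs
  -- log L t / t → 0
  have hlogL : Filter.Tendsto (fun t : ℝ => Real.log (L t) / t) Filter.atTop (nhds 0) := by
    have h1 : Filter.Tendsto
        (fun t : ℝ => h (Real.log t) / Real.log t * (Real.log t / t)) Filter.atTop (nhds 0) := by
      have := (hlin.comp Real.tendsto_log_atTop).mul
        (Real.isLittleO_log_id_atTop.tendsto_div_nhds_zero)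
      simpa using this
    apply h1.congr'
    filter_upwards [eventually_ge_atTop (Real.exp 1)] with t ht
    have ht0 : 0 < t := lt_of_lt_of_le (Real.exp_pos 1) ht
    have hlt : 1 ≤ Real.log t := by
      rw [← Real.log_exp 1]; exact Real.log_le_log (Real.exp_pos 1) ht
    have hlt0 : Real.log t ≠ 0 := by linarith
    have he : h (Real.log t) = Real.log (L t) := by
      simp only [hhdef]; rw [Real.exp_log ht0]
    rw [he]
    field_simp
  -- (t + α log t - log L t)/t → 1
  have hF0 : Filter.Tendsto (fun t : ℝ => (t + α * Real.log t - Real.log (L t)) / t)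
      Filter.atTop (nhds 1) := by
    have h1 : Filter.Tendsto
        (fun t : ℝ => 1 + α * (Real.log t / t) - Real.log (L t) / t) Filter.atTop (nhds 1) := by
      have := ((tendsto_const_nhds (x := (1:ℝ)) (f := Filter.atTop)).add
        ((Real.isLittleO_log_id_atTop.tendsto_div_nhds_zero).const_mul α)).sub hlogL
      simpa using this
    apply h1.congr'
    filter_upwards [eventually_gt_atTop (0:ℝ)] with t ht
    field_simp
  have hm1 : Filter.Tendsto (fun s => m s / Real.log s) Filter.atTop (nhds 1) :=
    hF0.comp Real.tendsto_log_atTop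
  have hminf : Filter.Tendsto m Filter.atTop Filter.atTop := by
    apply tendsto_atTop_mono' Filter.atTop
      (show ∀ᶠ s in Filter.atTop, Real.log s / 2 ≤ m s from ?_)
      (Real.tendsto_log_atTop.atTop_div_const two_pos)
    filter_upwards [hm1.eventually_const_lt (by norm_num : (1:ℝ)/2 < 1),
      Real.tendsto_log_atTop.eventually_gt_atTop 0] with s h1 h2
    have := (lt_div_iff₀ h2).mp h1
    linarith
  -- log (m s + c) - log log s → 0
  have hA : ∀ c : ℝ, Filter.Tendsto (fun s => Real.log (m s + c) - Real.log (Real.log s))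
      Filter.atTop (nhds 0) := by
    intro c
    have hr : Filter.Tendsto (fun s => (m s + c) / Real.log s) Filter.atTop (nhds 1) := by
      have h2 : Filter.Tendsto (fun s => m s / Real.log s + c / Real.log s)
          Filter.atTop (nhds 1) := by
        have := hm1.add ((tendsto_inv_atTop_zero.comp Real.tendsto_log_atTop).const_mul c)
        simpa [div_eq_mul_inv] using this
      apply h2.congr'
      filter_upwards [Real.tendsto_log_atTop.eventually_gt_atTop 0] with s hl
      rw [← add_div]
    have h3 : Filter.Tendsto (fun s => Real.log ((m s + c) / Real.log s))
        Filter.atTop (nhds 0) := by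
      have := (Real.continuousAt_log one_ne_zero).tendsto.comp hr
      simpa [Real.log_one, Function.comp_def] using this
    apply h3.congr'
    filter_upwards [Real.tendsto_log_atTop.eventually_gt_atTop 0,
      (tendsto_atTop_add_const_right Filter.atTop c hminf).eventually_gt_atTop 0] with s h1 h2
    exact Real.log_div (ne_of_gt h2) (ne_of_gt h1)
  -- log L (log s) - log L (m s + c) → 0
  have hB : ∀ c : ℝ, Filter.Tendsto
      (fun s => Real.log (L (Real.log s)) - Real.log (L (m s + c))) Filter.atTop (nhds 0) := by
    intro c
    have hx : Filter.Tendsto (fun s => Real.log (Real.log s)) Filter.atTop Filter.atTop :=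
      Real.tendsto_log_atTop.comp Real.tendsto_log_atTop
    have hp := (pert_aux h hhc hhs hx (hA c)).neg
    rw [neg_zero] at hp
    apply hp.congr'
    filter_upwards [Real.tendsto_log_atTop.eventually_gt_atTop 0,
      (tendsto_atTop_add_const_right Filter.atTop c hminf).eventually_gt_atTop 0] with s h1 h2
    rw [show Real.log (Real.log s) + (Real.log (m s + c) - Real.log (Real.log s))
      = Real.log (m s + c) by ring]
    simp only [hhdef]
    rw [Real.exp_log h1, Real.exp_log h2]
    ring
  -- log (s * f (m s + c)) → -c
  have hD : ∀ c : ℝ, Filter.Tendsto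
      (fun s => Real.log (s * (Real.exp (-(m s + c)) * (m s + c) ^ α / L (m s + c))))
      Filter.atTop (nhds (-c)) := by
    intro c
    have hrhs : Filter.Tendsto
        (fun s => -c + α * (Real.log (m s + c) - Real.log (Real.log s))
          + (Real.log (L (Real.log s)) - Real.log (L (m s + c))))
        Filter.atTop (nhds (-c)) := by
      have := ((tendsto_const_nhds (x := -c) (f := Filter.atTop)).add
        ((hA c).const_mul α)).add (hB c)
      simpa using this
    apply hrhs.congr'
    filter_upwards [eventually_gt_atTop (0:ℝ),
      Real.tendsto_log_atTop.eventually_gt_atTop 0,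
      (tendsto_atTop_add_const_right Filter.atTop c hminf).eventually_gt_atTop 0]
      with s hs0 hl hmc
    have hL1 : 0 < L (m s + c) := hLpos _ hmc
    have hL2 : 0 < L (Real.log s) := hLpos _ hl
    have hrp : 0 < (m s + c) ^ α := Real.rpow_pos_of_pos hmc α
    have hfp : 0 < Real.exp (-(m s + c)) * (m s + c) ^ α / L (m s + c) := by positivity
    rw [Real.log_mul hs0.ne' hfp.ne',
      Real.log_div (by positivity) hL1.ne',
      Real.log_mul (Real.exp_ne_zero _) hrp.ne',
      Real.log_exp, Real.log_rpow hmc]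
    simp only [hmdef]
    ring
  -- final assembly
  rw [NormedAddCommGroup.tendsto_nhds_zero]
  intro ε hε
  have hE1 : ∀ᶠ s in Filter.atTop,
      Real.log (s * (Real.exp (-(m s + ε)) * (m s + ε) ^ α / L (m s + ε))) < 0 :=
    (hD ε).eventually_lt_const (by linarith)
  have hE2 : ∀ᶠ s in Filter.atTop,
      0 < Real.log (s * (Real.exp (-(m s + -ε)) * (m s + -ε) ^ α / L (m s + -ε))) :=
    (hD (-ε)).eventually_const_lt (by simpa using hε)
  filter_upwards [hu, hE1, hE2, eventually_gt_atTop (0:ℝ),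
    hminf.eventually_ge_atTop (a + ε)] with s hus hE1s hE2s hs0 hma
  have hp_pos : 0 < m s + ε := by linarith
  have hq_pos : 0 < m s + -ε := by linarith
  have hp_mem : m s + ε ∈ Set.Ici a := Set.mem_Ici.mpr (by linarith)
  have hq_mem : m s + -ε ∈ Set.Ici a := Set.mem_Ici.mpr (by linarith)
  have hfp : 0 < Real.exp (-(m s + ε)) * (m s + ε) ^ α / L (m s + ε) :=
    div_pos (mul_pos (Real.exp_pos _) (Real.rpow_pos_of_pos hp_pos _)) (hLpos _ hp_pos)
  have hfq : 0 < Real.exp (-(m s + -ε)) * (m s + -ε) ^ α / L (m s + -ε) :=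
    div_pos (mul_pos (Real.exp_pos _) (Real.rpow_pos_of_pos hq_pos _)) (hLpos _ hq_pos)
  have h1 : s * (Real.exp (-(m s + ε)) * (m s + ε) ^ α / L (m s + ε)) < 1 :=
    (Real.log_neg_iff (mul_pos hs0 hfp)).mp hE1s
  have h2 : 1 < s * (Real.exp (-(m s + -ε)) * (m s + -ε) ^ α / L (m s + -ε)) :=
    (Real.log_pos_iff (mul_pos hs0 hfq).le).mp hE2s
  have hflt : Real.exp (-(m s + ε)) * (m s + ε) ^ α / L (m s + ε) < 1 / s := by
    rw [lt_div_iff₀ hs0]; nlinarith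
  have hfgt : 1 / s < Real.exp (-(m s + -ε)) * (m s + -ε) ^ α / L (m s + -ε) := by
    rw [div_lt_iff₀ hs0]; nlinarith
  rw [← hus.2] at hflt hfgt
  -- strict antitonicity comparisons
  have hlt1 : u s < m s + ε := by
    by_contra hcon
    push_neg at hcon
    rcases eq_or_lt_of_le hcon with heq | hlt
    · rw [← heq] at hflt; exact lt_irrefl _ hflt
    · have := hmono hp_mem hus.1 hlt
      dsimp only at this
      linarith
  have hlt2 : m s + -ε < u s := by
    by_contra hcon
    push_neg at hcon
    rcases eq_or_lt_of_le hcon with heq | hlt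
    · rw [heq] at hfgt; exact lt_irrefl _ hfgt
    · have := hmono hus.1 hq_mem hlt
      dsimp only at this
      linarith
  rw [Real.norm_eq_abs, abs_sub_lt_iff]
  constructor <;> linarith
end

section
/- Let α > 0 and 𝔞 > 4α, and let L : [0,∞) → (0,∞) be a differentiable slowly varying function with L'(t)/L(t) → 0 as t → +∞. Set 𝒯(t) = e^{−𝔞−t}·(𝔞+t)^α/L(𝔞+t) for t ≥ 0. Then there exists h₀ > 0 such that for every h ≥ h₀ and every s ∈ [0,h], 𝒯(h)/𝒯(h−s) ≤ e^{−s/2}. -/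
/-- Fact 2.8: the uniform domination `𝒯(h)/𝒯(h-s) ≤ e^{-s/2}` for `h` large and
`0 ≤ s ≤ h`, where `𝒯(t) = e^{-𝔞-t} (𝔞+t)^α / L(𝔞+t)` and `𝔞 > 4α`. -/
theorem stmt3 (α a : ℝ) (hα : 0 < α) (ha : 4 * α < a)
    (L : ℝ → ℝ) (hLpos : ∀ t ≥ (0:ℝ), 0 < L t)
    (hLdiff : ∀ t ≥ (0:ℝ), DifferentiableAt ℝ L t)
    (hLslow : SlowlyVarying L)
    (hLratio : Filter.Tendsto (fun t => deriv L t / L t) Filter.atTop (nhds 0))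
    (T : ℝ → ℝ)
    (hT : ∀ t ≥ (0:ℝ), T t = Real.exp (-a - t) * (a + t) ^ α / L (a + t)) :
    ∃ h₀ > (0:ℝ), ∀ h ≥ h₀, ∀ s, 0 ≤ s → s ≤ h →
      T h / T (h - s) ≤ Real.exp (-s / 2) := by
  have ha0 : 0 < a := lt_trans (by positivity) ha
  -- choose N so that |L'/L| ≤ 1/8 beyond N
  obtain ⟨N, hN⟩ : ∃ N : ℝ, ∀ x ≥ N, |deriv L x / L x| ≤ 1/8 := by
    have := (Metric.tendsto_atTop.mp hLratio) (1/8) (by norm_num)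
    obtain ⟨N, hN⟩ := this
    exact ⟨N, fun x hx => by
      have := hN x hx
      rw [Real.dist_eq, sub_zero] at this
      linarith⟩
  set M : ℝ := max N (8 * α) with hM
  set t₀ : ℝ := max 0 (M - a) with ht₀
  have ht₀0 : 0 ≤ t₀ := le_max_left _ _
  -- the log of T
  set F : ℝ → ℝ := fun t => -a - t + α * Real.log (a + t) - Real.log (L (a + t)) with hF
  have hat : ∀ t : ℝ, 0 ≤ t → 0 < a + t := fun t ht => by linarith
  -- T t = exp (F t) for t ≥ 0
  have hTF : ∀ t ≥ (0:ℝ), T t = Real.exp (F t) := by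
    intro t ht
    have h1 : 0 < a + t := hat t ht
    have h2 : 0 < L (a + t) := hLpos _ (le_of_lt h1)
    have key : Real.exp (-a - t + α * Real.log (a + t) - Real.log (L (a + t)))
        = Real.exp (-a - t) * (a + t) ^ α / L (a + t) := by
      rw [Real.exp_sub, Real.exp_add, Real.exp_log h2]
      congr 2
      rw [Real.rpow_def_of_pos h1, mul_comm]
    rw [hT t ht]
    simp only [hF]
    exact key.symm
  -- derivative of F
  have hF' : ∀ t : ℝ, 0 ≤ t →
      HasDerivAt F (-1 + α * (1 / (a + t)) - deriv L (a + t) / L (a + t)) t := by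
    intro t ht
    have h1 : 0 < a + t := hat t ht
    have h2 : 0 < L (a + t) := hLpos _ (le_of_lt h1)
    have hid : HasDerivAt (fun x : ℝ => a + x) 1 t := by
      simpa using (hasDerivAt_id t).const_add a
    have hlog : HasDerivAt (fun x : ℝ => Real.log (a + x)) (1 / (a + t)) t := by
      have := (Real.hasDerivAt_log (ne_of_gt h1)).comp t hid
      simpa [one_div, Function.comp_def] using this
    have hLd : HasDerivAt L (deriv L (a + t)) (a + t) :=
      (hLdiff (a + t) (le_of_lt h1)).hasDerivAt
    have hLcomp : HasDerivAt (fun x : ℝ => L (a + x)) (deriv L (a + t)) t := by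
      simpa [Function.comp_def] using hLd.comp t hid
    have hlogL : HasDerivAt (fun x : ℝ => Real.log (L (a + x)))
        (deriv L (a + t) / L (a + t)) t := by
      have := (Real.hasDerivAt_log (ne_of_gt h2)).comp t hLcomp
      simpa [div_eq_inv_mul, Function.comp_def] using this
    have h3 : HasDerivAt (fun x : ℝ => -a - x) (-1) t := by
      simpa using ((hasDerivAt_id t).const_sub (-a)).congr_deriv (by norm_num)
    exact ((h3.add (hlog.const_mul α)).sub hlogL).congr_deriv (by ring)
  -- On [t₀, ∞), F decreases at rate at least 3/4.
  set G : ℝ → ℝ := fun t => -F t - 3/4 * t with hG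
  have hG' : ∀ t : ℝ, t₀ ≤ t →
      HasDerivAt G (1/4 - α * (1 / (a + t)) + deriv L (a + t) / L (a + t)) t := by
    intro t ht
    have ht0 : 0 ≤ t := le_trans ht₀0 ht
    have := ((hF' t ht0).neg).sub ((hasDerivAt_id t).const_mul (3/4 : ℝ))
    exact this.congr_deriv (by ring)
  have hG'nonneg : ∀ t : ℝ, t₀ ≤ t →
      0 ≤ 1/4 - α * (1 / (a + t)) + deriv L (a + t) / L (a + t) := by
    intro t ht
    have ht0 : 0 ≤ t := le_trans ht₀0 ht
    have haM : M ≤ a + t := by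
      have : M - a ≤ t₀ := le_max_right _ _
      linarith [le_trans this ht]
    have h1 : |deriv L (a + t) / L (a + t)| ≤ 1/8 :=
      hN _ (le_trans (le_max_left _ _) haM)
    have h2 : α * (1 / (a + t)) ≤ 1/8 := by
      have h8 : 8 * α ≤ a + t := le_trans (le_max_right N _) haM
      have hpos : 0 < a + t := hat t ht0
      rw [mul_one_div, div_le_iff₀ hpos]
      linarith
    have := abs_le.mp h1
    linarith [this.1]
  have hGmono : MonotoneOn G (Set.Ici t₀) := by
    apply monotoneOn_of_deriv_nonneg (convex_Ici t₀)
    · intro t ht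
      exact ((hG' t ht).continuousAt).continuousWithinAt
    · intro t ht
      rw [interior_Ici] at ht
      exact ((hG' t (le_of_lt ht)).differentiableAt).differentiableWithinAt
    · intro t ht
      rw [interior_Ici] at ht
      rw [(hG' t (le_of_lt ht)).deriv]
      exact hG'nonneg t (le_of_lt ht)
  -- key decay estimate
  have hdecay : ∀ u v : ℝ, t₀ ≤ u → u ≤ v → F v - F u ≤ -(3/4) * (v - u) := by
    intro u v hu huv
    have := hGmono (Set.mem_Ici.mpr hu) (Set.mem_Ici.mpr (le_trans hu huv)) huv
    simp only [hG] at this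
    linarith
  -- minimum of F on [0, t₀]
  have hFcont : ContinuousOn F (Set.Icc 0 t₀) := by
    intro t ht
    exact ((hF' t ht.1).continuousAt).continuousWithinAt
  obtain ⟨z, hz, hzmin⟩ := isCompact_Icc.exists_isMinOn
    (Set.nonempty_Icc.mpr ht₀0) hFcont
  set m : ℝ := F z with hm
  set C : ℝ := F t₀ - m with hC
  have hC0 : 0 ≤ C := by
    have h3 : F z ≤ F t₀ :=
      isMinOn_iff.mp hzmin t₀ (Set.mem_Icc.mpr ⟨ht₀0, le_refl t₀⟩)
    simp only [hC, hm]
    linarith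
  -- choose h₀
  refine ⟨max (4*C + 3*t₀ + 1) (t₀ + 1), by positivity, ?_⟩
  intro h hh s hs0 hsh
  have hh1 : t₀ + 1 ≤ h := le_trans (le_max_right _ _) hh
  have hh2 : 4*C + 3*t₀ + 1 ≤ h := le_trans (le_max_left _ _) hh
  have hh0 : 0 ≤ h := by linarith
  have hhs0 : 0 ≤ h - s := by linarith
  rw [hTF h hh0, hTF (h - s) hhs0, ← Real.exp_sub, Real.exp_le_exp]
  -- reduce to F h - F (h - s) ≤ -s/2
  rcases le_or_gt t₀ (h - s) with hcase | hcase
  · have := hdecay (h - s) h hcase (by linarith)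
    linarith
  · -- h - s < t₀
    have h1 : F h - F t₀ ≤ -(3/4) * (h - t₀) := by
      have := hdecay t₀ h (le_refl t₀) (by linarith)
      linarith
    have h2 : m ≤ F (h - s) :=
      isMinOn_iff.mp hzmin (h - s) (Set.mem_Icc.mpr ⟨hhs0, le_of_lt hcase⟩)
    have : F h - F (h - s) ≤ C - (3/4) * (h - t₀) := by
      have h4 : C = F t₀ - m := hC
      clear_value M t₀ F G m C
      linarith
    have hfin : C - (3/4) * (h - t₀) ≤ -h/2 := by linarith
    linarith
end

section
/- Let α > 0 and 𝔞 > 4α, let L : [0,∞) → (0,∞) be a differentiable slowly varying function with L'(t)/L(t) → 0 as t → +∞, set 𝒯(t) = e^{−𝔞−t}·(𝔞+t)^α/L(𝔞+t) for t ≥ 0, and assume 𝒯 is strictly decreasing on [0,∞). Then for all sufficiently large h the integral ∫₀^h f_h(s)²/√(1 − f_h(s)²) ds is finite, where f_h(s) = 𝒯(h)/𝒯(h−s), and this integral converges to 1 as h → +∞. -/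
open Filter MeasureTheory Set

lemma logL_lip (L : ℝ → ℝ) (hLpos : ∀ t ≥ (0:ℝ), 0 < L t)
    (hLdiff : ∀ t ≥ (0:ℝ), DifferentiableAt ℝ L t)
    {δ M : ℝ} (hM : 0 < M) (hδ : ∀ t ≥ M, |deriv L t / L t| ≤ δ)
    {x y : ℝ} (hx : M ≤ x) (hxy : x ≤ y) :
    |Real.log (L y) - Real.log (L x)| ≤ δ * (y - x) := by
  rcases eq_or_lt_of_le hxy with rfl | hlt
  · simp
  · have hcont : ContinuousOn (fun t => Real.log (L t)) (Set.Icc x y) := by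
      intro t ht
      have ht0 : (0:ℝ) ≤ t := le_trans (le_trans hM.le hx) ht.1
      exact ((Real.continuousAt_log (hLpos t ht0).ne').comp
        (hLdiff t ht0).continuousAt).continuousWithinAt
    have hderiv : ∀ t ∈ Set.Ioo x y,
        HasDerivAt (fun t => Real.log (L t)) (deriv L t / L t) t := by
      intro t ht
      have ht0 : (0:ℝ) ≤ t := le_trans (le_trans hM.le hx) ht.1.le
      have := (Real.hasDerivAt_log (hLpos t ht0).ne').comp t (hLdiff t ht0).hasDerivAt
      simpa [Function.comp_def, div_eq_inv_mul] using this
    obtain ⟨c, hc, hceq⟩ := exists_hasDerivAt_eq_slope _ _ hlt hcont hderiv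
    have hcM : M ≤ c := le_trans hx hc.1.le
    have hne : y - x ≠ 0 := sub_ne_zero.2 hlt.ne'
    have heq : Real.log (L y) - Real.log (L x) = (deriv L c / L c) * (y - x) := by
      rw [hceq]; field_simp
    rw [heq, abs_mul, abs_of_nonneg (by linarith : (0:ℝ) ≤ y - x)]
    exact mul_le_mul_of_nonneg_right (hδ c hcM) (by linarith)

lemma one_sub_exp_ge {s : ℝ} (hs : 0 ≤ s) :
    (1 - Real.exp (-(5/4))) * min s 1 ≤ 1 - Real.exp (-(5/4) * s) := by
  rcases le_total s 1 with h1 | h1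
  · rw [min_eq_left h1]
    have := convexOn_exp.2 (Set.mem_univ (0:ℝ)) (Set.mem_univ (-(5/4):ℝ))
      (by linarith : (0:ℝ) ≤ 1 - s) hs (by ring)
    simp only [smul_eq_mul, mul_zero, zero_add, Real.exp_zero, mul_one] at this
    have h2 : s * -(5/4) = -(5/4) * s := by ring
    rw [h2] at this
    nlinarith [this]
  · rw [min_eq_right h1]
    have h2 : Real.exp (-(5/4)*s) ≤ Real.exp (-(5/4)) := by
      apply Real.exp_le_exp.2; nlinarith
    linarith

lemma kappa_pos : 0 < 1 - Real.exp (-(5/4)) := by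
  have : Real.exp (-(5/4)) < 1 := Real.exp_lt_one_iff.2 (by norm_num)
  linarith

lemma D_cont : ContinuousOn
    (fun s => Real.exp (-(5/4)*s) / Real.sqrt ((1 - Real.exp (-(5/4))) * min s 1))
    (Set.Ioi (0:ℝ)) := by
  apply ContinuousOn.div
  · exact (Real.continuous_exp.comp (continuous_const.mul continuous_id)).continuousOn
  · exact (Real.continuous_sqrt.comp
      (continuous_const.mul (continuous_id.min continuous_const))).continuousOn
  · intro s hs
    have hmin : 0 < min s 1 := lt_min hs one_pos
    have : 0 < Real.sqrt ((1 - Real.exp (-(5/4))) * min s 1) :=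
      Real.sqrt_pos.2 (mul_pos kappa_pos hmin)
    exact this.ne'

lemma D_int : MeasureTheory.IntegrableOn
    (fun s => Real.exp (-(5/4)*s) / Real.sqrt ((1 - Real.exp (-(5/4))) * min s 1))
    (Set.Ioi (0:ℝ)) := by
  set κ := 1 - Real.exp (-(5/4)) with hκdef
  have hκ : 0 < κ := kappa_pos
  rw [show Set.Ioi (0:ℝ) = Set.Ioc 0 1 ∪ Set.Ioi 1 from
    (Set.Ioc_union_Ioi_eq_Ioi (by norm_num)).symm]
  apply MeasureTheory.IntegrableOn.union
  · apply MeasureTheory.Integrable.mono'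
      (g := fun s => (Real.sqrt κ)⁻¹ * s ^ (-(1/2) : ℝ))
    · have h1 : IntervalIntegrable (fun s : ℝ => s ^ (-(1/2):ℝ)) volume 0 1 :=
        intervalIntegral.intervalIntegrable_rpow' (by norm_num)
      have h2 := (intervalIntegrable_iff_integrableOn_Ioc_of_le (by norm_num : (0:ℝ) ≤ 1)).1 h1
      exact h2.const_mul _
    · exact (D_cont.mono (Set.Ioc_subset_Ioi_self)).aestronglyMeasurable measurableSet_Ioc
    · rw [MeasureTheory.ae_restrict_iff' measurableSet_Ioc]
      apply MeasureTheory.ae_of_all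
      intro s hs
      have hs0 : 0 < s := hs.1
      have hmin : min s 1 = s := min_eq_left hs.2
      have hsq : Real.sqrt (κ * s) = Real.sqrt κ * Real.sqrt s := Real.sqrt_mul hκ.le s
      rw [Real.norm_eq_abs, abs_of_nonneg (by positivity)]
      have hrw : s ^ (-(1/2):ℝ) = (Real.sqrt s)⁻¹ := by
        rw [Real.rpow_neg hs0.le, Real.sqrt_eq_rpow]
      rw [hrw, hmin, hsq]
      have hexp : Real.exp (-(5/4)*s) ≤ 1 := Real.exp_le_one_iff.2 (by nlinarith)
      have hsp : 0 < Real.sqrt s := Real.sqrt_pos.2 hs0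
      have hkp : 0 < Real.sqrt κ := Real.sqrt_pos.2 hκ
      rw [div_le_iff₀ (by positivity)]
      calc Real.exp (-(5/4)*s) ≤ 1 := hexp
        _ = (Real.sqrt κ)⁻¹ * (Real.sqrt s)⁻¹ * (Real.sqrt κ * Real.sqrt s) := by
          field_simp
  · apply MeasureTheory.IntegrableOn.congr_fun
      (f := fun s => Real.exp (-(5/4)*s) / Real.sqrt (κ * 1))
    · exact ((exp_neg_integrableOn_Ioi 1 (by norm_num : (0:ℝ) < 5/4)).div_const _)
    · intro s hs
      simp only [min_eq_right (le_of_lt (Set.mem_Ioi.1 hs))]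
    · exact measurableSet_Ioi

lemma limit_int : ∫ s in Set.Ioi (0:ℝ),
    Real.exp (-s)^2 / Real.sqrt (1 - Real.exp (-s)^2) = 1 := by
  have key := MeasureTheory.integral_Ioi_of_hasDerivAt_of_tendsto
    (f := fun s => Real.sqrt (1 - Real.exp (-s)^2))
    (f' := fun s => Real.exp (-s)^2 / Real.sqrt (1 - Real.exp (-s)^2))
    (a := 0) (m := 1) ?_ ?_ ?_ ?_
  · rw [key]; norm_num
  · exact (Real.continuous_sqrt.comp (by continuity)).continuousWithinAt
  · intro x hx
    have hx0 : 0 < x := hx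
    have hlt : Real.exp (-x) < 1 := Real.exp_lt_one_iff.2 (by linarith)
    have hexp : 0 < Real.exp (-x) := Real.exp_pos _
    have hu : 0 < 1 - Real.exp (-x)^2 := by nlinarith
    have hu' : HasDerivAt (fun s => 1 - Real.exp (-s)^2) (2 * Real.exp (-x)^2) x := by
      have h1 : HasDerivAt (fun s : ℝ => Real.exp (-s)) (-Real.exp (-x)) x := by
        simpa [Function.comp_def] using (Real.hasDerivAt_exp (-x)).comp x (hasDerivAt_neg x)
      have h2 := h1.pow 2
      have h3 := h2.const_sub 1
      exact h3.congr_deriv (by norm_num; ring)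
    have h4 := (Real.hasDerivAt_sqrt hu.ne').comp x hu'
    refine h4.congr_deriv ?_
    have hsq : 0 < Real.sqrt (1 - Real.exp (-x)^2) := Real.sqrt_pos.2 hu
    field_simp
  · -- integrability
    apply MeasureTheory.Integrable.mono'
      (g := fun s => Real.exp (-(5/4)*s) / Real.sqrt ((1 - Real.exp (-(5/4))) * min s 1))
      D_int
    · apply ContinuousOn.aestronglyMeasurable _ measurableSet_Ioi
      apply ContinuousOn.div
      · exact (by continuity : Continuous fun s : ℝ => Real.exp (-s)^2).continuousOn
      · exact (Real.continuous_sqrt.comp (by continuity)).continuousOn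
      · intro s hs
        have hs0 : (0:ℝ) < s := hs
        have hlt : Real.exp (-s) < 1 := Real.exp_lt_one_iff.2 (by linarith)
        have hexp : 0 < Real.exp (-s) := Real.exp_pos _
        exact (Real.sqrt_pos.2 (by nlinarith)).ne'
    · rw [MeasureTheory.ae_restrict_iff' measurableSet_Ioi]
      apply MeasureTheory.ae_of_all
      intro s hs
      have hs0 : (0:ℝ) < s := hs
      have hlt : Real.exp (-s) < 1 := Real.exp_lt_one_iff.2 (by linarith)
      have hexp : 0 < Real.exp (-s) := Real.exp_pos _
      have hnum : Real.exp (-s)^2 ≤ Real.exp (-(5/4)*s) := by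
        rw [sq, ← Real.exp_add]
        exact Real.exp_le_exp.2 (by linarith)
      have hden : (1 - Real.exp (-(5/4))) * min s 1 ≤ 1 - Real.exp (-s)^2 := by
        have h1 := one_sub_exp_ge hs0.le
        linarith [hnum]
      have hdpos : 0 < (1 - Real.exp (-(5/4))) * min s 1 :=
        mul_pos kappa_pos (lt_min hs0 one_pos)
      rw [Real.norm_eq_abs, abs_of_nonneg (by positivity)]
      exact div_le_div₀ (Real.exp_pos _).le hnum (Real.sqrt_pos.2 hdpos)
        (Real.sqrt_le_sqrt hden)
  · -- tendsto at infinity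
    have h1 : Tendsto (fun s : ℝ => Real.exp (-s)) atTop (nhds 0) :=
      Real.tendsto_exp_neg_atTop_nhds_zero
    have h2 : Tendsto (fun s : ℝ => 1 - Real.exp (-s)^2) atTop (nhds 1) := by
      have := (h1.pow 2).const_sub 1
      simpa using this
    have := (Real.continuous_sqrt.tendsto 1).comp h2
    simpa [Function.comp_def] using this

set_option maxHeartbeats 1000000 in
/-- From the proof of Lemma 2.7: the first Clairaut integral
`∫₀^h f_h(s)²/√(1 - f_h(s)²) ds`, with `f_h(s) = 𝒯(h)/𝒯(h-s)`, is finite for `h`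
large and converges to `1` as `h → +∞`. -/
theorem stmt4 (α a : ℝ) (hα : 0 < α) (ha : 4 * α < a)
    (L : ℝ → ℝ) (hLpos : ∀ t ≥ (0:ℝ), 0 < L t)
    (hLdiff : ∀ t ≥ (0:ℝ), DifferentiableAt ℝ L t)
    (hLslow : SlowlyVarying L)
    (hLratio : Filter.Tendsto (fun t => deriv L t / L t) Filter.atTop (nhds 0))
    (T : ℝ → ℝ)
    (hT : ∀ t ≥ (0:ℝ), T t = Real.exp (-a - t) * (a + t) ^ α / L (a + t))
    (hTanti : StrictAntiOn T (Set.Ici 0)) :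
    (∀ᶠ h in Filter.atTop, IntervalIntegrable
      (fun s => (T h / T (h - s)) ^ 2 / Real.sqrt (1 - (T h / T (h - s)) ^ 2))
      MeasureTheory.volume 0 h) ∧
    Filter.Tendsto (fun h => ∫ s in (0:ℝ)..h,
        (T h / T (h - s)) ^ 2 / Real.sqrt (1 - (T h / T (h - s)) ^ 2))
      Filter.atTop (nhds 1) := by
  have hapos : 0 < a := lt_trans (by positivity) ha
  have hTpos : ∀ t ≥ (0:ℝ), 0 < T t := by
    intro t ht
    rw [hT t ht]
    have h1 : 0 < a + t := by linarith
    exact div_pos (mul_pos (Real.exp_pos _) (Real.rpow_pos_of_pos h1 α))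
      (hLpos (a+t) (by linarith))
  have hlogT : ∀ t ≥ (0:ℝ), Real.log (T t) =
      -a - t + α * Real.log (a + t) - Real.log (L (a + t)) := by
    intro t ht
    have h1 : (0:ℝ) < a + t := by linarith
    have hL := hLpos (a+t) (by linarith)
    rw [hT t ht, Real.log_div (by positivity) hL.ne',
      Real.log_mul (Real.exp_pos _).ne' (Real.rpow_pos_of_pos h1 α).ne',
      Real.log_exp, Real.log_rpow h1]
  -- choose M
  obtain ⟨N, hN⟩ := (Metric.tendsto_atTop.1 hLratio) (1/8) (by norm_num)
  set M : ℝ := max N (max a 1) with hMdef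
  have hMa : a ≤ M := le_trans (le_max_left a 1) (le_max_right _ _)
  have hM1 : (1:ℝ) ≤ M := le_trans (le_max_right a 1) (le_max_right _ _)
  have hM0 : (0:ℝ) < M := lt_of_lt_of_le one_pos hM1
  have hMδ : ∀ t ≥ M, |deriv L t / L t| ≤ 1/8 := by
    intro t ht
    have h2 := hN t (le_trans (le_max_left _ _) ht)
    rw [Real.dist_eq, sub_zero] at h2
    exact h2.le
  have lip8 := fun {x y : ℝ} (hx : M ≤ x) (hxy : x ≤ y) =>
    logL_lip L hLpos hLdiff hM0 hMδ hx hxy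
  set m : ℝ := T (M - a) with hmdef
  have hmpos : 0 < m := hTpos _ (by linarith)
  set C₀ : ℝ := -a + a/16 + 16*α^2 - Real.log (L M) + (a - M)/8 with hC0
  set H₀ : ℝ := max (M - a) ((16/3)*(C₀ - Real.log m)) with hH0
  have hH0' : M - a ≤ H₀ := le_max_left _ _
  have hH0nn : 0 ≤ H₀ := le_trans (by linarith) hH0'
  -- decay of T h
  have hTh_decay : ∀ h, H₀ ≤ h → T h ≤ m * Real.exp (-(5/8)*h) := by
    intro h hh
    have hh0 : (0:ℝ) ≤ h := le_trans hH0nn hh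
    have hMh : M ≤ a + h := by linarith [le_trans hH0' hh]
    have hah : (0:ℝ) < a + h := by linarith
    have hsq : Real.sqrt (a+h) ^ 2 = a + h := Real.sq_sqrt hah.le
    have hlog1 : Real.log (a+h) ≤ 2 * Real.sqrt (a+h) := by
      have h1 : Real.log (Real.sqrt (a+h)) = Real.log (a+h) / 2 := Real.log_sqrt hah.le
      have h2 : Real.log (Real.sqrt (a+h)) ≤ Real.sqrt (a+h) - 1 :=
        Real.log_le_sub_one_of_pos (Real.sqrt_pos.2 hah)
      nlinarith [Real.sqrt_nonneg (a+h)]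
    have hαlog : α * Real.log (a+h) ≤ (a+h)/16 + 16*α^2 := by
      nlinarith [sq_nonneg (Real.sqrt (a+h)/4 - 4*α), Real.sqrt_nonneg (a+h)]
    have hl := lip8 (x := M) (y := a+h) le_rfl hMh
    have hlow : Real.log (L M) - (a+h-M)/8 ≤ Real.log (L (a+h)) := by
      have h3 := abs_le.1 hl
      linarith [h3.1]
    have hlogTh : Real.log (T h) ≤ -(13/16)*h + C₀ := by
      rw [hlogT h hh0, hC0]
      linarith
    have h2 : (16/3)*(C₀ - Real.log m) ≤ h := le_trans (le_max_right _ _) hh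
    have h3 : Real.log (T h) ≤ Real.log m + (-(5/8)*h) := by linarith
    calc T h = Real.exp (Real.log (T h)) := (Real.exp_log (hTpos h hh0)).symm
      _ ≤ Real.exp (Real.log m + (-(5/8)*h)) := Real.exp_le_exp.2 h3
      _ = m * Real.exp (-(5/8)*h) := by rw [Real.exp_add, Real.exp_log hmpos]
  -- main pointwise bound
  have hφ_le : ∀ h, H₀ ≤ h → ∀ s, 0 ≤ s → s ≤ h →
      T h / T (h - s) ≤ Real.exp (-(5/8)*s) := by
    intro h hh s hs hsh
    have hh0 : (0:ℝ) ≤ h := le_trans hH0nn hh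
    have hhs0 : (0:ℝ) ≤ h - s := by linarith
    have hTh := hTpos h hh0
    have hThs := hTpos (h - s) hhs0
    rcases le_or_gt M (a + h - s) with hcase | hcase
    · have hahs : (0:ℝ) < a + h - s := lt_of_lt_of_le hM0 hcase
      have e1 : Real.log (T h / T (h-s)) =
          -s + α*(Real.log (a+h) - Real.log (a + (h-s)))
            + (Real.log (L (a + (h-s))) - Real.log (L (a+h))) := by
        rw [Real.log_div hTh.ne' hThs.ne', hlogT h hh0, hlogT (h-s) hhs0]
        ring
      have hα1 : Real.log (a+h) - Real.log (a + (h-s)) ≤ s/(a+h-s) := by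
        have h4 : Real.log (a+h) - Real.log (a+(h-s)) = Real.log ((a+h)/(a+(h-s))) :=
          (Real.log_div (by linarith : (0:ℝ) < a+h).ne' (by linarith : (0:ℝ) < a+(h-s)).ne').symm
        rw [h4]
        have h5 := Real.log_le_sub_one_of_pos
          (show (0:ℝ) < (a+h)/(a+(h-s)) from div_pos (by linarith) (by linarith))
        have h6 : (a+h)/(a+(h-s)) - 1 = s/(a+h-s) := by
          rw [div_sub_one (by linarith : a+(h-s) ≠ 0)]
          ring_nf
        linarith
      have hαnn : 0 ≤ Real.log (a+h) - Real.log (a + (h-s)) := by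
        have := Real.log_le_log (by linarith : (0:ℝ) < a+(h-s)) (by linarith : a+(h-s) ≤ a+h)
        linarith
      have hα2 : α * (Real.log (a+h) - Real.log (a + (h-s))) ≤ s/4 := by
        have h7 : α * (Real.log (a+h) - Real.log (a+(h-s))) ≤ α * (s/(a+h-s)) :=
          mul_le_mul_of_nonneg_left hα1 hα.le
        have h8 : α * (s/(a+h-s)) ≤ s/4 := by
          rw [mul_div_assoc', div_le_div_iff₀ hahs (by norm_num : (0:ℝ) < 4)]
          nlinarith
        linarith
      have hl := lip8 (x := a+h-s) (y := a+h) hcase (by linarith)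
      have hl2 : Real.log (L (a + (h-s))) - Real.log (L (a+h)) ≤ (1/8)*s := by
        have h9 := abs_le.1 hl
        have h10 : a + (h - s) = a + h - s := by ring
        rw [h10]
        have := h9.1
        linarith
      have hlogle : Real.log (T h / T (h-s)) ≤ -(5/8)*s := by
        rw [e1]; linarith
      calc T h / T (h-s) = Real.exp (Real.log (T h / T (h-s))) :=
            (Real.exp_log (div_pos hTh hThs)).symm
        _ ≤ Real.exp (-(5/8)*s) := Real.exp_le_exp.2 hlogle
    · have h7 : m ≤ T (h - s) := by
        rcases eq_or_lt_of_le hhs0 with heq | _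
        · exact (hTanti (Set.mem_Ici.2 hhs0) (Set.mem_Ici.2 (by linarith)) (by linarith)).le
        · exact (hTanti (Set.mem_Ici.2 hhs0) (Set.mem_Ici.2 (by linarith)) (by linarith)).le
      calc T h / T (h-s) ≤ T h / m := by gcongr
        _ ≤ (m * Real.exp (-(5/8)*h)) / m := by gcongr; exact hTh_decay h hh
        _ = Real.exp (-(5/8)*h) := by field_simp
        _ ≤ Real.exp (-(5/8)*s) := Real.exp_le_exp.2 (by linarith)
  have hlog_ub : ∀ h s : ℝ, 0 ≤ s → s ≤ h →
      Real.log (a+h) - Real.log (a+(h-s)) ≤ s/(a+h-s) := by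
    intro h s hs hsh
    have hahs : (0:ℝ) < a + (h - s) := by linarith
    have h4 : Real.log (a+h) - Real.log (a+(h-s)) = Real.log ((a+h)/(a+(h-s))) :=
      (Real.log_div (by linarith : (0:ℝ) < a+h).ne' hahs.ne').symm
    rw [h4]
    have h5 := Real.log_le_sub_one_of_pos
      (show (0:ℝ) < (a+h)/(a+(h-s)) from div_pos (by linarith) (by linarith))
    have h6 : (a+h)/(a+(h-s)) - 1 = s/(a+h-s) := by
      rw [div_sub_one hahs.ne']
      ring_nf
    linarith
  have hφpos : ∀ h, 0 ≤ h → ∀ s, 0 ≤ s → s ≤ h → 0 < T h / T (h-s) :=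
    fun h hh s hs hsh => div_pos (hTpos h hh) (hTpos (h-s) (by linarith))
  have hφlt1 : ∀ h, 0 ≤ h → ∀ s, 0 < s → s ≤ h → T h / T (h-s) < 1 := by
    intro h hh s hs hsh
    rw [div_lt_one (hTpos (h-s) (by linarith))]
    exact hTanti (Set.mem_Ici.2 (by linarith)) (Set.mem_Ici.2 hh) (by linarith)
  have hφsq : ∀ h, H₀ ≤ h → ∀ s, 0 ≤ s → s ≤ h →
      (T h / T (h-s))^2 ≤ Real.exp (-(5/4)*s) := by
    intro h hh s hs hsh
    have hh0 := le_trans hH0nn hh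
    have h2 : (T h / T (h-s))^2 ≤ (Real.exp (-(5/8)*s))^2 :=
      pow_le_pow_left₀ (hφpos h hh0 s hs hsh).le (hφ_le h hh s hs hsh) 2
    have h3 : (Real.exp (-(5/8)*s))^2 = Real.exp (-(5/4)*s) := by
      rw [sq, ← Real.exp_add]
      congr 1
      ring
    rw [h3] at h2
    exact h2
  have hBden : ∀ h, H₀ ≤ h → ∀ s, 0 ≤ s → s ≤ h →
      (1 - Real.exp (-(5/4))) * min s 1 ≤ 1 - (T h / T (h-s))^2 := by
    intro h hh s hs hsh
    have h1 := hφsq h hh s hs hsh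
    have h2 := one_sub_exp_ge hs
    linarith
  have hDbound : ∀ h, H₀ ≤ h → ∀ s, s ∈ Set.Ioc 0 h →
      ‖(T h / T (h - s)) ^ 2 / Real.sqrt (1 - (T h / T (h - s)) ^ 2)‖ ≤
        Real.exp (-(5/4)*s) / Real.sqrt ((1 - Real.exp (-(5/4))) * min s 1) := by
    intro h hh s hs
    obtain ⟨hs0, hsh⟩ := hs
    have hden := hBden h hh s hs0.le hsh
    have hdpos : 0 < (1 - Real.exp (-(5/4))) * min s 1 :=
      mul_pos kappa_pos (lt_min hs0 one_pos)
    have hnum := hφsq h hh s hs0.le hsh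
    rw [Real.norm_eq_abs, abs_of_nonneg (div_nonneg (sq_nonneg _) (Real.sqrt_nonneg _))]
    exact div_le_div₀ (Real.exp_pos _).le hnum (Real.sqrt_pos.2 hdpos)
      (Real.sqrt_le_sqrt hden)
  have hCont : ∀ h, 0 ≤ h → ContinuousOn
      (fun s => (T h / T (h - s)) ^ 2 / Real.sqrt (1 - (T h / T (h - s)) ^ 2))
      (Set.Ioc 0 h) := by
    intro h hh
    have hTf : ContinuousOn (fun s => T (h - s)) (Set.Icc 0 h) := by
      have heq : Set.EqOn (fun s => T (h - s))
          (fun s => Real.exp (-a - (h - s)) * (a + (h - s)) ^ α / L (a + (h - s)))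
          (Set.Icc 0 h) := by
        intro s hs
        exact hT (h - s) (by linarith [hs.2])
      apply ContinuousOn.congr _ heq
      apply ContinuousOn.div
      · apply ContinuousOn.mul
        · exact (Real.continuous_exp.comp
            (continuous_const.sub (continuous_const.sub continuous_id))).continuousOn
        · apply ContinuousOn.rpow_const
          · exact (continuous_const.add (continuous_const.sub continuous_id)).continuousOn
          · intro s hs
            exact Or.inl (by have : (0:ℝ) < a + (h - s) := by linarith [hs.2]
                             exact this.ne')
      · intro s hs
        have h1 : (0:ℝ) ≤ a + (h - s) := by linarith [hs.2]
        have hc : ContinuousAt (fun s : ℝ => L (a + (h - s))) s :=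
          ContinuousAt.comp (x := s) (g := L) (hLdiff _ h1).continuousAt
            ((continuous_const.add (continuous_const.sub continuous_id)).continuousAt)
        exact hc.continuousWithinAt
      · intro s hs
        exact (hLpos _ (by linarith [hs.2])).ne'
    have hφc : ContinuousOn (fun s => T h / T (h - s)) (Set.Ioc 0 h) := by
      apply ContinuousOn.div continuousOn_const (hTf.mono Set.Ioc_subset_Icc_self)
      intro s hs
      exact (hTpos (h - s) (by linarith [hs.2])).ne'
    apply ContinuousOn.div (hφc.pow 2)
    · exact Real.continuous_sqrt.comp_continuousOn (continuousOn_const.sub (hφc.pow 2))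
    · intro s hs
      have h1 := hφlt1 h hh s hs.1 hs.2
      have h0 := hφpos h hh s hs.1.le hs.2
      exact (Real.sqrt_pos.2 (by nlinarith)).ne'
  have hIntOn : ∀ h, H₀ ≤ h → MeasureTheory.IntegrableOn
      (fun s => (T h / T (h - s)) ^ 2 / Real.sqrt (1 - (T h / T (h - s)) ^ 2))
      (Set.Ioc 0 h) := by
    intro h hh
    have hh0 := le_trans hH0nn hh
    apply MeasureTheory.Integrable.mono' (D_int.mono_set Set.Ioc_subset_Ioi_self)
    · exact (hCont h hh0).aestronglyMeasurable measurableSet_Ioc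
    · rw [MeasureTheory.ae_restrict_iff' measurableSet_Ioc]
      exact MeasureTheory.ae_of_all _ (fun s hs => hDbound h hh s hs)
  constructor
  · filter_upwards [eventually_ge_atTop H₀] with h hh
    rw [intervalIntegrable_iff_integrableOn_Ioc_of_le (le_trans hH0nn hh)]
    exact hIntOn h hh
  · have hμ0 : ∀ᵐ s : ℝ, s ≠ 0 := by
      have h1 : MeasureTheory.volume ({0} : Set ℝ) = 0 := Real.volume_singleton
      have h2 := MeasureTheory.measure_eq_zero_iff_ae_notMem.1 h1
      filter_upwards [h2] with s hs
      simpa using hs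
    have hmain : Tendsto (fun h => ∫ s, Set.indicator (Set.Ioc 0 h)
        (fun s => (T h / T (h - s)) ^ 2 / Real.sqrt (1 - (T h / T (h - s)) ^ 2)) s)
        atTop (nhds (∫ s, Set.indicator (Set.Ioi 0)
          (fun s => Real.exp (-s)^2 / Real.sqrt (1 - Real.exp (-s)^2)) s)) := by
      apply MeasureTheory.tendsto_integral_filter_of_dominated_convergence
        (bound := Set.indicator (Set.Ioi 0)
          (fun s => Real.exp (-(5/4)*s) / Real.sqrt ((1 - Real.exp (-(5/4))) * min s 1)))
      · filter_upwards [eventually_ge_atTop H₀] with h hh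
        rw [aestronglyMeasurable_indicator_iff measurableSet_Ioc]
        exact (hCont h (le_trans hH0nn hh)).aestronglyMeasurable measurableSet_Ioc
      · filter_upwards [eventually_ge_atTop H₀] with h hh
        apply MeasureTheory.ae_of_all
        intro s
        by_cases hs : s ∈ Set.Ioc 0 h
        · rw [Set.indicator_of_mem hs,
            Set.indicator_of_mem (Set.Ioc_subset_Ioi_self hs)]
          exact hDbound h hh s hs
        · rw [Set.indicator_of_notMem hs, norm_zero]
          apply Set.indicator_nonneg
          intro s' hs'
          positivity
      · rw [MeasureTheory.integrable_indicator_iff measurableSet_Ioi]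
        exact D_int
      · filter_upwards [hμ0] with s hs
        rcases lt_or_gt_of_ne hs with hneg | hpos
        · have h2 : Set.indicator (Set.Ioi (0:ℝ))
              (fun s => Real.exp (-s)^2 / Real.sqrt (1 - Real.exp (-s)^2)) s = 0 :=
            Set.indicator_of_notMem (by simp only [Set.mem_Ioi, not_lt]; linarith) _
          rw [h2]
          apply Filter.Tendsto.congr' _ (tendsto_const_nhds (x := (0:ℝ)))
          apply Filter.Eventually.of_forall
          intro h
          exact (Set.indicator_of_notMem
            (by intro hmem; exact absurd hmem.1 (by linarith)) _).symm
        · -- s > 0 : pointwise convergence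
          have hφlim : Tendsto (fun h => T h / T (h - s)) atTop (nhds (Real.exp (-s))) := by
            have t1 : Tendsto (fun h => Real.log (a+h) - Real.log (a+(h-s))) atTop (nhds 0) := by
              have tb : Tendsto (fun h : ℝ => s / (a + h - s)) atTop (nhds 0) := by
                apply Filter.Tendsto.div_atTop (tendsto_const_nhds (x := s))
                exact (tendsto_atTop_add_const_right atTop (a - s) tendsto_id).congr
                  (fun h => by simp only [id_eq]; ring)
              apply squeeze_zero' ?_ ?_ tb
              · filter_upwards [eventually_ge_atTop s] with h hh
                have := Real.log_le_log (show (0:ℝ) < a+(h-s) by linarith)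
                  (by linarith : a+(h-s) ≤ a+h)
                linarith
              · filter_upwards [eventually_ge_atTop s] with h hh
                exact hlog_ub h s hpos.le hh
            have t2 : Tendsto (fun h => Real.log (L (a+(h-s))) - Real.log (L (a+h)))
                atTop (nhds 0) := by
              rw [Metric.tendsto_atTop]
              intro ε hε
              obtain ⟨N', hN'⟩ := Metric.tendsto_atTop.1 hLratio (ε/(2*(s+1))) (by positivity)
              refine ⟨max N' 1 + s - a, fun h hh => ?_⟩
              have hM'0 : (0:ℝ) < max N' 1 := lt_of_lt_of_le one_pos (le_max_right _ _)
              have hδ' : ∀ t ≥ max N' 1, |deriv L t / L t| ≤ ε/(2*(s+1)) := by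
                intro t ht
                have h2 := hN' t (le_trans (le_max_left _ _) ht)
                rw [Real.dist_eq, sub_zero] at h2
                exact h2.le
              have hxy : a + (h - s) ≤ a + h := by linarith
              have hx : max N' 1 ≤ a + (h - s) := by linarith
              have hlip := logL_lip L hLpos hLdiff hM'0 hδ' hx hxy
              rw [Real.dist_eq, sub_zero, abs_sub_comm]
              have hq : s/(2*(s+1)) < 1 := by
                rw [div_lt_one (by linarith)]
                linarith
              calc |Real.log (L (a+h)) - Real.log (L (a+(h-s)))|
                  ≤ (ε/(2*(s+1))) * ((a+h) - (a+(h-s))) := hlip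
                _ = ε * (s/(2*(s+1))) := by ring
                _ < ε := by nlinarith [mul_lt_mul_of_pos_left hq hε]
            have hsum : Tendsto (fun h => -s + α*(Real.log (a+h) - Real.log (a+(h-s)))
                + (Real.log (L (a+(h-s))) - Real.log (L (a+h)))) atTop (nhds (-s)) := by
              have h1 := (tendsto_const_nhds (x := -s)
                (f := (atTop : Filter ℝ))).add (t1.const_mul α)
              have h2 := h1.add t2
              simpa using h2
            have hcomp := (Real.continuous_exp.tendsto (-s)).comp hsum
            apply hcomp.congr'
            filter_upwards [eventually_ge_atTop (max s 0)] with h hh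
            have hh0 : (0:ℝ) ≤ h := le_trans (le_max_right _ _) hh
            have hhs : s ≤ h := le_trans (le_max_left _ _) hh
            have hhs0 : (0:ℝ) ≤ h - s := by linarith
            have hTh := hTpos h hh0
            have hThs := hTpos (h-s) hhs0
            show Real.exp (-s + α*(Real.log (a+h) - Real.log (a+(h-s)))
                + (Real.log (L (a+(h-s))) - Real.log (L (a+h)))) = T h / T (h-s)
            rw [show -s + α*(Real.log (a+h) - Real.log (a+(h-s)))
                + (Real.log (L (a+(h-s))) - Real.log (L (a+h)))
                = Real.log (T h) - Real.log (T (h-s)) by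
              rw [hlogT h hh0, hlogT (h-s) hhs0]; ring]
            rw [Real.exp_sub, Real.exp_log hTh, Real.exp_log hThs]
          have hden0 : 0 < 1 - Real.exp (-s)^2 := by
            have h1 : Real.exp (-s) < 1 := Real.exp_lt_one_iff.2 (by linarith)
            nlinarith [Real.exp_pos (-s)]
          have hFlim : Tendsto (fun h => (T h / T (h - s)) ^ 2 /
              Real.sqrt (1 - (T h / T (h - s)) ^ 2)) atTop
              (nhds (Real.exp (-s)^2 / Real.sqrt (1 - Real.exp (-s)^2))) := by
            apply Filter.Tendsto.div (hφlim.pow 2)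
            · exact (tendsto_const_nhds.sub (hφlim.pow 2)).sqrt
            · exact (Real.sqrt_pos.2 hden0).ne'
          rw [Set.indicator_of_mem (Set.mem_Ioi.2 hpos)]
          apply hFlim.congr'
          filter_upwards [eventually_ge_atTop s] with h hh
          exact (Set.indicator_of_mem (Set.mem_Ioc.2 ⟨hpos, hh⟩)
            (fun s => (T h / T (h - s)) ^ 2 / Real.sqrt (1 - (T h / T (h - s)) ^ 2))).symm
    have hval : (∫ s, Set.indicator (Set.Ioi 0)
        (fun s => Real.exp (-s)^2 / Real.sqrt (1 - Real.exp (-s)^2)) s) = 1 := by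
      rw [MeasureTheory.integral_indicator measurableSet_Ioi]
      exact limit_int
    rw [hval] at hmain
    apply hmain.congr'
    filter_upwards [eventually_ge_atTop (0:ℝ)] with h hh
    rw [MeasureTheory.integral_indicator measurableSet_Ioc,
      intervalIntegral.integral_of_le hh]
end

section
/- Let α > 0 and 𝔞 > 4α, let L : [0,∞) → (0,∞) be a differentiable slowly varying function with L'(t)/L(t) → 0 as t → +∞, set 𝒯(t) = e^{−𝔞−t}·(𝔞+t)^α/L(𝔞+t) for t ≥ 0, and assume 𝒯 is strictly decreasing on [0,∞). Then for all sufficiently large h the integral ∫₀^h (1/√(1 − f_h(s)²) − 1) ds is finite, where f_h(s) = 𝒯(h)/𝒯(h−s), and this integral converges to log 2 as h → +∞. -/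
open MeasureTheory Filter Set Real

lemma logL_bound (L : ℝ → ℝ) (hLpos : ∀ t ≥ (0:ℝ), 0 < L t)
    (hLdiff : ∀ t ≥ (0:ℝ), DifferentiableAt ℝ L t)
    {C x y : ℝ} (hx : 0 ≤ x) (hxy : x ≤ y)
    (hb : ∀ t ∈ Set.Icc x y, |deriv L t / L t| ≤ C) :
    |Real.log (L y) - Real.log (L x)| ≤ C * (y - x) := by
  have key := norm_image_sub_le_of_norm_deriv_le_segment'
    (f := fun u => Real.log (L u)) (f' := fun t => deriv L t / L t) (C := C)
    (a := x) (b := y) ?_ (fun t ht => hb t (Set.Ico_subset_Icc_self ht)) y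
    ⟨hxy, le_refl y⟩
  · simpa using key
  · intro t ht
    have ht0 : (0:ℝ) ≤ t := hx.trans ht.1
    have : HasDerivAt (fun u => Real.log (L u)) (deriv L t / L t) t :=
      ((hLdiff t ht0).hasDerivAt).log (hLpos t ht0).ne'
    exact this.hasDerivWithinAt

lemma ell_nonneg {k s : ℝ} (hk : 0 < k) (hs : 0 < s) :
    0 ≤ 1 / Real.sqrt (1 - Real.exp (-(k*s))) - 1 := by
  have h1 : Real.exp (-(k*s)) < 1 := by
    rw [Real.exp_lt_one_iff]; nlinarith
  have h0 : 0 < 1 - Real.exp (-(k*s)) := by linarith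
  have hsq : Real.sqrt (1 - Real.exp (-(k*s))) ≤ 1 := by
    exact Real.sqrt_le_one.mpr (by nlinarith [Real.exp_pos (-(k*s))])
  have hsqpos : 0 < Real.sqrt (1 - Real.exp (-(k*s))) := Real.sqrt_pos.mpr h0
  have : 1 ≤ 1 / Real.sqrt (1 - Real.exp (-(k*s))) := one_le_one_div hsqpos hsq
  linarith

lemma ell_contOn {k : ℝ} (hk : 0 < k) :
    ContinuousOn (fun s => 1 / Real.sqrt (1 - Real.exp (-(k*s))) - 1) (Set.Ioi (0:ℝ)) := by
  intro s hs
  have hs : (0:ℝ) < s := hs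
  have h0 : 0 < 1 - Real.exp (-(k*s)) := by
    have : Real.exp (-(k*s)) < 1 := by rw [Real.exp_lt_one_iff]; nlinarith
    linarith
  have h1 : ContinuousAt (fun s : ℝ => Real.sqrt (1 - Real.exp (-(k*s)))) s :=
    (Real.continuous_sqrt.comp (by continuity)).continuousAt
  exact (((continuousAt_const.div h1 (Real.sqrt_pos.mpr h0).ne')).sub
    continuousAt_const).continuousWithinAt

lemma integrableOn_ell {k : ℝ} (hk : 0 < k) :
    IntegrableOn (fun s => 1 / Real.sqrt (1 - Real.exp (-(k*s))) - 1) (Set.Ioi (0:ℝ)) volume := by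
  set f : ℝ → ℝ := fun s => 1 / Real.sqrt (1 - Real.exp (-(k*s))) - 1 with hf
  have hmeas : ∀ u : Set ℝ, u ⊆ Set.Ioi 0 → MeasurableSet u → AEStronglyMeasurable f (volume.restrict u) :=
    fun u hu hmu => ((ell_contOn hk).mono hu).aestronglyMeasurable hmu
  have h1 : IntegrableOn f (Set.Ioc 0 (1/k)) volume := by
    apply MeasureTheory.Integrable.mono
      (g := fun s : ℝ => Real.sqrt (2/k) * s ^ (-(1/2) : ℝ))
    · have : IntervalIntegrable (fun s : ℝ => s ^ (-(1/2) : ℝ)) volume 0 (1/k) :=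
        intervalIntegral.intervalIntegrable_rpow' (by norm_num)
      rw [intervalIntegrable_iff_integrableOn_Ioc_of_le (by positivity)] at this
      exact this.const_mul _
    · exact hmeas _ Set.Ioc_subset_Ioi_self measurableSet_Ioc
    · rw [MeasureTheory.ae_restrict_iff' measurableSet_Ioc]
      filter_upwards with s hs
      obtain ⟨hs0, hs1⟩ := hs
      have hks : k * s ≤ 1 := by
        have := (le_div_iff₀ hk).mp hs1; linarith [this]
      have hexp : k*s + 1 ≤ Real.exp (k*s) := Real.add_one_le_exp (k*s)
      have hepos : (0:ℝ) < Real.exp (k*s) := Real.exp_pos _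
      have hinv : (Real.exp (k*s))⁻¹ ≤ (1 + k*s)⁻¹ := by
        apply inv_anti₀ (by nlinarith) (by linarith)
      have h4 : (1 + k*s)⁻¹ ≤ 1 - k*s/2 := by
        rw [← one_div, div_le_iff₀ (by nlinarith)]
        nlinarith [mul_pos hk hs0, sq_nonneg (k*s)]
      have hlow : k*s/2 ≤ 1 - Real.exp (-(k*s)) := by
        rw [Real.exp_neg]; linarith [hinv.trans h4]
      have hlp : (0:ℝ) < k*s/2 := by positivity
      have hfb : f s ≤ 1 / Real.sqrt (k*s/2) := by
        have hmono := Real.sqrt_le_sqrt hlow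
        have h2 : 0 < Real.sqrt (k*s/2) := Real.sqrt_pos.mpr hlp
        have := one_div_le_one_div_of_le h2 hmono
        simp only [hf]; linarith
      have heq : 1 / Real.sqrt (k*s/2) = Real.sqrt (2/k) * s ^ (-(1/2) : ℝ) := by
        rw [one_div, ← Real.sqrt_inv, show (k*s/2)⁻¹ = (2/k) * (1/s) by field_simp,
          Real.sqrt_mul (by positivity), Real.rpow_neg hs0.le]
        congr 1
        rw [one_div, Real.sqrt_inv, Real.sqrt_eq_rpow]
      rw [Real.norm_eq_abs, Real.norm_eq_abs, abs_of_nonneg (ell_nonneg hk hs0)]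
      calc f s ≤ 1 / Real.sqrt (k*s/2) := hfb
        _ = Real.sqrt (2/k) * s ^ (-(1/2) : ℝ) := heq
        _ ≤ |Real.sqrt (2/k) * s ^ (-(1/2) : ℝ)| := le_abs_self _
  have h2 : IntegrableOn f (Set.Ioi (1/k)) volume := by
    apply MeasureTheory.Integrable.mono (g := fun s : ℝ => 2 * Real.exp (-k * s))
    · exact (exp_neg_integrableOn_Ioi (1/k) hk).const_mul 2
    · exact hmeas _ (Set.Ioi_subset_Ioi (by positivity)) measurableSet_Ioi
    · rw [MeasureTheory.ae_restrict_iff' measurableSet_Ioi]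
      filter_upwards with s hs
      have hs : 1/k < s := hs
      have hs0 : 0 < s := lt_trans (by positivity) hs
      have hks : 1 ≤ k * s := by
        have := (div_le_iff₀ hk).mp hs.le; linarith
      have hupos : 0 < Real.exp (-(k*s)) := Real.exp_pos _
      have hu2 : Real.exp (-(k*s)) ≤ 1/2 := by
        have h5 : Real.exp (-(k*s)) ≤ Real.exp (-1) := by
          apply Real.exp_le_exp.mpr; linarith
        have he : Real.exp (-1) ≤ 1/2 := by
          rw [Real.exp_neg, inv_le_comm₀ (Real.exp_pos 1) (by norm_num)]
          have := Real.add_one_le_exp (1:ℝ); linarith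
        linarith
      set u := Real.exp (-(k*s)) with hu
      have hsq : (1/(1+2*u))^2 ≤ 1 - u := by
        rw [div_pow, one_pow, div_le_iff₀ (by positivity)]
        have husq : u*u ≤ 1/4 := by nlinarith
        nlinarith [mul_le_mul_of_nonneg_left husq hupos.le]
      have hle : 1/(1+2*u) ≤ Real.sqrt (1-u) := Real.le_sqrt_of_sq_le hsq
      have hsqpos : 0 < Real.sqrt (1-u) := lt_of_lt_of_le (by positivity) hle
      have hfb : f s ≤ 2 * u := by
        have h3 : 1 / Real.sqrt (1-u) ≤ 1 + 2*u := by
          rw [div_le_iff₀ hsqpos]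
          calc (1:ℝ) = (1/(1+2*u)) * (1+2*u) := by field_simp
            _ ≤ Real.sqrt (1-u) * (1+2*u) :=
                mul_le_mul_of_nonneg_right hle (by positivity)
            _ = (1+2*u) * Real.sqrt (1-u) := by ring
        simp only [hf]; linarith
      rw [Real.norm_eq_abs, Real.norm_eq_abs, abs_of_nonneg (ell_nonneg hk hs0)]
      calc f s ≤ 2 * u := hfb
        _ = 2 * Real.exp (-k * s) := by rw [hu]; ring_nf
        _ ≤ |2 * Real.exp (-k * s)| := le_abs_self _
  have h3 := h1.union h2
  rwa [Set.Ioc_union_Ioi_eq_Ioi (by positivity : (0:ℝ) ≤ 1/k)] at h3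

lemma integral_ell :
    ∫ s in Set.Ioi (0:ℝ), (1 / Real.sqrt (1 - Real.exp (-(2*s))) - 1) = Real.log 2 := by
  set F : ℝ → ℝ := fun s => Real.log (1 + Real.sqrt (1 - Real.exp (-(2*s)))) with hF
  have hFcont : Continuous F := by
    apply Continuous.log
    · continuity
    · intro x
      have := Real.sqrt_nonneg (1 - Real.exp (-(2*x)))
      positivity
  have hderiv : ∀ x ∈ Set.Ioi (0:ℝ), HasDerivAt F
      (1 / Real.sqrt (1 - Real.exp (-(2*x))) - 1) x := by
    intro x hx
    have hx : (0:ℝ) < x := hx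
    set u := 1 - Real.exp (-(2*x)) with hu
    have hu0 : 0 < u := by
      have : Real.exp (-(2*x)) < 1 := by rw [Real.exp_lt_one_iff]; linarith
      simp only [hu]; linarith
    have hsqpos : 0 < Real.sqrt u := Real.sqrt_pos.mpr hu0
    have hex : Real.exp (-(2*x)) = 1 - u := by simp [hu]
    have h1 : HasDerivAt (fun x : ℝ => -(2*x)) (-2) x := by
      simpa using ((hasDerivAt_id x).const_mul (2:ℝ)).fun_neg
    have h2 : HasDerivAt (fun x : ℝ => Real.exp (-(2*x)))
        (Real.exp (-(2*x)) * (-2)) x := h1.exp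
    have h3 : HasDerivAt (fun x : ℝ => 1 - Real.exp (-(2*x)))
        (0 - Real.exp (-(2*x)) * (-2)) x := (hasDerivAt_const x 1).sub h2
    have h4 : HasDerivAt (fun x : ℝ => Real.sqrt (1 - Real.exp (-(2*x))))
        (1 / (2 * Real.sqrt u) * (0 - Real.exp (-(2*x)) * (-2))) x :=
      (Real.hasDerivAt_sqrt hu0.ne').comp x h3
    have h5 : HasDerivAt (fun x : ℝ => 1 + Real.sqrt (1 - Real.exp (-(2*x))))
        (1 / (2 * Real.sqrt u) * (0 - Real.exp (-(2*x)) * (-2))) x :=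
      h4.const_add 1
    have h6 := h5.log (by positivity : (1:ℝ) + Real.sqrt u ≠ 0)
    convert h6 using 1
    have hsq : Real.sqrt u * Real.sqrt u = u := Real.mul_self_sqrt hu0.le
    clear_value u
    rw [← hu, hex]
    have hv1 : (0:ℝ) < 1 + Real.sqrt u := by positivity
    field_simp
    linear_combination (-2) * hsq
  have htend : Filter.Tendsto F Filter.atTop (nhds (Real.log 2)) := by
    have h0 : Filter.Tendsto (fun s : ℝ => Real.exp (-(2*s))) Filter.atTop (nhds 0) := by
      apply Real.tendsto_exp_atBot.comp
      exact tendsto_neg_atTop_atBot.comp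
        (Filter.tendsto_id.const_mul_atTop (by norm_num : (0:ℝ) < 2))
    have h1 : Filter.Tendsto (fun s : ℝ => 1 + Real.sqrt (1 - Real.exp (-(2*s))))
        Filter.atTop (nhds 2) := by
      have h2 : Filter.Tendsto (fun s : ℝ => 1 - Real.exp (-(2*s))) Filter.atTop (nhds 1) := by
        simpa using (tendsto_const_nhds.sub h0)
      have h3 := (Real.continuous_sqrt.tendsto 1).comp h2
      rw [Real.sqrt_one] at h3
      have h5x : Filter.Tendsto (fun s : ℝ => 1 + Real.sqrt (1 - Real.exp (-(2*s))))
          Filter.atTop (nhds (1+1)) := (tendsto_const_nhds (x := (1:ℝ))).add (by exact h3)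
      norm_num at h5x
      exact h5x
    have h4 := (Real.continuousAt_log (by norm_num : (2:ℝ) ≠ 0)).tendsto.comp h1
    exact h4
  have hF0 : F 0 = 0 := by simp [hF]
  rw [MeasureTheory.integral_Ioi_of_hasDerivAt_of_tendsto
    hFcont.continuousWithinAt hderiv (integrableOn_ell (by norm_num : (0:ℝ) < 2)) htend, hF0, sub_zero]

section TLemmas

variable {α a : ℝ} {L T : ℝ → ℝ}

lemma Tpos (ha0 : 0 < a) (hLpos : ∀ t ≥ (0:ℝ), 0 < L t)
    (hT : ∀ t ≥ (0:ℝ), T t = Real.exp (-a - t) * (a + t) ^ α / L (a + t))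
    {t : ℝ} (ht : 0 ≤ t) : 0 < T t := by
  rw [hT t ht]
  have h1 : 0 < a + t := by linarith
  exact div_pos (mul_pos (Real.exp_pos _) (Real.rpow_pos_of_pos h1 α))
    (hLpos (a+t) (by linarith))

lemma logT (ha0 : 0 < a) (hLpos : ∀ t ≥ (0:ℝ), 0 < L t)
    (hT : ∀ t ≥ (0:ℝ), T t = Real.exp (-a - t) * (a + t) ^ α / L (a + t))
    {t : ℝ} (ht : 0 ≤ t) :
    Real.log (T t) = (-a - t) + α * Real.log (a + t) - Real.log (L (a + t)) := by
  have h1 : 0 < a + t := by linarith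
  rw [hT t ht, Real.log_div (by positivity) (hLpos (a+t) (by linarith)).ne',
    Real.log_mul (Real.exp_pos _).ne' (Real.rpow_pos_of_pos h1 α).ne',
    Real.log_exp, Real.log_rpow h1]

lemma logRatio (ha0 : 0 < a) (hLpos : ∀ t ≥ (0:ℝ), 0 < L t)
    (hT : ∀ t ≥ (0:ℝ), T t = Real.exp (-a - t) * (a + t) ^ α / L (a + t))
    {h s : ℝ} (hs : 0 ≤ s) (hsh : s ≤ h) :
    Real.log (T h / T (h - s)) = -s + α * (Real.log (a + h) - Real.log (a + (h - s)))
      + (Real.log (L (a + (h - s))) - Real.log (L (a + h))) := by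
  have h0 : (0:ℝ) ≤ h := hs.trans hsh
  have hhs : (0:ℝ) ≤ h - s := by linarith
  rw [Real.log_div (Tpos ha0 hLpos hT h0).ne' (Tpos ha0 hLpos hT hhs).ne',
    logT ha0 hLpos hT h0, logT ha0 hLpos hT hhs]
  ring

lemma ratio_le (hα : 0 < α) (ha : 4 * α < a)
    (hLpos : ∀ t ≥ (0:ℝ), 0 < L t) (hLdiff : ∀ t ≥ (0:ℝ), DifferentiableAt ℝ L t)
    (hT : ∀ t ≥ (0:ℝ), T t = Real.exp (-a - t) * (a + t) ^ α / L (a + t))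
    {c : ℝ} (hc : ∀ t ≥ c, |deriv L t / L t| ≤ 1/4)
    {h s : ℝ} (hs : 0 ≤ s) (hsh : s ≤ h) (hch : c ≤ a + (h - s)) :
    T h / T (h - s) ≤ Real.exp (-(s/2)) := by
  have ha0 : 0 < a := by nlinarith
  have h0 : (0:ℝ) ≤ h := hs.trans hsh
  have hhs : (0:ℝ) ≤ h - s := by linarith
  have hrpos : 0 < T h / T (h - s) :=
    div_pos (Tpos ha0 hLpos hT h0) (Tpos ha0 hLpos hT hhs)
  rw [← Real.log_le_iff_le_exp hrpos, logRatio ha0 hLpos hT hs hsh]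
  have hden : 0 < a + (h - s) := by linarith
  have hmid : Real.log (a + h) - Real.log (a + (h - s)) ≤ s / (a + (h - s)) := by
    rw [← Real.log_div (by linarith : (0:ℝ) < a + h).ne' hden.ne']
    have := Real.log_le_sub_one_of_pos (div_pos (by linarith : (0:ℝ) < a + h) hden)
    calc Real.log ((a + h)/(a + (h-s))) ≤ (a + h)/(a + (h-s)) - 1 := this
      _ = s / (a + (h - s)) := by field_simp; ring
  have hmid2 : α * (Real.log (a + h) - Real.log (a + (h - s))) ≤ s/4 := by
    have h1 : α * (Real.log (a + h) - Real.log (a + (h - s))) ≤ α * (s / (a + (h-s))) :=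
      mul_le_mul_of_nonneg_left hmid hα.le
    have h2 : α * (s / (a + (h-s))) ≤ α * (s / a) := by
      apply mul_le_mul_of_nonneg_left _ hα.le
      apply div_le_div_of_nonneg_left hs ha0 (by linarith)
    have h3 : α * (s / a) ≤ s/4 := by
      rw [mul_div_assoc', div_le_div_iff₀ ha0 (by norm_num)]
      nlinarith
    linarith
  have hLb : |Real.log (L (a + h)) - Real.log (L (a + (h - s)))| ≤ (1/4) * s := by
    have := logL_bound L hLpos hLdiff (C := 1/4) hden.le (by linarith : a + (h-s) ≤ a + h)
      (fun t ht => hc t (hch.trans ht.1))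
    calc |Real.log (L (a + h)) - Real.log (L (a + (h - s)))| ≤ (1/4) * ((a+h) - (a+(h-s))) := this
      _ = (1/4) * s := by ring
  have hLb2 : Real.log (L (a + (h - s))) - Real.log (L (a + h)) ≤ s/4 := by
    have := abs_le.mp hLb
    linarith [this.1]
  linarith

end TLemmas

section TLemmas2

variable {α a : ℝ} {L T : ℝ → ℝ}

lemma ratio_tendsto (hα : 0 < α) (ha : 4 * α < a)
    (hLpos : ∀ t ≥ (0:ℝ), 0 < L t) (hLdiff : ∀ t ≥ (0:ℝ), DifferentiableAt ℝ L t)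
    (hLratio : Filter.Tendsto (fun t => deriv L t / L t) Filter.atTop (nhds 0))
    (hT : ∀ t ≥ (0:ℝ), T t = Real.exp (-a - t) * (a + t) ^ α / L (a + t))
    {s : ℝ} (hs : 0 < s) :
    Filter.Tendsto (fun h => T h / T (h - s)) Filter.atTop (nhds (Real.exp (-s))) := by
  have ha0 : 0 < a := by nlinarith
  -- the denominator tends to atTop
  have hden : Filter.Tendsto (fun h : ℝ => a + (h - s)) Filter.atTop Filter.atTop := by
    apply Filter.tendsto_atTop_add_const_left
    exact (Filter.tendsto_atTop_add_const_right _ (-s) Filter.tendsto_id).congr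
      (fun x => by simp [sub_eq_add_neg])
  -- middle term
  have hmid : Filter.Tendsto
      (fun h : ℝ => Real.log (a + h) - Real.log (a + (h - s))) Filter.atTop (nhds 0) := by
    have hq : Filter.Tendsto (fun h : ℝ => 1 + s / (a + (h - s))) Filter.atTop (nhds 1) := by
      have := (tendsto_const_nhds (x := s)).div_atTop hden
      simpa using (tendsto_const_nhds (x := (1:ℝ))).add this
    have hlog := (Real.continuousAt_log one_ne_zero).tendsto.comp hq
    rw [Real.log_one] at hlog
    apply hlog.congr'
    filter_upwards [Filter.eventually_ge_atTop (s + 1)] with h hh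
    have h1 : 0 < a + (h - s) := by linarith
    have h2 : 0 < a + h := by linarith
    have : 1 + s / (a + (h - s)) = (a + h) / (a + (h - s)) := by field_simp; ring
    simp only [Function.comp_apply, this]
    rw [Real.log_div h2.ne' h1.ne']
  -- L term
  have hLterm : Filter.Tendsto
      (fun h : ℝ => Real.log (L (a + (h - s))) - Real.log (L (a + h)))
      Filter.atTop (nhds 0) := by
    rw [NormedAddCommGroup.tendsto_nhds_zero]
    intro ε hε
    have hδ : 0 < ε / (2 * (s + 1)) := by positivity
    have hev := Metric.tendsto_nhds.mp hLratio _ hδ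
    rw [Filter.eventually_atTop] at hev
    obtain ⟨M, hM⟩ := hev
    filter_upwards [Filter.eventually_ge_atTop (max M 0 + s + 1)] with h hh
    have hmax1 := le_max_left M 0
    have hmax2 := le_max_right M 0
    have hx0 : (0:ℝ) ≤ a + (h - s) := by linarith
    have hbound : ∀ t ∈ Set.Icc (a + (h-s)) (a + h), |deriv L t / L t| ≤ ε/(2*(s+1)) := by
      intro t ht
      have hMt : M ≤ t := by
        have := ht.1; linarith
      have := hM t hMt
      rw [Real.dist_eq, sub_zero] at this
      exact this.le
    have hkey := logL_bound L hLpos hLdiff hx0 (by linarith : a+(h-s) ≤ a+h) hbound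
    rw [Real.norm_eq_abs, abs_sub_comm]
    calc |Real.log (L (a + h)) - Real.log (L (a + (h - s)))|
        ≤ ε/(2*(s+1)) * ((a+h) - (a+(h-s))) := hkey
      _ = ε * (s/(2*(s+1))) := by ring
      _ < ε * 1 := by
          apply mul_lt_mul_of_pos_left _ hε
          rw [div_lt_one (by positivity)]; linarith
      _ = ε := mul_one ε
  -- combine
  have hG : Filter.Tendsto (fun h : ℝ => -s + α * (Real.log (a + h) - Real.log (a + (h - s)))
      + (Real.log (L (a + (h - s))) - Real.log (L (a + h)))) Filter.atTop (nhds (-s)) := by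
    have := ((tendsto_const_nhds (x := -s)).add (hmid.const_mul α)).add hLterm
    simpa using this
  have hlogr : Filter.Tendsto (fun h : ℝ => Real.log (T h / T (h - s)))
      Filter.atTop (nhds (-s)) := by
    apply hG.congr'
    filter_upwards [Filter.eventually_ge_atTop s] with h hh
    exact (logRatio ha0 hLpos hT hs.le hh).symm
  have hfin := (Real.continuous_exp.tendsto _).comp hlogr
  apply hfin.congr'
  filter_upwards [Filter.eventually_ge_atTop s] with h hh
  have h0 : (0:ℝ) ≤ h := hs.le.trans hh
  have hrpos : 0 < T h / T (h - s) :=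
    div_pos (Tpos ha0 hLpos hT h0) (Tpos ha0 hLpos hT (by linarith))
  exact Real.exp_log hrpos

end TLemmas2

set_option maxHeartbeats 2000000 in
/-- From the proof of Lemma 2.7: the second Clairaut integral
`∫₀^h (1/√(1 - f_h(s)²) - 1) ds`, with `f_h(s) = 𝒯(h)/𝒯(h-s)`, is finite for `h`
large and converges to `log 2` as `h → +∞`. -/
theorem stmt5 (α a : ℝ) (hα : 0 < α) (ha : 4 * α < a)
    (L : ℝ → ℝ) (hLpos : ∀ t ≥ (0:ℝ), 0 < L t)
    (hLdiff : ∀ t ≥ (0:ℝ), DifferentiableAt ℝ L t)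
    (hLslow : SlowlyVarying L)
    (hLratio : Filter.Tendsto (fun t => deriv L t / L t) Filter.atTop (nhds 0))
    (T : ℝ → ℝ)
    (hT : ∀ t ≥ (0:ℝ), T t = Real.exp (-a - t) * (a + t) ^ α / L (a + t))
    (hTanti : StrictAntiOn T (Set.Ici 0)) :
    (∀ᶠ h in Filter.atTop, IntervalIntegrable
      (fun s => 1 / Real.sqrt (1 - (T h / T (h - s)) ^ 2) - 1)
      MeasureTheory.volume 0 h) ∧
    Filter.Tendsto (fun h => ∫ s in (0:ℝ)..h,
        (1 / Real.sqrt (1 - (T h / T (h - s)) ^ 2) - 1))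
      Filter.atTop (nhds (Real.log 2)) := by
  have ha0 : 0 < a := by nlinarith
  -- threshold for |L'/L| ≤ 1/4
  obtain ⟨c₀, hc₀⟩ : ∃ c₀ : ℝ, ∀ t ≥ c₀, |deriv L t / L t| ≤ 1/4 := by
    have hev := Metric.tendsto_nhds.mp hLratio (1/4) (by norm_num)
    rw [Filter.eventually_atTop] at hev
    obtain ⟨M, hM⟩ := hev
    refine ⟨M, fun t ht => ?_⟩
    have := hM t ht
    rw [Real.dist_eq, sub_zero] at this
    exact this.le
  set c : ℝ := max c₀ (max a 1) with hcdef
  have hca : a ≤ c := le_trans (le_max_left a 1) (le_max_right _ _)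
  have hc1 : (1:ℝ) ≤ c := le_trans (le_max_right a 1) (le_max_right _ _)
  have hc0' : (0:ℝ) < c := by linarith
  have hcthr : ∀ t ≥ c, |deriv L t / L t| ≤ 1/4 :=
    fun t ht => hc₀ t (le_trans (le_max_left _ _) ht)
  -- notation
  set I : ℝ → ℝ → ℝ := fun h s => 1 / Real.sqrt (1 - (T h / T (h - s)) ^ 2) - 1 with hIdef
  set D : ℝ → ℝ := fun s => 1 / Real.sqrt (1 - Real.exp (-(1/2 * s))) - 1 with hDdef
  set lim2 : ℝ → ℝ := fun s => 1 / Real.sqrt (1 - Real.exp (-(2 * s))) - 1 with hlimdef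
  -- key uniform bound
  have hA : ∀ h : ℝ, 3*c ≤ h → ∀ s ∈ Set.Ioc (0:ℝ) h,
      T h / T (h - s) ≤ Real.exp (-(s/4)) := by
    intro h hh s hsIoc
    obtain ⟨hs0, hsh⟩ := hsIoc
    by_cases hcase : s ≤ h - c
    · have h1 := ratio_le hα ha hLpos hLdiff hT hcthr hs0.le hsh
        (by linarith : c ≤ a + (h - s))
      calc T h / T (h - s) ≤ Real.exp (-(s/2)) := h1
        _ ≤ Real.exp (-(s/4)) := Real.exp_le_exp.mpr (by linarith)
    · push_neg at hcase
      have hhc : (0:ℝ) ≤ h - c := by linarith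
      have h0 : (0:ℝ) ≤ h := by linarith
      have hhs0 : (0:ℝ) ≤ h - s := by linarith
      have hTc : T c < T (h - s) :=
        hTanti (Set.mem_Ici.mpr hhs0) (Set.mem_Ici.mpr hc0'.le) (by linarith)
      have hTcpos : 0 < T c := Tpos ha0 hLpos hT hc0'.le
      have hstep : T h / T (h - s) ≤ T h / T c :=
        div_le_div_of_nonneg_left (Tpos ha0 hLpos hT h0).le hTcpos hTc.le
      have hmain := ratio_le hα ha hLpos hLdiff hT hcthr hhc
        (by linarith : h - c ≤ h) (by rw [show h - (h - c) = c by ring]; linarith)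
      rw [show h - (h - c) = c by ring] at hmain
      calc T h / T (h - s) ≤ T h / T c := hstep
        _ ≤ Real.exp (-((h - c)/2)) := hmain
        _ ≤ Real.exp (-(s/4)) := Real.exp_le_exp.mpr (by linarith)
  -- core pointwise estimates
  have hcore : ∀ h : ℝ, 3*c ≤ h → ∀ s ∈ Set.Ioc (0:ℝ) h,
      0 < 1 - (T h / T (h - s))^2 ∧ 0 ≤ I h s ∧ I h s ≤ D s := by
    intro h hh s hsIoc
    obtain ⟨hs0, hsh⟩ := hsIoc
    have h0 : (0:ℝ) ≤ h := by linarith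
    have hr0 : 0 < T h / T (h - s) :=
      div_pos (Tpos ha0 hLpos hT h0) (Tpos ha0 hLpos hT (by linarith))
    have hr := hA h hh s ⟨hs0, hsh⟩
    have hsq : (T h / T (h - s))^2 ≤ Real.exp (-(1/2 * s)) := by
      calc (T h / T (h - s))^2 ≤ (Real.exp (-(s/4)))^2 := by nlinarith
        _ = Real.exp (-(1/2 * s)) := by
            rw [pow_two, ← Real.exp_add]; congr 1; ring
    have hes : Real.exp (-(1/2 * s)) < 1 := by
      rw [Real.exp_lt_one_iff]; linarith
    have h1 : 0 < 1 - Real.exp (-(1/2 * s)) := by linarith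
    have h2 : 0 < 1 - (T h / T (h - s))^2 := by linarith
    have hsp2 : 0 < Real.sqrt (1 - (T h / T (h - s))^2) := Real.sqrt_pos.mpr h2
    have hsp1 : 0 < Real.sqrt (1 - Real.exp (-(1/2 * s))) := Real.sqrt_pos.mpr h1
    refine ⟨h2, ?_, ?_⟩
    · have hle1 : Real.sqrt (1 - (T h / T (h - s))^2) ≤ 1 :=
        Real.sqrt_le_one.mpr (by nlinarith [sq_nonneg (T h / T (h - s))])
      have := one_le_one_div hsp2 hle1
      simp only [hIdef]
      linarith
    · have hmono : Real.sqrt (1 - Real.exp (-(1/2 * s)))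
          ≤ Real.sqrt (1 - (T h / T (h - s))^2) := Real.sqrt_le_sqrt (by linarith)
      have := one_div_le_one_div_of_le hsp1 hmono
      simp only [hIdef, hDdef]
      linarith
  -- continuity of I h on Ioc 0 h
  have hGcont : ∀ h : ℝ, 3*c ≤ h → ContinuousOn (I h) (Set.Ioc 0 h) := by
    intro h hh
    set TF : ℝ → ℝ := fun u => Real.exp (-a - u) * (a + u) ^ α / L (a + u) with hTFdef
    set G : ℝ → ℝ := fun s => 1 / Real.sqrt (1 - (T h / TF (h - s)) ^ 2) - 1 with hGdef
    have hEq : ∀ y ∈ Set.Ioc (0:ℝ) h, I h y = G y := by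
      intro y hy
      simp only [hIdef, hGdef]
      rw [hT (h - y) (by linarith [hy.2] : (0:ℝ) ≤ h - y)]
    intro s hs
    obtain ⟨hs0, hsh⟩ := hs
    have hhs0 : (0:ℝ) ≤ h - s := by linarith
    have hbase : 0 < a + (h - s) := by linarith
    have hTFT : TF (h - s) = T (h - s) := (hT (h - s) hhs0).symm
    have hTFpos : 0 < TF (h - s) := by rw [hTFT]; exact Tpos ha0 hLpos hT hhs0
    have hGc : ContinuousAt G s := by
      have hA1 : ContinuousAt (fun s : ℝ => a + (h - s)) s := by fun_prop
      have hL : ContinuousAt (fun s : ℝ => L (a + (h - s))) s :=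
        ContinuousAt.comp (g := L) (f := fun s : ℝ => a + (h - s))
          ((hLdiff _ hbase.le).continuousAt) hA1
      have hrpow : ContinuousAt (fun s : ℝ => (a + (h - s)) ^ α) s :=
        ContinuousAt.comp (g := fun u : ℝ => u ^ α) (f := fun s : ℝ => a + (h - s))
          (Real.continuousAt_rpow_const _ _ (Or.inl hbase.ne')) hA1
      have hexp : ContinuousAt (fun s : ℝ => Real.exp (-a - (h - s))) s :=
        Real.continuous_exp.continuousAt.comp (by fun_prop)
      have hTFc : ContinuousAt (fun s : ℝ => TF (h - s)) s :=
        (hexp.mul hrpow).div hL (hLpos _ hbase.le).ne'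
      have hrc : ContinuousAt (fun s : ℝ => T h / TF (h - s)) s :=
        continuousAt_const.div hTFc hTFpos.ne'
      have hinner : ContinuousAt (fun s : ℝ => 1 - (T h / TF (h - s)) ^ 2) s :=
        continuousAt_const.sub (hrc.pow 2)
      have hsqc : ContinuousAt (fun s : ℝ => Real.sqrt (1 - (T h / TF (h - s)) ^ 2)) s :=
        Real.continuous_sqrt.continuousAt.comp hinner
      have hne : Real.sqrt (1 - (T h / TF (h - s)) ^ 2) ≠ 0 := by
        rw [hTFT]
        exact (Real.sqrt_pos.mpr (hcore h hh s ⟨hs0, hsh⟩).1).ne'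
      exact (continuousAt_const.div hsqc hne).sub continuousAt_const
    exact (hGc.continuousWithinAt).congr hEq (hEq s ⟨hs0, hsh⟩)
  have hDInt : MeasureTheory.IntegrableOn D (Set.Ioi (0:ℝ)) MeasureTheory.volume :=
    integrableOn_ell (by norm_num : (0:ℝ) < 1/2)
  -- integrability on Ioc 0 h
  have hIntOn : ∀ h : ℝ, 3*c ≤ h → MeasureTheory.IntegrableOn (I h) (Set.Ioc 0 h)
      MeasureTheory.volume := by
    intro h hh
    apply MeasureTheory.Integrable.mono (hDInt.mono_set Set.Ioc_subset_Ioi_self)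
      (((hGcont h hh).aemeasurable measurableSet_Ioc).aestronglyMeasurable)
    rw [MeasureTheory.ae_restrict_iff' measurableSet_Ioc]
    filter_upwards with s hs
    obtain ⟨_, hnn, hle⟩ := hcore h hh s hs
    rw [Real.norm_eq_abs, Real.norm_eq_abs, abs_of_nonneg hnn]
    exact hle.trans (le_abs_self _)
  constructor
  · filter_upwards [Filter.eventually_ge_atTop (3*c)] with h hh
    rw [intervalIntegrable_iff_integrableOn_Ioc_of_le (by linarith : (0:ℝ) ≤ h)]
    exact hIntOn h hh
  · have hmeasF : ∀ᶠ (h:ℝ) in Filter.atTop,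
        MeasureTheory.AEStronglyMeasurable ((Set.Ioc (0:ℝ) h).indicator (I h))
          (MeasureTheory.volume.restrict (Set.Ioi (0:ℝ))) := by
      filter_upwards [Filter.eventually_ge_atTop (3*c)] with h hh
      rw [aestronglyMeasurable_indicator_iff measurableSet_Ioc,
        MeasureTheory.Measure.restrict_restrict measurableSet_Ioc,
        Set.inter_eq_left.mpr Set.Ioc_subset_Ioi_self]
      exact (hGcont h hh).aestronglyMeasurable measurableSet_Ioc
    have hboundF : ∀ᶠ (h:ℝ) in Filter.atTop,
        ∀ᵐ s ∂(MeasureTheory.volume.restrict (Set.Ioi (0:ℝ))),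
          ‖(Set.Ioc (0:ℝ) h).indicator (I h) s‖ ≤ D s := by
      filter_upwards [Filter.eventually_ge_atTop (3*c)] with h hh
      rw [MeasureTheory.ae_restrict_iff' measurableSet_Ioi]
      filter_upwards with s hs
      by_cases hmem : s ∈ Set.Ioc (0:ℝ) h
      · rw [Set.indicator_of_mem hmem]
        obtain ⟨_, hnn, hle⟩ := hcore h hh s hmem
        rw [Real.norm_eq_abs, abs_of_nonneg hnn]
        exact hle
      · rw [Set.indicator_of_notMem hmem, norm_zero]
        exact ell_nonneg (by norm_num : (0:ℝ) < 1/2) hs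
    have hlimF : ∀ᵐ s ∂(MeasureTheory.volume.restrict (Set.Ioi (0:ℝ))),
        Filter.Tendsto (fun h : ℝ => (Set.Ioc (0:ℝ) h).indicator (I h) s)
          Filter.atTop (nhds (lim2 s)) := by
      rw [MeasureTheory.ae_restrict_iff' measurableSet_Ioi]
      refine MeasureTheory.ae_of_all _ ?_
      intro s hs
      have hs0 : (0:ℝ) < s := hs
      have hr := ratio_tendsto hα ha hLpos hLdiff hLratio hT hs0
      have hr2 : Filter.Tendsto (fun h => (T h / T (h - s))^2) Filter.atTop
          (nhds (Real.exp (-(2*s)))) := by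
        have h2 := hr.pow 2
        rwa [show Real.exp (-s)^2 = Real.exp (-(2*s)) by
          rw [pow_two, ← Real.exp_add]; congr 1; ring] at h2
      have h1 : 0 < 1 - Real.exp (-(2*s)) := by
        have : Real.exp (-(2*s)) < 1 := by rw [Real.exp_lt_one_iff]; linarith
        linarith
      have hsqrt : Filter.Tendsto (fun h => Real.sqrt (1 - (T h / T (h - s))^2))
          Filter.atTop (nhds (Real.sqrt (1 - Real.exp (-(2*s))))) :=
        (Real.continuous_sqrt.continuousAt).tendsto.comp (tendsto_const_nhds.sub hr2)
      have hdiv : Filter.Tendsto (fun h => 1 / Real.sqrt (1 - (T h / T (h - s))^2))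
          Filter.atTop (nhds (1 / Real.sqrt (1 - Real.exp (-(2*s))))) :=
        tendsto_const_nhds.div hsqrt (Real.sqrt_pos.mpr h1).ne'
      have hIlim : Filter.Tendsto (fun h => I h s) Filter.atTop (nhds (lim2 s)) :=
        hdiv.sub tendsto_const_nhds
      apply hIlim.congr'
      filter_upwards [Filter.eventually_ge_atTop s] with h hh
      exact (Set.indicator_of_mem (Set.mem_Ioc.mpr ⟨hs0, hh⟩) (I h)).symm
    have hmain := MeasureTheory.tendsto_integral_filter_of_dominated_convergence
      (μ := MeasureTheory.volume.restrict (Set.Ioi (0:ℝ)))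
      (F := fun (h : ℝ) => (Set.Ioc (0:ℝ) h).indicator (I h))
      (f := lim2) D hmeasF hboundF hDInt hlimF
    have hval : ∫ s in Set.Ioi (0:ℝ), lim2 s = Real.log 2 := integral_ell
    rw [hval] at hmain
    apply hmain.congr'
    filter_upwards [Filter.eventually_ge_atTop (3*c)] with h hh
    have h0 : (0:ℝ) ≤ h := by linarith
    rw [MeasureTheory.integral_indicator measurableSet_Ioc,
      MeasureTheory.Measure.restrict_restrict measurableSet_Ioc,
      Set.inter_eq_left.mpr Set.Ioc_subset_Ioi_self,
      intervalIntegral.integral_of_le h0]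
end

section
/- Let α > 0 and 𝔞 > 0, let L : [0,∞) → (0,∞) be a continuous slowly varying function, and set 𝒯(t) = e^{−𝔞−t}·(𝔞+t)^α/L(𝔞+t) for t ≥ 0. If (h_n)_{n≥1} is a sequence of positive reals with h_n → +∞ and n·𝒯(h_n)/2 → 1 as n → ∞, then h_n − (log n + α·log log n − log L(log n)) → −log 2 − 𝔞 as n → ∞. -/
open Filter Set


/-- Uniform convergence near shift 0, from pointwise convergence of shifts,
via Baire category. -/
lemma unifA (φ : ℝ → ℝ) (hφ : Continuous φ)
    (hp : ∀ u : ℝ, Tendsto (fun x => φ (x + u) - φ x) atTop (nhds 0))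
    {ε : ℝ} (hε : 0 < ε) :
    ∃ δ > (0:ℝ), ∃ X : ℝ, ∀ x ≥ X, ∀ s : ℝ, |s| ≤ δ → |φ (x + s) - φ x| ≤ ε := by
  set E : ℕ → Set ℝ := fun k => {u | ∀ x : ℝ, (k : ℝ) ≤ x → |φ (x + u) - φ x| ≤ ε / 2}
    with hE
  have hclosed : ∀ k, IsClosed (E k) := by
    intro k
    have : E k = ⋂ x : ℝ, {u | (k : ℝ) ≤ x → |φ (x + u) - φ x| ≤ ε / 2} :=
      Set.setOf_forall _
    rw [this]
    refine isClosed_iInter fun x => ?_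
    by_cases hx : (k : ℝ) ≤ x
    · simp only [hx, true_implies]
      exact isClosed_le (continuous_abs.comp
        ((hφ.comp (continuous_const.add continuous_id)).sub continuous_const))
        continuous_const
    · simp [hx]
  have hunion : ⋃ k, E k = Set.univ := by
    rw [Set.iUnion_eq_univ_iff]
    intro u
    have := (hp u).eventually (Metric.closedBall_mem_nhds 0 (half_pos hε))
    rw [eventually_atTop] at this
    obtain ⟨N, hN⟩ := this
    obtain ⟨k, hk⟩ := exists_nat_ge N
    refine ⟨k, fun x hx => ?_⟩
    have := hN x (hk.trans hx)
    simpa [Real.dist_eq] using this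
  obtain ⟨k, u0, hu0⟩ := nonempty_interior_of_iUnion_of_closed hclosed hunion
  obtain ⟨δ0, hδ0, hball⟩ := Metric.mem_nhds_iff.mp (mem_interior_iff_mem_nhds.mp hu0)
  set p : ℝ := u0 - δ0 / 2 with hp'
  -- key: for shifts s ∈ [0, δ0/2]
  have key : ∀ x ≥ (k : ℝ) + |p|, ∀ s : ℝ, 0 ≤ s → s ≤ δ0 / 2 →
      |φ (x + s) - φ x| ≤ ε := by
    intro x hx s hs0 hs1
    have hxk : (k : ℝ) ≤ x - p := by
      have : p ≤ |p| := le_abs_self p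
      linarith
    have hmem1 : p ∈ E k := by
      apply hball
      simp only [Metric.mem_ball, Real.dist_eq, hp']
      rw [show u0 - δ0 / 2 - u0 = -(δ0 / 2) by ring, abs_neg,
        abs_of_pos (half_pos hδ0)]
      linarith
    have hmem2 : p + s ∈ E k := by
      apply hball
      simp only [Metric.mem_ball, Real.dist_eq, hp']
      rw [show u0 - δ0 / 2 + s - u0 = s - δ0 / 2 by ring]
      rw [abs_sub_lt_iff]; constructor <;> linarith
    have h1 := hmem1 (x - p) hxk
    have h2 := hmem2 (x - p) hxk
    have e1 : x - p + p = x := by ring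
    have e2 : x - p + (p + s) = x + s := by ring
    rw [e1] at h1; rw [e2] at h2
    calc |φ (x + s) - φ x| = |(φ (x + s) - φ (x - p)) - (φ x - φ (x - p))| := by
          rw [show φ (x + s) - φ x = (φ (x + s) - φ (x - p)) - (φ x - φ (x - p)) by ring]
      _ ≤ |φ (x + s) - φ (x - p)| + |φ x - φ (x - p)| := abs_sub _ _
      _ ≤ ε / 2 + ε / 2 := add_le_add h2 h1
      _ = ε := by ring
  refine ⟨δ0 / 2, half_pos hδ0, (k : ℝ) + |p| + δ0 / 2, fun x hx s hs => ?_⟩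
  rcases le_or_gt 0 s with hs0 | hs0
  · exact key x (by linarith) s hs0 (by rw [abs_of_nonneg hs0] at hs; exact hs)
  · have habs : -s ≤ δ0 / 2 := by rw [abs_of_neg hs0] at hs; exact hs
    have := key (x + s) (by linarith) (-s) (by linarith) habs
    rw [show x + s + -s = x by ring] at this
    rwa [abs_sub_comm]

/-- Sequence version: shifts tending to 0. -/
lemma unifB (φ : ℝ → ℝ) (hφ : Continuous φ)
    (hp : ∀ u : ℝ, Tendsto (fun x => φ (x + u) - φ x) atTop (nhds 0))
    (t s : ℕ → ℝ) (ht : Tendsto t atTop atTop) (hs : Tendsto s atTop (nhds 0)) :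
    Tendsto (fun n => φ (t n + s n) - φ (t n)) atTop (nhds 0) := by
  rw [NormedAddCommGroup.tendsto_nhds_zero]
  intro ε hε
  obtain ⟨δ, hδ, X, hX⟩ := unifA φ hφ hp (half_pos hε)
  have h1 : ∀ᶠ n in atTop, |s n| ≤ δ := by
    have := (NormedAddCommGroup.tendsto_nhds_zero.mp hs) δ hδ
    exact this.mono fun n hn => le_of_lt (by simpa using hn)
  have h2 : ∀ᶠ n in atTop, X ≤ t n := ht.eventually_ge_atTop X
  filter_upwards [h1, h2] with n hn1 hn2
  have := hX (t n) hn2 (s n) hn1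
  calc ‖φ (t n + s n) - φ (t n)‖ = |φ (t n + s n) - φ (t n)| := rfl
    _ ≤ ε / 2 := this
    _ < ε := half_lt_self hε

/-- Linear growth bound for φ. -/
lemma linBound (φ : ℝ → ℝ) (hφ : Continuous φ)
    (hp : ∀ u : ℝ, Tendsto (fun x => φ (x + u) - φ x) atTop (nhds 0)) :
    ∃ C > (0:ℝ), ∃ X : ℝ, ∀ x ≥ X, |φ x| ≤ C + C * x := by
  obtain ⟨δ, hδ, X, hX⟩ := unifA φ hφ hp one_pos
  obtain ⟨M, hM⟩ := (isCompact_Icc (a := X) (b := X + δ)).exists_bound_of_continuousOn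
    hφ.continuousOn
  -- by induction: ∀ k, ∀ x ∈ [X, X + (k+1)δ], |φ x| ≤ M + k + 1
  have step : ∀ k : ℕ, ∀ x : ℝ, X ≤ x → x ≤ X + (k + 1) * δ → |φ x| ≤ M + k + 1 := by
    intro k
    induction k with
    | zero =>
      intro x hx1 hx2
      push_cast at hx2
      have := hM x ⟨hx1, by linarith⟩
      simp only [Nat.cast_zero]
      calc |φ x| = ‖φ x‖ := rfl
        _ ≤ M := this
        _ ≤ M + 0 + 1 := by linarith
    | succ k ih =>
      intro x hx1 hx2
      rcases le_or_gt x (X + (k + 1) * δ) with hc | hc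
      · have := ih x hx1 hc
        push_cast
        push_cast at this
        linarith
      · have hxd1 : X ≤ x - δ := by
          have : (0:ℝ) ≤ (k:ℝ) * δ := by positivity
          linarith
        have hxd2 : x - δ ≤ X + (k + 1) * δ := by push_cast at hx2 ⊢; linarith
        have hprev := ih (x - δ) hxd1 hxd2
        have hstep := hX (x - δ) hxd1 δ (by rw [abs_of_pos hδ])
        rw [show x - δ + δ = x by ring] at hstep
        push_cast at hprev ⊢
        calc |φ x| = |φ (x - δ) + (φ x - φ (x - δ))| := by ring_nf
          _ ≤ |φ (x - δ)| + |φ x - φ (x - δ)| := abs_add_le _ _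
          _ ≤ (M + k + 1) + 1 := add_le_add hprev hstep
          _ ≤ M + (k + 1) + 1 := by linarith
  -- now pick C
  have h1δ : (0:ℝ) < 1 / δ := one_div_pos.mpr hδ
  have hXδ : (0:ℝ) ≤ |X| / δ := div_nonneg (abs_nonneg _) hδ.le
  set C : ℝ := |M| + |X| / δ + 2 + 1 / δ with hCdef
  have hC0 : 0 < C := by
    have := abs_nonneg M
    rw [hCdef]; linarith
  refine ⟨C, hC0, max X 0 + 1, fun x hx => ?_⟩
  have hxX : X ≤ x := le_trans (le_max_left X 0) (by linarith)
  have hx0 : (0:ℝ) ≤ x := le_trans (le_max_right X 0) (by linarith)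
  set k : ℕ := ⌈(x - X) / δ⌉₊ with hk
  have hk1 : (x - X) / δ ≤ k := Nat.le_ceil _
  have hk2 : (k:ℝ) < (x - X) / δ + 1 := Nat.ceil_lt_add_one (div_nonneg (by linarith) hδ.le)
  have hxk : x ≤ X + (k + 1) * δ := by
    have := mul_le_mul_of_nonneg_right hk1 hδ.le
    rw [div_mul_cancel₀ _ hδ.ne'] at this
    nlinarith
  have hb := step k x hxX hxk
  have hMa : M ≤ |M| := le_abs_self M
  have e1 : (x - X) / δ ≤ (|X| + x) / δ := by
    gcongr
    linarith [neg_abs_le X]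
  have e2 : (|X| + x) / δ = |X| / δ + (1 / δ) * x := by ring
  have e3 : (1 / δ) * x ≤ C * x := by
    apply mul_le_mul_of_nonneg_right ?_ hx0
    rw [hCdef]; linarith [abs_nonneg M]
  calc |φ x| ≤ M + k + 1 := hb
    _ ≤ |M| + ((x - X) / δ + 1) + 1 := by linarith [hk2.le]
    _ ≤ |M| + (|X| / δ + (1 / δ) * x + 1) + 1 := by rw [← e2]; linarith
    _ ≤ C + C * x := by rw [hCdef]; linarith

lemma aux_div (A B : ℝ) :
    Tendsto (fun x : ℝ => (A * Real.log x + B) / x) atTop (nhds 0) := by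
  have h1 : Tendsto (fun x : ℝ => Real.log x / x) atTop (nhds 0) :=
    Real.isLittleO_log_id_atTop.tendsto_div_nhds_zero
  have h2 : Tendsto (fun x : ℝ => x⁻¹) atTop (nhds (0:ℝ)) := tendsto_inv_atTop_zero
  have h3 := (h1.const_mul A).add (h2.const_mul B)
  rw [show A * 0 + B * 0 = 0 by ring] at h3
  refine h3.congr' ?_
  filter_upwards [eventually_gt_atTop 0] with x hx
  field_simp


/-- From Lemma 2.7: inversion of `n 𝒯(h_n)/2 → 1` gives
`h_n = log n + α log log n - log L(log n) - log 2 - 𝔞 + o(1)`. -/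
theorem stmt7 (α a : ℝ) (hα : 0 < α) (ha : 0 < a)
    (L : ℝ → ℝ) (hLpos : ∀ t ≥ (0:ℝ), 0 < L t)
    (hLcont : ContinuousOn L (Set.Ici 0))
    (hLslow : SlowlyVarying L)
    (T : ℝ → ℝ)
    (hT : ∀ t ≥ (0:ℝ), T t = Real.exp (-a - t) * (a + t) ^ α / L (a + t))
    (h : ℕ → ℝ) (hpos : ∀ n ≥ 1, 0 < h n)
    (htop : Filter.Tendsto h Filter.atTop Filter.atTop)
    (hclair : Filter.Tendsto (fun n : ℕ => (n : ℝ) * T (h n) / 2)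
      Filter.atTop (nhds 1)) :
    Filter.Tendsto (fun n : ℕ =>
        h n - (Real.log n + α * Real.log (Real.log n) - Real.log (L (Real.log n))))
      Filter.atTop (nhds (-Real.log 2 - a)) := by
  have hlog2 : (0:ℝ) < Real.log 2 := Real.log_pos (by norm_num)
  -- φ and its properties
  set φ : ℝ → ℝ := fun x => Real.log (L (Real.exp x)) with hφdef
  clear_value φ
  have hLexp : Continuous fun x : ℝ => L (Real.exp x) :=
    hLcont.comp_continuous Real.continuous_exp fun x => (Real.exp_pos x).le
  have hφcont : Continuous φ := by
    simp only [hφdef]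
    exact hLexp.log fun x => (hLpos _ (Real.exp_pos x).le).ne'
  have hψ : ∀ u : ℝ, Tendsto (fun x => φ (x + u) - φ x) atTop (nhds 0) := by
    intro u
    have h1 := (hLslow _ (Real.exp_pos u)).comp Real.tendsto_exp_atTop
    have h2 := h1.log one_ne_zero
    rw [Real.log_one] at h2
    refine h2.congr fun x => ?_
    show Real.log (L (Real.exp u * Real.exp x) / L (Real.exp x)) = _
    rw [← Real.exp_add,
      Real.log_div (hLpos _ (Real.exp_pos _).le).ne' (hLpos _ (Real.exp_pos _).le).ne',
      add_comm u x]
    simp only [hφdef]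
  -- notation
  set u : ℕ → ℝ := fun n => a + h n with hudef
  set ℓ : ℕ → ℝ := fun n : ℕ => Real.log n with hℓdef
  set D : ℕ → ℝ := fun n : ℕ => Real.log ((n : ℝ) * T (h n) / 2) with hDdef
  clear_value u ℓ D
  have hu_top : Tendsto u atTop atTop := by
    rw [hudef]; exact tendsto_atTop_add_const_left _ a htop
  have hℓ_top : Tendsto ℓ atTop atTop := by
    rw [hℓdef]; exact Real.tendsto_log_atTop.comp tendsto_natCast_atTop_atTop
  have hlu_top : Tendsto (fun n => Real.log (u n)) atTop atTop :=
    Real.tendsto_log_atTop.comp hu_top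
  have hℓℓ_top : Tendsto (fun n => Real.log (ℓ n)) atTop atTop :=
    Real.tendsto_log_atTop.comp hℓ_top
  have hD : Tendsto D atTop (nhds 0) := by
    have := hclair.log one_ne_zero
    rw [Real.log_one] at this
    rw [hDdef]
    exact this
  -- key identity
  set R : ℕ → ℝ :=
    fun n => α * Real.log (u n) - φ (Real.log (u n)) - Real.log 2 - D n with hRdef
  clear_value R
  have huℓ : ∀ᶠ n in atTop, u n = ℓ n + R n := by
    filter_upwards [eventually_ge_atTop 1, htop.eventually_ge_atTop 0] with n hn1 hn0
    have hn' : (0:ℝ) < n := by exact_mod_cast Nat.pos_of_ne_zero (by omega)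
    have hupos : 0 < a + h n := by linarith
    have hLun : 0 < L (a + h n) := hLpos _ hupos.le
    have hrp : 0 < (a + h n) ^ α := Real.rpow_pos_of_pos hupos α
    have hTn : T (h n) = Real.exp (-a - h n) * (a + h n) ^ α / L (a + h n) := hT _ hn0
    have hTpos : 0 < T (h n) := by
      rw [hTn]; exact div_pos (mul_pos (Real.exp_pos _) hrp) hLun
    have hφu : φ (Real.log (a + h n)) = Real.log (L (a + h n)) := by
      simp only [hφdef]
      rw [Real.exp_log hupos]
    have hDn : D n = ℓ n + ((-a - h n) + α * Real.log (a + h n)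
        - Real.log (L (a + h n))) - Real.log 2 := by
      simp only [hDdef, hℓdef]
      rw [Real.log_div (mul_pos hn' hTpos).ne' two_ne_zero,
        Real.log_mul hn'.ne' hTpos.ne', hTn,
        Real.log_div (mul_pos (Real.exp_pos _) hrp).ne' hLun.ne',
        Real.log_mul (Real.exp_ne_zero _) hrp.ne', Real.log_exp,
        Real.log_rpow hupos]
      try ring
    simp only [hRdef, hudef]
    rw [hφu]
    linarith [hDn]
  -- growth bound on R
  obtain ⟨C, hC0, X, hXb⟩ := linBound φ hφcont hψ
  set K : ℝ := α + C + Real.log 2 + 1 with hKdef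
  clear_value K
  have hK0 : 0 < K := by rw [hKdef]; linarith
  have hRbound : ∀ᶠ n in atTop, |R n| ≤ K * (Real.log (u n) + 1) := by
    have hD1 : ∀ᶠ n in atTop, |D n| ≤ 1 := by
      have := (NormedAddCommGroup.tendsto_nhds_zero.mp hD) 1 one_pos
      exact this.mono fun n hn => le_of_lt (by simpa using hn)
    filter_upwards [hlu_top.eventually_ge_atTop (max X 1), hD1] with n hn1 hn2
    have hX' : X ≤ Real.log (u n) := le_trans (le_max_left _ _) hn1
    have h1' : (1:ℝ) ≤ Real.log (u n) := le_trans (le_max_right _ _) hn1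
    have hφb := hXb (Real.log (u n)) hX'
    rw [abs_le] at hφb hn2 ⊢
    simp only [hRdef, hKdef]
    constructor <;>
      nlinarith [mul_nonneg hα.le (by linarith : (0:ℝ) ≤ Real.log (u n)),
        mul_nonneg hC0.le (by linarith : (0:ℝ) ≤ Real.log (u n)),
        mul_nonneg hlog2.le (by linarith : (0:ℝ) ≤ Real.log (u n))]
  -- eventually K (log u + 1) ≤ u/2
  have hhalfx : ∀ᶠ x : ℝ in atTop, K * (Real.log x + 1) ≤ x / 2 := by
    have h0 := aux_div K K
    have h1 : ∀ᶠ x : ℝ in atTop, (K * Real.log x + K) / x < 1/2 :=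
      h0.eventually_lt_const (by norm_num)
    filter_upwards [h1, eventually_gt_atTop 0] with x hx1 hx2
    rw [div_lt_iff₀ hx2] at hx1
    nlinarith
  have hev6 : ∀ᶠ n in atTop, K * (Real.log (u n) + 1) ≤ u n / 2 :=
    hu_top.eventually hhalfx
  have hupos' : ∀ᶠ n in atTop, 0 < u n := hu_top.eventually_gt_atTop 0
  have hℓ1 : ∀ᶠ n in atTop, (1:ℝ) ≤ ℓ n := hℓ_top.eventually_ge_atTop 1
  -- log u ≤ log 2 + log ℓ eventually
  have hlogub : ∀ᶠ n in atTop, Real.log (u n) ≤ Real.log 2 + Real.log (ℓ n) := by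
    filter_upwards [huℓ, hRbound, hev6, hupos', hℓ1] with n h1 h2 h3 h4 h5
    have hub : u n ≤ 2 * ℓ n := by
      have h6 : R n ≤ u n / 2 := le_trans (le_trans (le_abs_self _) h2) h3
      linarith
    calc Real.log (u n) ≤ Real.log (2 * ℓ n) :=
          Real.log_le_log h4 hub
      _ = Real.log 2 + Real.log (ℓ n) := Real.log_mul two_ne_zero (by linarith)
  -- quotient tends to 1
  have hquot : Tendsto (fun n => u n / ℓ n) atTop (nhds 1) := by
    rw [← tendsto_sub_nhds_zero_iff]
    apply squeeze_zero_norm'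
      (a := fun n => K * (Real.log 2 + Real.log (ℓ n) + 1) / ℓ n)
    · filter_upwards [huℓ, hRbound, hlogub, hℓ1] with n h1 h2 h3 h4
      have hℓpos : (0:ℝ) < ℓ n := by linarith
      have he : u n / ℓ n - 1 = R n / ℓ n := by
        rw [h1]; field_simp; ring
      rw [he]
      rw [show ‖R n / ℓ n‖ = |R n| / ℓ n by
        rw [Real.norm_eq_abs, abs_div, abs_of_pos hℓpos]]
      have hnum : |R n| ≤ K * (Real.log 2 + Real.log (ℓ n) + 1) :=
        le_trans h2 (mul_le_mul_of_nonneg_left (by linarith) hK0.le)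
      gcongr
    · have := (aux_div K (K * Real.log 2 + K)).comp hℓ_top
      refine this.congr fun n => ?_
      show (K * Real.log (ℓ n) + (K * Real.log 2 + K)) / ℓ n = _
      ring_nf
  -- log u - log ℓ → 0
  have hr : Tendsto (fun n => Real.log (u n) - Real.log (ℓ n)) atTop (nhds 0) := by
    have h2 := hquot.log one_ne_zero
    rw [Real.log_one] at h2
    refine h2.congr' ?_
    filter_upwards [hupos', hℓ1] with n h1 h2
    exact Real.log_div h1.ne' (by linarith)
  -- φ difference → 0
  have hB : Tendsto (fun n => φ (Real.log (u n)) - φ (Real.log (ℓ n))) atTop (nhds 0) := by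
    have := unifB φ hφcont hψ (fun n => Real.log (ℓ n))
      (fun n => Real.log (u n) - Real.log (ℓ n)) hℓℓ_top hr
    refine this.congr fun n => ?_
    rw [show Real.log (ℓ n) + (Real.log (u n) - Real.log (ℓ n)) = Real.log (u n) by ring]
  -- assemble
  have hmain : Tendsto (fun n => α * (Real.log (u n) - Real.log (ℓ n))
      - (φ (Real.log (u n)) - φ (Real.log (ℓ n))) - D n + (-Real.log 2 - a))
      atTop (nhds (-Real.log 2 - a)) := by
    have h0 : Tendsto (fun n => α * (Real.log (u n) - Real.log (ℓ n))
        - (φ (Real.log (u n)) - φ (Real.log (ℓ n))) - D n) atTop (nhds 0) := by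
      have := ((hr.const_mul α).sub hB).sub hD
      simpa using this
    have := h0.add_const (-Real.log 2 - a)
    rwa [zero_add] at this
  refine hmain.congr' ?_
  filter_upwards [huℓ, hℓ1] with n h1 h2
  simp only [hudef, hℓdef, hRdef] at h1 h2 ⊢
  have hℓpos : (0:ℝ) < Real.log (n:ℝ) := by linarith
  have hφℓ : φ (Real.log (Real.log (n:ℝ))) = Real.log (L (Real.log (n:ℝ))) := by
    simp only [hφdef]
    rw [Real.exp_log hℓpos]
  rw [← hφℓ]
  linarith
end

section
/- Let α > 1, let L : (0,∞) → (0,∞) be a continuous slowly varying function, and let (d_n)_{n≥2} be real numbers with d_n = 2(log n + α·log log n − log L(log n)) + ε_n where ε_n → 0 as n → ∞. Then the series ∑_{n≥2} e^{−s·d_n} converges for every s ≥ 1/2 and diverges for every s with 0 ≤ s < 1/2. In particular the exponent of convergence of the series equals 1/2 and the series converges at the critical value s = 1/2. -/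
section aux

open Filter Real Set



lemma mySummable_of_eventually_le {f g : ℕ → ℝ}
    (h : ∀ᶠ n in atTop, 0 ≤ f n ∧ f n ≤ g n) (hg : Summable g) : Summable f := by
  obtain ⟨N, hN⟩ := eventually_atTop.1 h
  rw [← summable_nat_add_iff N]
  exact Summable.of_nonneg_of_le (fun n => (hN _ (Nat.le_add_left N n)).1)
    (fun n => (hN _ (Nat.le_add_left N n)).2) ((summable_nat_add_iff N).2 hg)

lemma myBertrand {β : ℝ} (hβ : 1 < β) :
    Summable (fun n : ℕ => 1 / (((n : ℝ) + 1) * Real.log ((n : ℝ) + 1) ^ β)) := by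
  set f : ℕ → ℝ := fun n => 1 / (((n : ℝ) + 1) * Real.log ((n : ℝ) + 1) ^ β) with hf
  have hβ0 : (0:ℝ) ≤ β := by linarith
  have hnonneg : ∀ n, 0 ≤ f n := by
    intro n
    have h1 : (0:ℝ) ≤ (n:ℝ) + 1 := by positivity
    have h2 : (0:ℝ) ≤ Real.log ((n:ℝ)+1) := Real.log_nonneg (by push_cast; linarith)
    positivity
  have hmono : ∀ ⦃m n : ℕ⦄, 0 < m → m ≤ n → f n ≤ f m := by
    intro m n hm hmn
    have hm1 : (1:ℝ) ≤ (m:ℝ) := by exact_mod_cast hm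
    have hmn' : (m:ℝ) ≤ (n:ℝ) := by exact_mod_cast hmn
    have hlm : (0:ℝ) < Real.log ((m:ℝ)+1) := Real.log_pos (by linarith)
    have hln : Real.log ((m:ℝ)+1) ≤ Real.log ((n:ℝ)+1) :=
      Real.log_le_log (by linarith) (by linarith)
    have h1 : (0:ℝ) < ((m:ℝ)+1) * Real.log ((m:ℝ)+1) ^ β := by positivity
    apply one_div_le_one_div_of_le h1
    have := Real.rpow_le_rpow hlm.le hln hβ0
    have h2 : (0:ℝ) < Real.log ((m:ℝ)+1) ^ β := Real.rpow_pos_of_pos hlm β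
    nlinarith
  rw [← summable_condensed_iff_of_nonneg hnonneg hmono]
  apply mySummable_of_eventually_le (g := fun k : ℕ => (Real.log 2) ^ (-β) * (k:ℝ) ^ (-β))
  · filter_upwards [eventually_ge_atTop 1] with k hk
    have hk1 : (1:ℝ) ≤ (k:ℝ) := by exact_mod_cast hk
    constructor
    · have := hnonneg (2 ^ k)
      positivity
    · have hc : ((2 ^ k : ℕ) : ℝ) = (2:ℝ) ^ k := by push_cast; ring
      have hlog2 : (0:ℝ) < Real.log 2 := Real.log_pos (by norm_num)
      have hkl : (0:ℝ) < (k:ℝ) * Real.log 2 := by positivity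
      have h2k : (1:ℝ) ≤ (2:ℝ) ^ k := one_le_pow₀ (by norm_num)
      have hlogeq : Real.log ((2:ℝ)^k) = (k:ℝ) * Real.log 2 := by
        rw [Real.log_pow]
      have hle : (k:ℝ) * Real.log 2 ≤ Real.log ((2:ℝ)^k + 1) := by
        rw [← hlogeq]; exact Real.log_le_log (by positivity) (by linarith)
      have hr : ((k:ℝ) * Real.log 2) ^ β ≤ Real.log ((2:ℝ)^k + 1) ^ β :=
        Real.rpow_le_rpow hkl.le hle hβ0
      have hpos : (0:ℝ) < ((2:ℝ)^k + 1) * Real.log ((2:ℝ)^k + 1) ^ β := by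
        have : (0:ℝ) < Real.log ((2:ℝ)^k + 1) := lt_of_lt_of_le hkl hle
        positivity
      have step1 : (2:ℝ)^k * f (2^k) ≤ (2:ℝ)^k / (((2:ℝ)^k) * ((k:ℝ) * Real.log 2) ^ β) := by
        rw [hf]
        simp only [hc]
        rw [mul_one_div]
        apply div_le_div_of_nonneg_left (by positivity) (by positivity)
        have h1 : (0:ℝ) < ((k:ℝ) * Real.log 2) ^ β := Real.rpow_pos_of_pos hkl β
        nlinarith [Real.rpow_pos_of_pos (lt_of_lt_of_le hkl hle) β]
      have step2 : (2:ℝ)^k / (((2:ℝ)^k) * ((k:ℝ) * Real.log 2) ^ β)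
          = (Real.log 2) ^ (-β) * (k:ℝ) ^ (-β) := by
        rw [Real.mul_rpow (by positivity) hlog2.le, Real.rpow_neg hlog2.le,
          Real.rpow_neg (by positivity)]
        field_simp
      calc (2:ℝ)^k * f (2^k) ≤ _ := step1
        _ = _ := step2
  · exact ((Real.summable_nat_rpow.2 (by linarith)).mul_left _)




lemma myUnifBound (h : ℝ → ℝ) (hc : Continuous h)
    (hlim : ∀ u : ℝ, Tendsto (fun x => h (x + u) - h x) atTop (nhds 0)) :
    ∃ M C : ℝ, 0 ≤ C ∧ ∀ y, M ≤ y → ∀ u ∈ Set.Icc (0:ℝ) 1, |h (y + u) - h y| ≤ C := by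
  set F : ℕ → Set ℝ := fun N => {u | ∀ x : ℝ, (N:ℝ) ≤ x → |h (x + u) - h x| ≤ 1} with hF
  have hFc : ∀ N, IsClosed (F N) := by
    intro N
    have : F N = ⋂ x ∈ Set.Ici (N:ℝ), {u | |h (x + u) - h x| ≤ 1} := by
      ext u; simp [hF, Set.mem_iInter]
    rw [this]
    refine isClosed_biInter fun x _ => ?_
    exact isClosed_le ((hc.comp (continuous_const.add continuous_id)).sub continuous_const).abs
      continuous_const
  have hFU : ⋃ N, F N = Set.univ := by
    ext u
    simp only [Set.mem_iUnion, Set.mem_univ, iff_true]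
    have h1 : ∀ᶠ x in atTop, |h (x + u) - h x| < 1 := by
      have := Metric.tendsto_nhds.mp (hlim u) 1 one_pos
      simpa [Real.dist_eq] using this
    obtain ⟨x0, hx0⟩ := eventually_atTop.1 h1
    exact ⟨⌈x0⌉₊, fun x hx => (hx0 x (le_trans (Nat.le_ceil x0) hx)).le⟩
  obtain ⟨N, u0, hu0⟩ := nonempty_interior_of_iUnion_of_closed hFc hFU
  obtain ⟨ε, hε, hball⟩ := Metric.mem_nhds_iff.1 (mem_interior_iff_mem_nhds.1 hu0)
  set a := u0 - ε/2 with ha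
  have hin : ∀ w : ℝ, 0 ≤ w → w ≤ ε → a + w ∈ F N := by
    intro w h0 h1
    apply hball
    rw [Metric.mem_ball, Real.dist_eq]
    rw [show a + w - u0 = w - ε/2 by rw [ha]; ring]
    rw [abs_lt]; constructor <;> linarith
  have step : ∀ y : ℝ, (N:ℝ) + a ≤ y → ∀ w : ℝ, 0 ≤ w → w ≤ ε → |h (y + w) - h y| ≤ 2 := by
    intro y hy w h0 h1
    have hx : (N:ℝ) ≤ y - a := by linarith
    have h1' := hin w h0 h1 (y - a) hx
    have h2' := hin 0 le_rfl hε.le (y - a) hx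
    rw [show y - a + (a + w) = y + w by ring] at h1'
    rw [show y - a + (a + 0) = y by ring] at h2'
    calc |h (y + w) - h y| = |(h (y + w) - h (y - a)) + (h (y - a) - h y)| := by ring_nf
      _ ≤ |h (y + w) - h (y - a)| + |h (y - a) - h y| := abs_add_le _ _
      _ ≤ 1 + 1 := by
          rw [abs_sub_comm (h (y - a)) (h y)]
          exact add_le_add h1' h2'
      _ = 2 := by norm_num
  have iter : ∀ k : ℕ, ∀ y : ℝ, (N:ℝ) + a ≤ y → ∀ w : ℝ, 0 ≤ w → w ≤ ε →
      |h (y + k * w) - h y| ≤ 2 * k := by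
    intro k
    induction k with
    | zero => intro y _ w _ _; simp
    | succ k ih =>
      intro y hy w h0 h1
      have hrw : y + ((k:ℕ)+1 : ℕ) * w = (y + k * w) + w := by push_cast; ring
      rw [hrw]
      have hy2 : (N:ℝ) + a ≤ y + k * w :=
        le_trans hy (le_add_of_nonneg_right (by positivity))
      have h2 := step (y + k * w) hy2 w h0 h1
      have h3 := ih y hy w h0 h1
      calc |h (y + k * w + w) - h y|
          ≤ |h (y + k * w + w) - h (y + k * w)| + |h (y + k * w) - h y| := by
            have := abs_add_le (h (y + k * w + w) - h (y + k * w)) (h (y + k * w) - h y)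
            simpa using this
        _ ≤ 2 + 2 * k := add_le_add h2 h3
        _ = 2 * ((k:ℕ)+1 : ℕ) := by push_cast; ring
  set K := ⌈1/ε⌉₊ with hKdef
  have hK1 : 1 ≤ K := Nat.one_le_ceil_iff.2 (by positivity)
  have hKε : 1/ε ≤ (K:ℝ) := Nat.le_ceil _
  have hK0 : (0:ℝ) < (K:ℝ) := by exact_mod_cast hK1
  refine ⟨(N:ℝ) + a, 2 * K, by positivity, fun y hy u hu => ?_⟩
  have hw0 : 0 ≤ u / K := div_nonneg hu.1 hK0.le
  have hw1 : u / K ≤ ε := by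
    rw [div_le_iff₀ hK0]
    have : (1:ℝ) ≤ ε * K := by
      rw [one_div] at hKε
      calc (1:ℝ) = ε * ε⁻¹ := by field_simp
        _ ≤ ε * K := by nlinarith
    nlinarith [hu.2]
  have := iter K y hy (u / K) hw0 hw1
  rwa [show (K:ℝ) * (u / K) = u by field_simp] at this

lemma mySublinear (h : ℝ → ℝ) (hc : Continuous h)
    (hlim : ∀ u : ℝ, Tendsto (fun x => h (x + u) - h x) atTop (nhds 0)) :
    Tendsto (fun x => h x / x) atTop (nhds 0) := by
  obtain ⟨M0, C, hC0, hMC⟩ := myUnifBound h hc hlim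
  set M := max M0 0 with hM
  have hMC' : ∀ y, M ≤ y → ∀ u ∈ Set.Icc (0:ℝ) 1, |h (y + u) - h y| ≤ C :=
    fun y hy => hMC y (le_trans (le_max_left _ _) hy)
  rw [Metric.tendsto_nhds]
  intro ε hε
  have h1 : ∀ᶠ x in atTop, |h (x + 1) - h x| < ε/3 := by
    have := Metric.tendsto_nhds.mp (hlim 1) (ε/3) (by positivity)
    simpa [Real.dist_eq] using this
  obtain ⟨A0, hA0⟩ := eventually_atTop.1 h1
  set A := max A0 M with hA
  have hAM : M ≤ A := le_max_right _ _
  have hA0' : (0:ℝ) ≤ A := le_trans (le_max_right _ _) hAM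
  have key : ∀ n : ℕ, |h (A + n) - h A| ≤ n * (ε/3) := by
    intro n
    induction n with
    | zero => simp
    | succ n ih =>
      have hstep : |h (A + n + 1) - h (A + n)| < ε/3 :=
        hA0 (A + n) (le_trans (le_max_left _ _) (le_add_of_nonneg_right n.cast_nonneg))
      calc |h (A + ((n:ℕ)+1:ℕ)) - h A|
          = |(h (A + n + 1) - h (A + n)) + (h (A + n) - h A)| := by
            push_cast; ring_nf
        _ ≤ |h (A + n + 1) - h (A + n)| + |h (A + n) - h A| := abs_add_le _ _
        _ ≤ ε/3 + n * (ε/3) := add_le_add hstep.le ih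
        _ = ((n:ℕ)+1:ℕ) * (ε/3) := by push_cast; ring
  rw [eventually_atTop]
  refine ⟨max (A + 1) (3*(|h A| + C + 1)/ε), fun x hx => ?_⟩
  have hxA : A + 1 ≤ x := le_trans (le_max_left _ _) hx
  have hx0 : (0:ℝ) < x := by linarith
  have hxb : 3*(|h A| + C + 1)/ε ≤ x := le_trans (le_max_right _ _) hx
  set n := ⌊x - A⌋₊ with hn
  have hxA0 : (0:ℝ) ≤ x - A := by linarith
  have hn1 : (n:ℝ) ≤ x - A := Nat.floor_le hxA0
  have hn2 : x - A < n + 1 := Nat.lt_floor_add_one _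
  have hb1 : |h x - h (A + n)| ≤ C := by
    have hmem : x - (A + n) ∈ Set.Icc (0:ℝ) 1 := ⟨by linarith, by linarith⟩
    have := hMC' (A + n) (le_trans hAM (le_add_of_nonneg_right n.cast_nonneg))
      (x - (A + n)) hmem
    rwa [show A + n + (x - (A + n)) = x by ring] at this
  have hb2 := key n
  have hhx : |h x| ≤ |h A| + C + (x - A) * (ε/3) := by
    have t1 : |h x| ≤ |h x - h (A + n)| + |h (A + n) - h A| + |h A| := by
      have := abs_add_le (h x - h (A + n) + (h (A + n) - h A)) (h A)
      have h2 := abs_add_le (h x - h (A + n)) (h (A + n) - h A)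
      have : |h x| ≤ |h x - h (A+n) + (h (A+n) - h A)| + |h A| := by
        calc |h x| = |(h x - h (A+n) + (h (A+n) - h A)) + h A| := by ring_nf
          _ ≤ _ := abs_add_le _ _
      linarith
    have t2 : (n:ℝ) * (ε/3) ≤ (x - A) * (ε/3) := by nlinarith
    linarith
  rw [Real.dist_eq, sub_zero, abs_div, abs_of_pos hx0, div_lt_iff₀ hx0]
  rw [div_le_iff₀ hε] at hxb
  have : (x - A) * (ε/3) ≤ x * (ε/3) := by nlinarith
  nlinarith


set_option maxHeartbeats 2000000 in
/-- Proposition 2.5: if `d_n = 2(log n + α log log n - log L(log n)) + o(1)` with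
`α > 1`, then `∑_{n ≥ 2} e^{-s d_n}` converges for `s ≥ 1/2` and diverges for
`0 ≤ s < 1/2`; in particular the critical exponent is `1/2` and the series
converges at the critical value. -/
theorem stmt9 (α : ℝ) (hα : 1 < α)
    (L : ℝ → ℝ) (hLpos : ∀ t > (0:ℝ), 0 < L t)
    (hLcont : ContinuousOn L (Set.Ioi 0))
    (hLslow : SlowlyVarying L)
    (d : ℕ → ℝ)
    (hd : Filter.Tendsto (fun n : ℕ =>
        d n - 2 * (Real.log n + α * Real.log (Real.log n) - Real.log (L (Real.log n))))
      Filter.atTop (nhds 0)) :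
    (∀ s : ℝ, 1 / 2 ≤ s → Summable (fun n : ℕ => Real.exp (-s * d (n + 2)))) ∧
    (∀ s : ℝ, 0 ≤ s → s < 1 / 2 → ¬ Summable (fun n : ℕ => Real.exp (-s * d (n + 2)))) := by
  set h : ℝ → ℝ := fun x => Real.log (L (Real.exp x)) with hh
  have hhc : Continuous h := by
    have h1 : Continuous fun x : ℝ => L (Real.exp x) :=
      hLcont.comp_continuous Real.continuous_exp (fun x => Set.mem_Ioi.2 (Real.exp_pos x))
    exact h1.log (fun x => (hLpos _ (Real.exp_pos x)).ne')
  have hlimh : ∀ u : ℝ, Tendsto (fun x => h (x + u) - h x) atTop (nhds 0) := by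
    intro u
    have t1 := hLslow (Real.exp u) (Real.exp_pos u)
    have t2 : Tendsto (fun t => Real.log (L (Real.exp u * t) / L t)) atTop (nhds 0) := by
      have := (Real.continuousAt_log one_ne_zero).tendsto.comp t1
      simpa [Function.comp_def] using this
    have t3 := t2.comp (Real.tendsto_exp_atTop)
    apply t3.congr
    intro x
    show Real.log (L (Real.exp u * Real.exp x) / L (Real.exp x)) = h (x + u) - h x
    rw [Real.log_div (hLpos _ (by positivity)).ne' (hLpos _ (Real.exp_pos x)).ne', hh]
    simp only [← Real.exp_add]
    rw [add_comm u x]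
  have hsub := mySublinear h hhc hlimh
  have hlnat : Tendsto (fun n : ℕ => Real.log n) atTop atTop :=
    Real.tendsto_log_atTop.comp tendsto_natCast_atTop_atTop
  have hllnat : Tendsto (fun n : ℕ => Real.log (Real.log n)) atTop atTop :=
    Real.tendsto_log_atTop.comp hlnat
  have hT2 : Tendsto (fun n : ℕ => Real.log (L (Real.log n)) / Real.log (Real.log n))
      atTop (nhds 0) := by
    have h0 := hsub.comp hllnat
    apply h0.congr'
    filter_upwards [hlnat.eventually_gt_atTop 0] with n hn
    simp only [Function.comp_apply, hh]
    rw [Real.exp_log hn]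
  have hEev : ∀ᶠ m : ℕ in atTop,
      |d m - 2 * (Real.log m + α * Real.log (Real.log m) - Real.log (L (Real.log m)))| ≤ 1 := by
    filter_upwards [Metric.tendsto_nhds.mp hd 1 one_pos] with m hm
    rw [Real.dist_eq, sub_zero] at hm
    exact hm.le
  constructor
  · -- convergence
    intro s hs
    set β : ℝ := (1 + α) / 2 with hβdef
    have hβ1 : 1 < β := by rw [hβdef]; linarith
    have hB : Summable (fun n : ℕ => 1 / (((n:ℝ) + 2) * Real.log ((n:ℝ) + 2) ^ β)) := by
      have h0 := (summable_nat_add_iff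
        (f := fun n : ℕ => 1 / (((n : ℝ) + 1) * Real.log ((n : ℝ) + 1) ^ β)) 1).2
        (myBertrand hβ1)
      refine h0.congr fun n => ?_
      push_cast
      ring_nf
    have hT2ev : ∀ᶠ m : ℕ in atTop,
        Real.log (L (Real.log m)) ≤ ((α - 1)/2) * Real.log (Real.log m) := by
      have hhalf : (0:ℝ) < (α - 1)/2 := by linarith
      filter_upwards [Metric.tendsto_nhds.mp hT2 ((α - 1)/2) hhalf,
        hllnat.eventually_ge_atTop 1] with m h1 h2
      rw [Real.dist_eq, sub_zero] at h1
      have hq0 : (0:ℝ) < Real.log (Real.log m) := by linarith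
      have h3 := (abs_lt.mp h1).2
      calc Real.log (L (Real.log m))
          = (Real.log (L (Real.log m)) / Real.log (Real.log m)) * Real.log (Real.log m) := by
            field_simp
        _ ≤ ((α - 1)/2) * Real.log (Real.log m) := by nlinarith
    have hmain : ∀ᶠ m : ℕ in atTop,
        Real.exp (-s * d m) ≤ Real.exp 2⁻¹ * (1 / ((m:ℝ) * Real.log m ^ β)) := by
      filter_upwards [hEev, hlnat.eventually_ge_atTop 1, hllnat.eventually_ge_atTop 0,
        hT2ev, eventually_ge_atTop 1] with m hE hl hq hLb hm1
      set ℓ : ℝ := Real.log m with hℓdef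
      set q : ℝ := Real.log ℓ with hqdef
      set G : ℝ := Real.log (L ℓ) with hGdef
      have hEabs := abs_le.mp hE
      have hβq : β * q = (1 + α)/2 * q := by rw [hβdef]
      have hαq : 0 ≤ α * q := mul_nonneg (by linarith) hq
      have hd0 : 0 ≤ d m := by nlinarith [hEabs.1, hEabs.2]
      have h1' : d m / 2 ≤ s * d m := by nlinarith [mul_nonneg (by linarith : (0:ℝ) ≤ s - 1/2) hd0]
      have h2' : ℓ + β * q - 2⁻¹ ≤ d m / 2 := by nlinarith [hEabs.1]
      have hsd : -s * d m ≤ 2⁻¹ - ℓ - β * q := by linarith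
      have hm0 : (0:ℝ) < (m:ℝ) := by exact_mod_cast Nat.lt_of_lt_of_le Nat.zero_lt_one hm1
      have hℓ0 : (0:ℝ) < ℓ := by linarith
      calc Real.exp (-s * d m) ≤ Real.exp (2⁻¹ - ℓ - β * q) := Real.exp_le_exp.2 hsd
        _ = Real.exp 2⁻¹ * (1 / ((m:ℝ) * ℓ ^ β)) := by
            rw [show 2⁻¹ - ℓ - β * q = 2⁻¹ + (-ℓ) + (q * (-β)) by ring, Real.exp_add,
              Real.exp_add, Real.exp_neg, Real.exp_log hm0, hqdef,
              ← Real.rpow_def_of_pos hℓ0, Real.rpow_neg hℓ0.le]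
            rw [mul_assoc, one_div, mul_inv]
    apply mySummable_of_eventually_le
      (g := fun n : ℕ => Real.exp 2⁻¹ * (1 / (((n:ℝ) + 2) * Real.log ((n:ℝ) + 2) ^ β)))
    · filter_upwards [(tendsto_add_atTop_nat 2).eventually hmain] with n hn
      refine ⟨Real.exp_nonneg _, ?_⟩
      push_cast at hn
      exact hn
    · exact hB.mul_left _
  · -- divergence
    intro s hs0 hs2 hsum
    have h12 : (0:ℝ) < 1 - 2 * s := by linarith
    have hharm : ¬ Summable (fun n : ℕ => 1 / ((n:ℝ) + 2)) := by
      intro hcon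
      apply Real.not_summable_one_div_natCast
      rw [← summable_nat_add_iff 2]
      refine hcon.congr fun n => ?_
      push_cast
      ring
    apply hharm
    have hT2abs : ∀ᶠ m : ℕ in atTop,
        |Real.log (L (Real.log m))| ≤ Real.log (Real.log m) := by
      filter_upwards [Metric.tendsto_nhds.mp hT2 1 one_pos,
        hllnat.eventually_ge_atTop 1] with m h1 h2
      rw [Real.dist_eq, sub_zero] at h1
      have hq0 : (0:ℝ) < Real.log (Real.log m) := by linarith
      calc |Real.log (L (Real.log m))|
          = |Real.log (L (Real.log m)) / Real.log (Real.log m)| * Real.log (Real.log m) := by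
            rw [abs_div, abs_of_pos hq0, div_mul_cancel₀ _ hq0.ne']
        _ ≤ 1 * Real.log (Real.log m) := by nlinarith
        _ = Real.log (Real.log m) := one_mul _
    have hql : Tendsto (fun m : ℕ => Real.log (Real.log m) / Real.log m) atTop (nhds 0) :=
      (Real.isLittleO_log_id_atTop.tendsto_div_nhds_zero).comp hlnat
    have hc : (0:ℝ) < (1 - 2*s) / (2 * (2*α + 2)) := by
      apply div_pos h12; linarith
    have hqlev : ∀ᶠ m : ℕ in atTop,
        (2*α + 2) * Real.log (Real.log m) ≤ ((1 - 2*s)/2) * Real.log m := by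
      filter_upwards [Metric.tendsto_nhds.mp hql _ hc, hlnat.eventually_ge_atTop 1] with m h1 h2
      rw [Real.dist_eq, sub_zero] at h1
      have hl0 : (0:ℝ) < Real.log m := by linarith
      have h3 := (abs_lt.mp h1).2
      have h4 : Real.log (Real.log m) < ((1 - 2*s) / (2 * (2*α + 2))) * Real.log m := by
        rw [div_lt_iff₀ hl0] at h3
        linarith
      have hα2 : (0:ℝ) < 2*α + 2 := by linarith
      calc (2*α + 2) * Real.log (Real.log m)
          ≤ (2*α + 2) * (((1 - 2*s) / (2 * (2*α + 2))) * Real.log m) := by nlinarith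
        _ = ((1 - 2*s)/2) * Real.log m := by field_simp
    have hlbig : ∀ᶠ m : ℕ in atTop, 1 ≤ ((1 - 2*s)/2) * Real.log m := by
      filter_upwards [hlnat.eventually_ge_atTop (2 / (1 - 2*s))] with m hm
      rw [div_le_iff₀ h12] at hm
      linarith
    have hmain2 : ∀ᶠ m : ℕ in atTop, 1 / (m:ℝ) ≤ Real.exp (-s * d m) := by
      filter_upwards [hEev, hlnat.eventually_ge_atTop 1, hllnat.eventually_ge_atTop 0,
        hT2abs, hqlev, hlbig, eventually_ge_atTop 1] with m hE hl hq hGq hql' hbig hm1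
      set ℓ : ℝ := Real.log m with hℓdef
      set q : ℝ := Real.log ℓ with hqdef
      set G : ℝ := Real.log (L ℓ) with hGdef
      have hEabs := abs_le.mp hE
      have hGabs := abs_le.mp hGq
      have hm0 : (0:ℝ) < (m:ℝ) := by exact_mod_cast Nat.lt_of_lt_of_le Nat.zero_lt_one hm1
      have e1 : s * (2 * (α * q)) ≤ α * q := by
        have t := mul_nonneg (mul_nonneg h12.le (by linarith : (0:ℝ) ≤ α)) hq
        nlinarith [t]
      have e2 : s * (-2 * G) ≤ q := by
        have t1 := mul_nonneg hs0 (by linarith : (0:ℝ) ≤ q + G)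
        have t2 := mul_nonneg h12.le hq
        nlinarith [t1, t2]
      have e3 : s * (d m - 2 * (ℓ + α * q - G)) ≤ 1 := by
        have t := mul_nonneg hs0 (by linarith [hEabs.2] :
          (0:ℝ) ≤ 1 - (d m - 2 * (ℓ + α * q - G)))
        nlinarith [t]
      have hαq : 0 ≤ α * q := mul_nonneg (by linarith) hq
      have hfin : s * d m ≤ ℓ := by linarith [e1, e2, e3, hql', hbig, hαq, hq]
      have : Real.exp (-ℓ) ≤ Real.exp (-s * d m) := Real.exp_le_exp.2 (by linarith)
      rw [Real.exp_neg, Real.exp_log hm0] at this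
      rwa [one_div]
    apply mySummable_of_eventually_le (g := fun n : ℕ => Real.exp (-s * d (n + 2)))
    · filter_upwards [(tendsto_add_atTop_nat 2).eventually hmain2] with n hn
      refine ⟨by positivity, ?_⟩
      push_cast at hn
      exact hn
    · exact hsum

end aux
end

section
/- Let α > 1 and let L be a positive measurable slowly varying function defined on [1,∞). Then the series ∑_{n≥1} L(n)/n^α converges, and there exist constants C > 0 and R₀ ≥ 2 such that for all real numbers r, R with R₀ ≤ 2r ≤ R one has ∑_{n=⌊r⌋}^{⌊R/2⌋} (L(R−n)/(R−n)^α)·(L(n)/n^α) ≤ C·(L(R)/R^α)·∑_{n=⌊r⌋}^{∞} L(n)/n^α. -/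
open Filter MeasureTheory

/-- pointwise convergence of log-increments -/
lemma hfun_tendsto (L : ℝ → ℝ) (hLpos : ∀ t ≥ (1:ℝ), 0 < L t) (hLslow : SlowlyVarying L)
    (u : ℝ) (_hu : 0 ≤ u) :
    Tendsto (fun x => Real.log (L (Real.exp (x + u))) - Real.log (L (Real.exp x)))
      atTop (nhds 0) := by
  have h1 : Tendsto (fun x : ℝ => L (Real.exp u * Real.exp x) / L (Real.exp x)) atTop (nhds 1) :=
    (hLslow (Real.exp u) (Real.exp_pos u)).comp Real.tendsto_exp_atTop
  have h2 := (Real.continuousAt_log (by norm_num : (1:ℝ) ≠ 0)).tendsto.comp h1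
  rw [Real.log_one] at h2
  refine h2.congr' ?_
  filter_upwards [eventually_ge_atTop (0:ℝ)] with x hx
  have e1 : (1:ℝ) ≤ Real.exp x := Real.one_le_exp hx
  have e2 : (1:ℝ) ≤ Real.exp (x + u) := Real.one_le_exp (by linarith)
  have hE : Real.exp (x + u) = Real.exp u * Real.exp x := by rw [Real.exp_add]; ring
  simp only [Function.comp]
  rw [← hE, Real.log_div (ne_of_gt (hLpos _ e2)) (ne_of_gt (hLpos _ e1))]

/-- For a sequence `z m → ∞` and measurable `g` whose increments tend to `0`,
the sets where the increments are uniformly small (for all `m ≥ k`) eventually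
have measure `> 3/2` inside `[0,2]`. -/
lemma exists_big (g : ℝ → ℝ) (hg : Measurable g)
    (hpt : ∀ u : ℝ, 0 ≤ u → Tendsto (fun x => g (x + u) - g x) atTop (nhds 0))
    (z : ℕ → ℝ) (hz : ∀ m : ℕ, (m:ℝ) ≤ z m) (ε : ℝ) (hε : 0 < ε) :
    ∃ n : ℕ, ∀ k, n ≤ k →
      (ENNReal.ofReal (3/2) <
        volume {t : ℝ | t ∈ Set.Icc (0:ℝ) 2 ∧ ∀ m, k ≤ m → |g (z m + t) - g (z m)| ≤ ε} ∧
      MeasurableSet {t : ℝ | t ∈ Set.Icc (0:ℝ) 2 ∧ ∀ m, k ≤ m → |g (z m + t) - g (z m)| ≤ ε}) := by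
  set S : ℕ → Set ℝ := fun k =>
    {t : ℝ | t ∈ Set.Icc (0:ℝ) 2 ∧ ∀ m, k ≤ m → |g (z m + t) - g (z m)| ≤ ε} with hS
  have hmeas : ∀ k, MeasurableSet (S k) := by
    intro k
    have : S k = Set.Icc (0:ℝ) 2 ∩ ⋂ m, ⋂ (_ : k ≤ m), {t | |g (z m + t) - g (z m)| ≤ ε} := by
      ext t; simp [hS, Set.mem_iInter]
    rw [this]
    refine measurableSet_Icc.inter (MeasurableSet.iInter fun m => MeasurableSet.iInter fun _ => ?_)
    have hm : Measurable fun t => |g (z m + t) - g (z m)| :=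
      ((hg.comp (measurable_const_add (z m))).sub measurable_const).abs
    exact hm measurableSet_Iic
  have hmono : Monotone S := by
    intro a b hab t ht
    exact ⟨ht.1, fun m hm => ht.2 m (le_trans hab hm)⟩
  have hzt : Tendsto z atTop atTop :=
    tendsto_atTop_mono hz tendsto_natCast_atTop_atTop
  have hunion : (⋃ k, S k) = Set.Icc (0:ℝ) 2 := by
    apply Set.Subset.antisymm
    · exact Set.iUnion_subset fun k t ht => ht.1
    · intro t ht
      have h1 : Tendsto (fun m => g (z m + t) - g (z m)) atTop (nhds 0) :=
        (hpt t ht.1).comp hzt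
      have h2 : ∀ᶠ m in atTop, |g (z m + t) - g (z m)| ≤ ε := by
        have hc : {y : ℝ | |y| ≤ ε} ∈ nhds (0:ℝ) := by
          have := Metric.closedBall_mem_nhds (0:ℝ) hε
          simpa [Metric.closedBall, Real.dist_eq] using this
        exact h1.eventually_mem hc
      obtain ⟨n, hn⟩ := eventually_atTop.mp h2
      exact Set.mem_iUnion.mpr ⟨n, ht, hn⟩
  have hlim : Tendsto (fun k => volume (S k)) atTop (nhds (volume (Set.Icc (0:ℝ) 2))) := by
    have := tendsto_measure_iUnion_atTop (μ := volume) hmono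
    rwa [hunion] at this
  have hvol : volume (Set.Icc (0:ℝ) 2) = ENNReal.ofReal 2 := by
    rw [Real.volume_Icc]; norm_num
  have hlt : ENNReal.ofReal (3/2) < volume (Set.Icc (0:ℝ) 2) := by
    rw [hvol]; exact ENNReal.ofReal_lt_ofReal_iff (by norm_num) |>.mpr (by norm_num)
  have := (hlim.eventually_const_lt hlt)
  obtain ⟨n, hn⟩ := eventually_atTop.mp this
  exact ⟨n, fun k hk => ⟨hn k hk, hmeas k⟩⟩

/-- Uniform convergence theorem for slowly varying functions (additive form). -/
lemma uct (g : ℝ → ℝ) (hg : Measurable g)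
    (hpt : ∀ u : ℝ, 0 ≤ u → Tendsto (fun x => g (x + u) - g x) atTop (nhds 0))
    (ε : ℝ) (hε : 0 < ε) :
    ∃ X : ℝ, 0 ≤ X ∧ ∀ x, X ≤ x → ∀ u, 0 ≤ u → u ≤ 1 → |g (x + u) - g x| ≤ ε := by
  by_contra hcon
  push_neg at hcon
  have hcon' : ∀ m : ℕ, ∃ x, (m:ℝ) ≤ x ∧ ∃ u, 0 ≤ u ∧ u ≤ 1 ∧ ε < |g (x + u) - g x| := by
    intro m
    obtain ⟨x, hx, u, hu⟩ := hcon m (Nat.cast_nonneg m)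
    exact ⟨x, hx, u, hu⟩
  choose x hx u hu0 hu1 hgt using hcon'
  have hε3 : 0 < ε / 3 := by linarith
  obtain ⟨n₁, hn₁⟩ := exists_big g hg hpt x hx (ε/3) hε3
  obtain ⟨n₂, hn₂⟩ := exists_big g hg hpt (fun m => x m + u m)
    (fun m => by show (m:ℝ) ≤ x m + u m; linarith [hx m, hu0 m]) (ε/3) hε3
  set n := max n₁ n₂ with hn
  obtain ⟨hvolS, hmeasS⟩ := hn₁ n (le_max_left _ _)
  obtain ⟨hvolT, hmeasT⟩ := hn₂ n (le_max_right _ _)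
  set S := {t : ℝ | t ∈ Set.Icc (0:ℝ) 2 ∧ ∀ m, n ≤ m → |g (x m + t) - g (x m)| ≤ ε/3} with hSdef
  set T0 := {t : ℝ | t ∈ Set.Icc (0:ℝ) 2 ∧
      ∀ m, n ≤ m → |g (x m + u m + t) - g (x m + u m)| ≤ ε/3} with hTdef
  set T : Set ℝ := (fun t => -(u n) + t) ⁻¹' T0 with hT
  have hvolT' : volume T = volume T0 := measure_preimage_add volume (-(u n)) T0
  have hmeasT' : MeasurableSet T := hmeasT.preimage (measurable_const_add _)
  -- S ∩ T nonempty
  have hST : (S ∩ T).Nonempty := by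
    by_contra hemp
    rw [Set.not_nonempty_iff_eq_empty] at hemp
    have hdisj : Disjoint S T := Set.disjoint_iff_inter_eq_empty.mpr hemp
    have hsub : S ∪ T ⊆ Set.Icc (0:ℝ) 3 := by
      rintro t (htS | htT)
      · exact ⟨htS.1.1, le_trans htS.1.2 (by norm_num)⟩
      · have h0 := htT.1
        have hun0 := hu0 n; have hun1 := hu1 n
        exact ⟨by simp only [Set.mem_Icc] at h0; linarith [h0.1],
               by simp only [Set.mem_Icc] at h0; linarith [h0.2]⟩
    have h1 : volume (S ∪ T) ≤ ENNReal.ofReal 3 := by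
      calc volume (S ∪ T) ≤ volume (Set.Icc (0:ℝ) 3) := measure_mono hsub
        _ = ENNReal.ofReal 3 := by rw [Real.volume_Icc]; norm_num
    have h2 : volume (S ∪ T) = volume S + volume T := measure_union hdisj hmeasT'
    have h3 : ENNReal.ofReal 3 < volume S + volume T := by
      calc ENNReal.ofReal 3 = ENNReal.ofReal (3/2) + ENNReal.ofReal (3/2) := by
            rw [← ENNReal.ofReal_add (by norm_num) (by norm_num)]; norm_num
        _ < volume S + volume T := by
            rw [hvolT']
            exact ENNReal.add_lt_add hvolS hvolT
    rw [h2] at h1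
    exact absurd h1 (not_le.mpr h3)
  obtain ⟨t, htS, htT⟩ := hST
  have h1 : |g (x n + t) - g (x n)| ≤ ε/3 := htS.2 n le_rfl
  have h2 : |g (x n + u n + (-(u n) + t)) - g (x n + u n)| ≤ ε/3 := htT.2 n le_rfl
  have he : x n + u n + (-(u n) + t) = x n + t := by ring
  rw [he] at h2
  have h3 : |g (x n + u n) - g (x n)| ≤
      |g (x n + u n) - g (x n + t)| + |g (x n + t) - g (x n)| := abs_sub_le _ _ _
  rw [abs_sub_comm (g (x n + u n)) (g (x n + t))] at h3
  have := hgt n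
  linarith

/-- Chaining the uniform bound gives polynomial growth control. -/
lemma growth (L : ℝ → ℝ) (hLpos : ∀ t ≥ (1:ℝ), 0 < L t) (ε : ℝ) (hε : 0 < ε)
    (X : ℝ) (hX : 0 ≤ X)
    (hB : ∀ x, X ≤ x → ∀ u, 0 ≤ u → u ≤ 1 →
      |Real.log (L (Real.exp (x + u))) - Real.log (L (Real.exp x))| ≤ ε) :
    ∃ c : ℝ, 0 < c ∧ ∀ t, Real.exp X ≤ t → L t ≤ c * t ^ ε := by
  set g : ℝ → ℝ := fun x => Real.log (L (Real.exp x)) with hgdef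
  have chain : ∀ k : ℕ, ∀ v, 0 ≤ v → v ≤ 1 → |g (X + k + v) - g X| ≤ ε * (k + 1) := by
    intro k
    induction k with
    | zero =>
      intro v hv0 hv1
      have := hB X le_rfl v hv0 hv1
      simpa using this
    | succ k ih =>
      intro v hv0 hv1
      have h1 : |g ((X + k + v) + 1) - g (X + k + v)| ≤ ε := by
        have := hB (X + k + v) (by have : (0:ℝ) ≤ (k:ℝ) := Nat.cast_nonneg k; linarith) 1 zero_le_one le_rfl
        simpa using this
      have h2 := ih v hv0 hv1
      have he : X + (k + 1 : ℕ) + v = (X + k + v) + 1 := by push_cast; ring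
      rw [he]
      calc |g ((X + k + v) + 1) - g X|
          ≤ |g ((X + k + v) + 1) - g (X + k + v)| + |g (X + k + v) - g X| := abs_sub_le _ _ _
        _ ≤ ε + ε * (k + 1) := add_le_add h1 h2
        _ = ε * ((k + 1 : ℕ) + 1) := by push_cast; ring
  have lin : ∀ x, X ≤ x → g x - g X ≤ ε * (x - X + 1) := by
    intro x hx
    set k := ⌊x - X⌋₊ with hk
    have h0 : (0:ℝ) ≤ x - X := by linarith
    have hfl : (k:ℝ) ≤ x - X := Nat.floor_le h0
    have hfl2 : x - X < (k:ℝ) + 1 := Nat.lt_floor_add_one _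
    set v := x - X - k with hv
    have hv0 : 0 ≤ v := by simp only [hv]; linarith
    have hv1 : v ≤ 1 := by simp only [hv]; linarith
    have hxe : x = X + k + v := by simp only [hv]; ring
    have := chain k v hv0 hv1
    rw [← hxe] at this
    have h1 : g x - g X ≤ ε * (k + 1) := le_trans (le_abs_self _) this
    have h2 : ε * ((k:ℝ) + 1) ≤ ε * (x - X + 1) := by
      apply mul_le_mul_of_nonneg_left (by linarith) (le_of_lt hε)
    linarith
  refine ⟨Real.exp (g X + ε * (1 - X)), Real.exp_pos _, ?_⟩
  intro t ht
  have htpos : (0:ℝ) < t := lt_of_lt_of_le (Real.exp_pos X) ht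
  have ht1 : (1:ℝ) ≤ t := le_trans (Real.one_le_exp hX) ht
  have hlx : X ≤ Real.log t := by
    rw [← Real.log_exp X]
    exact Real.log_le_log (Real.exp_pos X) ht
  have h1 := lin (Real.log t) hlx
  have hgx : g (Real.log t) = Real.log (L t) := by
    simp only [hgdef, Real.exp_log htpos]
  rw [hgx] at h1
  have h2 : L t = Real.exp (Real.log (L t)) := (Real.exp_log (hLpos t ht1)).symm
  rw [h2]
  have h3 : t ^ ε = Real.exp (Real.log t * ε) := Real.rpow_def_of_pos htpos ε
  rw [h3, ← Real.exp_add]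
  apply Real.exp_le_exp.mpr
  nlinarith [h1]

lemma summ (α : ℝ) (hα : 1 < α) (L : ℝ → ℝ) (hLpos : ∀ t ≥ (1:ℝ), 0 < L t)
    (c X : ℝ) (hX1 : 1 ≤ X)
    (hg : ∀ t, X ≤ t → L t ≤ c * t ^ ((α - 1)/2)) :
    Summable (fun n : ℕ => L ((n:ℝ) + 1) / ((n:ℝ) + 1) ^ α) := by
  set p := (α + 1)/2 with hp
  have hp1 : 1 < p := by simp only [hp]; linarith
  set N := ⌈X⌉₊ with hN
  apply (summable_nat_add_iff N).mp
  have hmaj : Summable fun n : ℕ => c * (((n + (N + 1) : ℕ) : ℝ) ^ p)⁻¹ :=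
    ((summable_nat_add_iff (N + 1)).mpr (Real.summable_nat_rpow_inv.mpr hp1)).mul_left c
  apply Summable.of_nonneg_of_le (fun n => ?_) (fun n => ?_) hmaj
  · have h1 : (1:ℝ) ≤ ((n + N : ℕ) : ℝ) + 1 := by have := Nat.cast_nonneg (α := ℝ) (n+N); linarith
    exact div_nonneg (le_of_lt (hLpos _ h1)) (Real.rpow_nonneg (by positivity) α)
  · set y : ℝ := ((n + N : ℕ) : ℝ) + 1 with hy
    have hyc : ((n + (N + 1) : ℕ) : ℝ) = y := by simp only [hy]; push_cast; ring
    have hypos : (0:ℝ) < y := by simp only [hy]; positivity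
    have hXy : X ≤ y := by
      have h1 : X ≤ (N : ℝ) := Nat.le_ceil X
      have h2 : (N : ℝ) ≤ y := by simp only [hy]; push_cast; linarith [Nat.cast_nonneg (α := ℝ) n]
      linarith
    have h3 : L y ≤ c * y ^ ((α - 1)/2) := hg y hXy
    have h4 : L y / y ^ α ≤ (c * y ^ ((α - 1)/2)) / y ^ α :=
      (div_le_div_iff_of_pos_right (Real.rpow_pos_of_pos hypos α)).mpr h3
    have h5 : (c * y ^ ((α - 1)/2)) / y ^ α = c * (y ^ p)⁻¹ := by
      rw [mul_div_assoc, ← Real.rpow_sub hypos]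
      congr 1
      rw [show (α - 1)/2 - α = -p by simp only [hp]; ring, Real.rpow_neg (le_of_lt hypos)]
    rw [hyc]
    calc L y / y ^ α ≤ (c * y ^ ((α - 1)/2)) / y ^ α := h4
      _ = c * (y ^ p)⁻¹ := h5

/-- Step 3 of the proof of Proposition 5.4: the convolution estimate
`∑_{n=⌊r⌋}^{⌊R/2⌋} (L(R-n)/(R-n)^α)(L(n)/n^α) ≤ C (L(R)/R^α) ∑_{n ≥ ⌊r⌋} L(n)/n^α`,
together with the convergence of `∑_{n ≥ 1} L(n)/n^α` for `α > 1`. -/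
theorem stmt13 (α : ℝ) (hα : 1 < α)
    (L : ℝ → ℝ) (hLpos : ∀ t ≥ (1:ℝ), 0 < L t)
    (hLmeas : Measurable L)
    (hLslow : SlowlyVarying L) :
    Summable (fun n : ℕ => L ((n : ℝ) + 1) / ((n : ℝ) + 1) ^ α) ∧
    ∃ C : ℝ, 0 < C ∧ ∃ R₀ : ℝ, 2 ≤ R₀ ∧
      ∀ r R : ℝ, R₀ ≤ 2 * r → 2 * r ≤ R →
        (∑ n ∈ Finset.Icc ⌊r⌋₊ ⌊R / 2⌋₊,
            (L (R - (n : ℝ)) / (R - (n : ℝ)) ^ α) * (L (n : ℝ) / (n : ℝ) ^ α)) ≤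
        C * (L R / R ^ α) *
          ∑' n : ℕ, L ((n : ℝ) + (⌊r⌋₊ : ℝ)) / ((n : ℝ) + (⌊r⌋₊ : ℝ)) ^ α := by
  have hgmeas : Measurable fun x => Real.log (L (Real.exp x)) :=
    Real.measurable_log.comp (hLmeas.comp Real.measurable_exp)
  have hpt : ∀ u : ℝ, 0 ≤ u → Tendsto
      (fun x => (fun x => Real.log (L (Real.exp x))) (x + u) -
        (fun x => Real.log (L (Real.exp x))) x) atTop (nhds 0) :=
    fun u hu => hfun_tendsto L hLpos hLslow u hu
  -- summability
  have hεpos : 0 < (α - 1)/2 := by linarith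
  obtain ⟨X₂, hX₂0, hB₂⟩ := uct _ hgmeas hpt ((α - 1)/2) hεpos
  obtain ⟨c, hc, hgrow⟩ := growth L hLpos _ hεpos X₂ hX₂0 hB₂
  have hsum : Summable (fun n : ℕ => L ((n:ℝ) + 1) / ((n:ℝ) + 1) ^ α) :=
    summ α hα L hLpos c (Real.exp X₂) (Real.one_le_exp hX₂0) hgrow
  refine ⟨hsum, ?_⟩
  -- the convolution bound
  obtain ⟨X₁, hX₁0, hB₁⟩ := uct _ hgmeas hpt 1 one_pos
  have hK : (0:ℝ) < Real.exp 1 * 2 ^ α := by positivity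
  refine ⟨Real.exp 1 * 2 ^ α, hK, max 2 (2 * Real.exp X₁), le_max_left _ _, ?_⟩
  intro r R hr hR
  set m := ⌊r⌋₊ with hm
  set M := ⌊R / 2⌋₊ with hM
  have hr1 : (1:ℝ) ≤ r := by
    have := le_trans (le_max_left 2 (2 * Real.exp X₁)) hr; linarith
  have hrx : Real.exp X₁ ≤ r := by
    have := le_trans (le_max_right 2 (2 * Real.exp X₁)) hr; linarith
  have hR2 : (2:ℝ) ≤ R := by linarith
  have hRpos : (0:ℝ) < R := by linarith
  have hLRpos : 0 < L R := hLpos R (by linarith)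
  have hm1 : 1 ≤ m := Nat.le_floor (by exact_mod_cast hr1)
  have hm1' : (1:ℝ) ≤ (m:ℝ) := by exact_mod_cast hm1
  -- summability of the shifted series
  have hs2 : Summable (fun n : ℕ => L ((n:ℝ) + (m:ℝ)) / ((n:ℝ) + (m:ℝ)) ^ α) := by
    have h := (summable_nat_add_iff (m - 1)).mpr hsum
    apply h.congr
    intro n
    have hc1 : ((n + (m - 1) : ℕ) : ℝ) + 1 = (n:ℝ) + (m:ℝ) := by
      push_cast [Nat.cast_sub hm1]; ring
    rw [hc1]
  -- nonnegativity of the shifted terms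
  have hs2nn : ∀ k : ℕ, 0 ≤ L ((k:ℝ) + (m:ℝ)) / ((k:ℝ) + (m:ℝ)) ^ α := by
    intro k
    have h1 : (1:ℝ) ≤ (k:ℝ) + (m:ℝ) := by
      have := Nat.cast_nonneg (α := ℝ) k; linarith
    exact div_nonneg (le_of_lt (hLpos _ h1)) (Real.rpow_nonneg (by linarith) α)
  -- per-term bound
  have hterm : ∀ n ∈ Finset.Icc m M,
      (L (R - (n:ℝ)) / (R - (n:ℝ)) ^ α) * (L (n:ℝ) / (n:ℝ) ^ α) ≤
      (Real.exp 1 * 2 ^ α) * (L R / R ^ α) * (L (n:ℝ) / (n:ℝ) ^ α) := by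
    intro n hn
    rw [Finset.mem_Icc] at hn
    have hn1 : (1:ℝ) ≤ (n:ℝ) := by
      have : (m:ℝ) ≤ (n:ℝ) := by exact_mod_cast hn.1
      linarith
    have hnR : (n:ℝ) ≤ R / 2 := by
      have h1 : (n:ℝ) ≤ (M:ℝ) := by exact_mod_cast hn.2
      have h2 : (M:ℝ) ≤ R / 2 := Nat.floor_le (by linarith)
      linarith
    set y := R - (n:ℝ) with hy
    have hy2 : R / 2 ≤ y := by simp only [hy]; linarith
    have hy1 : (1:ℝ) ≤ y := by linarith
    have hypos : (0:ℝ) < y := by linarith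
    have hyR : y ≤ R := by simp only [hy]; linarith
    have hyX : Real.exp X₁ ≤ y := by
      have : r ≤ R / 2 := by linarith
      linarith
    -- L y ≤ e * L R
    have hLy : L y ≤ Real.exp 1 * L R := by
      have hlogy : X₁ ≤ Real.log y := by
        rw [← Real.log_exp X₁]
        exact Real.log_le_log (Real.exp_pos _) hyX
      set u := Real.log R - Real.log y with hu
      have hu0 : 0 ≤ u := sub_nonneg.mpr (Real.log_le_log hypos hyR)
      have hu1 : u ≤ 1 := by
        have h1 : u = Real.log (R / y) := (Real.log_div (ne_of_gt hRpos) (ne_of_gt hypos)).symm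
        have h2 : R / y ≤ 2 := by
          rw [div_le_iff₀ hypos]; linarith
        have h3 : Real.log (R / y) ≤ Real.log 2 :=
          Real.log_le_log (by positivity) h2
        have h4 : Real.log 2 < 1 := by linarith [Real.log_two_lt_d9]
        linarith [h1 ▸ h3]
      have hb := hB₁ (Real.log y) hlogy u hu0 hu1
      simp only [hu] at hb
      have he1 : Real.log y + (Real.log R - Real.log y) = Real.log R := by ring
      rw [he1, Real.exp_log hRpos, Real.exp_log hypos] at hb
      have h5 : Real.log (L y) ≤ Real.log (L R) + 1 := by
        have := abs_le.mp hb
        linarith [this.1]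
      have h6 : L y = Real.exp (Real.log (L y)) := (Real.exp_log (hLpos y hy1)).symm
      rw [h6]
      calc Real.exp (Real.log (L y)) ≤ Real.exp (Real.log (L R) + 1) :=
            Real.exp_le_exp.mpr h5
        _ = Real.exp 1 * L R := by
            rw [Real.exp_add, Real.exp_log hLRpos]; ring
    -- (R/2)^α ≤ y^α
    have hpow : (R / 2) ^ α ≤ y ^ α :=
      Real.rpow_le_rpow (by linarith) hy2 (by linarith)
    have hdiv : L y / y ^ α ≤ (Real.exp 1 * L R) / ((R / 2) ^ α) :=
      div_le_div₀ (by positivity) hLy (by positivity) hpow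
    have heq : (Real.exp 1 * L R) / ((R / 2) ^ α) =
        (Real.exp 1 * 2 ^ α) * (L R / R ^ α) := by
      rw [Real.div_rpow (le_of_lt hRpos) (by norm_num : (0:ℝ) ≤ 2)]
      rw [div_div_eq_mul_div]
      ring
    have hfinal : L y / y ^ α ≤ (Real.exp 1 * 2 ^ α) * (L R / R ^ α) := heq ▸ hdiv
    have hbn : 0 ≤ L (n:ℝ) / (n:ℝ) ^ α :=
      div_nonneg (le_of_lt (hLpos _ hn1)) (Real.rpow_nonneg (by linarith) α)
    exact mul_le_mul_of_nonneg_right hfinal hbn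
  -- assemble
  calc (∑ n ∈ Finset.Icc m M, (L (R - (n:ℝ)) / (R - (n:ℝ)) ^ α) * (L (n:ℝ) / (n:ℝ) ^ α))
      ≤ ∑ n ∈ Finset.Icc m M,
          (Real.exp 1 * 2 ^ α) * (L R / R ^ α) * (L (n:ℝ) / (n:ℝ) ^ α) :=
        Finset.sum_le_sum hterm
    _ = (Real.exp 1 * 2 ^ α) * (L R / R ^ α) *
          ∑ n ∈ Finset.Icc m M, L (n:ℝ) / (n:ℝ) ^ α := by rw [Finset.mul_sum]
    _ ≤ (Real.exp 1 * 2 ^ α) * (L R / R ^ α) *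
          ∑' k : ℕ, L ((k:ℝ) + (m:ℝ)) / ((k:ℝ) + (m:ℝ)) ^ α := by
        apply mul_le_mul_of_nonneg_left ?_ ?_
        · -- finite sum ≤ tsum
          have hre : ∑ n ∈ Finset.Icc m M, L (n:ℝ) / (n:ℝ) ^ α =
              ∑ k ∈ Finset.range (M + 1 - m),
                L ((k:ℝ) + (m:ℝ)) / ((k:ℝ) + (m:ℝ)) ^ α := by
            rw [← Finset.Ico_add_one_right_eq_Icc, Finset.sum_Ico_eq_sum_range]
            apply Finset.sum_congr rfl
            intro k _
            have : ((m + k : ℕ) : ℝ) = (k:ℝ) + (m:ℝ) := by push_cast; ring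
            rw [this]
          rw [hre]
          exact hs2.sum_le_tsum _ (fun k _ => hs2nn k)
        · exact le_of_lt (by positivity)
end

section
/- Let β ∈ (0,1) and let L be a positive measurable slowly varying function defined on [1,∞). Let (a_k)_{k≥1} be a sequence of reals with a_k ≥ 1 and a_k^β / L(a_k) = k for every k ≥ 1. Then there exist constants C > 0 and R₀ ≥ 1 such that for every k ≥ 1 and every real R with R₀ ≤ R ≤ 2·a_k, one has 1/a_k ≤ C·k²·L(R)/R^{1+β}. -/
open Filter MeasureTheory Set

/-- Uniform convergence theorem for additively written slowly varying functions. -/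
lemma my_uct (g : ℝ → ℝ) (hg : Measurable g)
    (h0 : ∀ u : ℝ, Tendsto (fun x => g (x + u) - g x) atTop (nhds 0))
    (ε : ℝ) (hε : 0 < ε) :
    ∃ X : ℝ, ∀ x ≥ X, ∀ u ∈ Icc (0:ℝ) 1, |g (x + u) - g x| ≤ ε := by
  by_contra hcon
  push_neg at hcon
  choose x hx u hu hbig using hcon
  -- sequences
  set y : ℕ → ℝ := fun n => x (n : ℝ) with hy
  set v : ℕ → ℝ := fun n => u (n : ℝ) with hv
  have hyn : ∀ n : ℕ, (n : ℝ) ≤ y n := fun n => hx _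
  have hvmem : ∀ n : ℕ, v n ∈ Icc (0:ℝ) 1 := fun n => hu _
  have hbig' : ∀ n : ℕ, ε < |g (y n + v n) - g (y n)| := fun n => hbig _
  set A : ℕ → Set ℝ := fun n => Icc (0:ℝ) 2 ∩ {t | ε/2 ≤ |g (y n + t) - g (y n)|} with hA
  set B : ℕ → Set ℝ := fun n =>
    Icc (-1:ℝ) 2 ∩ {s | ε/2 ≤ |g ((y n + v n) + s) - g (y n + v n)|} with hB
  have hAm : ∀ n, MeasurableSet (A n) := by
    intro n
    exact measurableSet_Icc.inter
      (measurableSet_le measurable_const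
        (((hg.comp (measurable_id.const_add (y n))).sub measurable_const).abs))
  have hBm : ∀ n, MeasurableSet (B n) := by
    intro n
    exact measurableSet_Icc.inter
      (measurableSet_le measurable_const
        (((hg.comp (measurable_id.const_add (y n + v n))).sub measurable_const).abs))
  -- covering
  have hcover : ∀ n, Icc (0:ℝ) 2 ⊆ A n ∪ ((fun t => t + (-(v n))) ⁻¹' B n) := by
    intro n t ht
    by_contra htc
    rw [mem_union] at htc
    push_neg at htc
    obtain ⟨h1, h2⟩ := htc
    have h1' : |g (y n + t) - g (y n)| < ε/2 := by
      by_contra hge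
      exact h1 ⟨ht, le_of_not_gt hge⟩
    have hs : t + -(v n) ∈ Icc (-1:ℝ) 2 := by
      obtain ⟨hv0, hv1⟩ := hvmem n; obtain ⟨ht0, ht1⟩ := ht
      exact ⟨by linarith, by linarith⟩
    have h2' : |g ((y n + v n) + (t + (-(v n)))) - g (y n + v n)| < ε/2 := by
      by_contra hge
      exact h2 (Set.mem_preimage.2 ⟨hs, le_of_not_gt hge⟩)
    have heq : (y n + v n) + (t + (-(v n))) = y n + t := by ring
    rw [heq] at h2'
    have : |g (y n + v n) - g (y n)| < ε := by
      calc |g (y n + v n) - g (y n)|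
          ≤ |g (y n + v n) - g (y n + t)| + |g (y n + t) - g (y n)| := abs_sub_le _ _ _
        _ < ε := by rw [abs_sub_comm] at h2'; linarith
    exact absurd (hbig' n) (not_lt.2 this.le)
  have hmeas_sum : ∀ n, (ENNReal.ofReal 2) ≤ volume (A n) + volume (B n) := by
    intro n
    have h1 : volume (Icc (0:ℝ) 2) ≤ volume (A n ∪ ((fun t => t + (-(v n))) ⁻¹' B n)) :=
      measure_mono (hcover n)
    have h2 : volume ((fun t : ℝ => t + (-(v n))) ⁻¹' B n) = volume (B n) :=
      measure_preimage_add_right volume _ _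
    calc (ENNReal.ofReal 2) = volume (Icc (0:ℝ) 2) := by
          rw [Real.volume_Icc]; norm_num
      _ ≤ volume (A n ∪ ((fun t => t + (-(v n))) ⁻¹' B n)) := h1
      _ ≤ volume (A n) + volume ((fun t : ℝ => t + (-(v n))) ⁻¹' B n) := measure_union_le _ _
      _ = volume (A n) + volume (B n) := by rw [h2]
  -- tails
  set EA : ℕ → Set ℝ := fun N => ⋃ (n : ℕ) (_ : N ≤ n), A n with hEA
  set EB : ℕ → Set ℝ := fun N => ⋃ (n : ℕ) (_ : N ≤ n), B n with hEB
  have hEAanti : Antitone EA := by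
    intro N M hNM t ht
    simp only [hEA, mem_iUnion] at ht ⊢
    obtain ⟨n, hn, h⟩ := ht
    exact ⟨n, hNM.trans hn, h⟩
  have hEBanti : Antitone EB := by
    intro N M hNM t ht
    simp only [hEB, mem_iUnion] at ht ⊢
    obtain ⟨n, hn, h⟩ := ht
    exact ⟨n, hNM.trans hn, h⟩
  have hEAmeas : ∀ N, MeasurableSet (EA N) := fun N => MeasurableSet.biUnion (to_countable _) (fun n _ => hAm n)
  have hEBmeas : ∀ N, MeasurableSet (EB N) := fun N => MeasurableSet.biUnion (to_countable _) (fun n _ => hBm n)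
  have hEAsub : ∀ N, EA N ⊆ Icc (0:ℝ) 2 := fun N => iUnion₂_subset fun n _ => inter_subset_left
  have hEBsub : ∀ N, EB N ⊆ Icc (-1:ℝ) 2 := fun N => iUnion₂_subset fun n _ => inter_subset_left
  have hEAfin : volume (EA 0) ≠ ⊤ := by
    refine ne_top_of_le_ne_top ?_ (measure_mono (hEAsub 0))
    rw [Real.volume_Icc]; exact ENNReal.ofReal_ne_top
  have hEBfin : volume (EB 0) ≠ ⊤ := by
    refine ne_top_of_le_ne_top ?_ (measure_mono (hEBsub 0))
    rw [Real.volume_Icc]; exact ENNReal.ofReal_ne_top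
  -- ⋂ EA = ∅
  have hyatTop : Tendsto y atTop atTop :=
    tendsto_atTop_mono hyn tendsto_natCast_atTop_atTop
  have hiEA : (⋂ N, EA N) = ∅ := by
    ext t
    simp only [mem_iInter, mem_empty_iff_false, iff_false]
    intro ht
    have := (h0 t).eventually (eventually_abs_sub_lt 0 (by positivity : (0:ℝ) < ε/2))
    simp only [sub_zero] at this
    obtain ⟨X, hX⟩ := (eventually_atTop).1 this
    obtain ⟨M, hM⟩ := (eventually_atTop).1 (hyatTop.eventually_ge_atTop X)
    obtain ⟨n, hn, htn⟩ := mem_iUnion₂.1 (ht M)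
    exact absurd htn.2 (not_le.2 (hX _ (hM n hn)))
  have hiEB : (⋂ N, EB N) = ∅ := by
    ext t
    simp only [mem_iInter, mem_empty_iff_false, iff_false]
    intro ht
    have := (h0 t).eventually (eventually_abs_sub_lt 0 (by positivity : (0:ℝ) < ε/2))
    simp only [sub_zero] at this
    obtain ⟨X, hX⟩ := (eventually_atTop).1 this
    have hyv : Tendsto (fun n => y n + v n) atTop atTop := by
      apply tendsto_atTop_mono (fun n => le_add_of_nonneg_right (hvmem n).1 : ∀ n, y n ≤ y n + v n)
      exact hyatTop
    obtain ⟨M, hM⟩ := (eventually_atTop).1 (hyv.eventually_ge_atTop X)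
    obtain ⟨n, hn, htn⟩ := mem_iUnion₂.1 (ht M)
    exact absurd htn.2 (not_le.2 (hX _ (hM n hn)))
  have hTA : Tendsto (volume ∘ EA) atTop (nhds 0) := by
    have := tendsto_measure_iInter_atTop (μ := volume)
      (fun N => (hEAmeas N).nullMeasurableSet) hEAanti ⟨0, hEAfin⟩
    rwa [hiEA, measure_empty] at this
  have hTB : Tendsto (volume ∘ EB) atTop (nhds 0) := by
    have := tendsto_measure_iInter_atTop (μ := volume)
      (fun N => (hEBmeas N).nullMeasurableSet) hEBanti ⟨0, hEBfin⟩
    rwa [hiEB, measure_empty] at this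
  have hone : (0:ENNReal) < ENNReal.ofReal 1 := by norm_num
  obtain ⟨N1, hN1⟩ := (eventually_atTop).1 (hTA.eventually_lt_const hone)
  obtain ⟨N2, hN2⟩ := (eventually_atTop).1 (hTB.eventually_lt_const hone)
  have hAle : volume (A (max N1 N2)) ≤ volume (EA (max N1 N2)) := by
    refine measure_mono fun t ht => ?_
    simp only [hEA, mem_iUnion]
    exact ⟨max N1 N2, le_rfl, ht⟩
  have hBle : volume (B (max N1 N2)) ≤ volume (EB (max N1 N2)) := by
    refine measure_mono fun t ht => ?_
    simp only [hEB, mem_iUnion]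
    exact ⟨max N1 N2, le_rfl, ht⟩
  have h1 : volume (A (max N1 N2)) < ENNReal.ofReal 1 :=
    lt_of_le_of_lt hAle (hN1 _ (le_max_left _ _))
  have h2 : volume (B (max N1 N2)) < ENNReal.ofReal 1 :=
    lt_of_le_of_lt hBle (hN2 _ (le_max_right _ _))
  have : volume (A (max N1 N2)) + volume (B (max N1 N2)) < ENNReal.ofReal 2 := by
    calc volume (A (max N1 N2)) + volume (B (max N1 N2))
        < ENNReal.ofReal 1 + ENNReal.ofReal 1 := ENNReal.add_lt_add h1 h2
      _ = ENNReal.ofReal 2 := by rw [← ENNReal.ofReal_add] <;> norm_num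
  exact absurd (hmeas_sum (max N1 N2)) (not_le.2 this)

lemma my_chain (g : ℝ → ℝ) (ε X : ℝ) (hε : 0 ≤ ε)
    (hst : ∀ x ≥ X, ∀ u ∈ Icc (0:ℝ) 1, |g (x + u) - g x| ≤ ε) :
    ∀ n : ℕ, ∀ x, X ≤ x → ∀ y, x ≤ y → y ≤ x + n → |g y - g x| ≤ ε * n := by
  intro n
  induction n with
  | zero =>
    intro x hx y hxy hyx
    have : y = x := le_antisymm (by simpa using hyx) hxy
    simp [this]
  | succ n ih =>
    intro x hx y hxy hyx
    by_cases hy1 : y ≤ x + 1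
    · have := hst x hx (y - x) ⟨by linarith, by linarith⟩
      rw [add_sub_cancel] at this
      have hn1 : ε ≤ ε * (n + 1 : ℕ) := by
        have : (1:ℝ) ≤ (n + 1 : ℕ) := by exact_mod_cast Nat.one_le_iff_ne_zero.2 (Nat.succ_ne_zero n)
        nlinarith
      linarith
    · push_neg at hy1
      have h1 : |g ((y - 1) + 1) - g (y - 1)| ≤ ε :=
        hst (y - 1) (by linarith) 1 ⟨by norm_num, le_rfl⟩
      rw [sub_add_cancel] at h1
      have h2 : |g (y - 1) - g x| ≤ ε * n := by
        apply ih x hx (y - 1) (by linarith)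
        push_cast at hyx ⊢
        linarith
      calc |g y - g x| ≤ |g y - g (y - 1)| + |g (y - 1) - g x| := abs_sub_le _ _ _
        _ ≤ ε + ε * n := add_le_add h1 h2
        _ = ε * (n + 1 : ℕ) := by push_cast; ring
        
lemma my_potter (L : ℝ → ℝ) (hLpos : ∀ t ≥ (1:ℝ), 0 < L t) (hLmeas : Measurable L)
    (hLslow : SlowlyVarying L) (ε : ℝ) (hε : 0 < ε) :
    ∃ T : ℝ, 1 ≤ T ∧ ∀ s t : ℝ, T ≤ s → T ≤ t → s ≤ t →
      L t ≤ Real.exp ε * (t/s)^ε * L s ∧ L s ≤ Real.exp ε * (t/s)^ε * L t := by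
  set g : ℝ → ℝ := fun x => Real.log (L (Real.exp x)) with hgdef
  have hg : Measurable g := Real.measurable_log.comp (hLmeas.comp Real.measurable_exp)
  have h0 : ∀ u : ℝ, Tendsto (fun x => g (x + u) - g x) atTop (nhds 0) := by
    intro u
    have h1 : Tendsto (fun x : ℝ => L (Real.exp u * Real.exp x) / L (Real.exp x)) atTop (nhds 1) :=
      (hLslow (Real.exp u) (Real.exp_pos u)).comp Real.tendsto_exp_atTop
    have h2 : Tendsto (fun x : ℝ => Real.log (L (Real.exp u * Real.exp x) / L (Real.exp x)))
        atTop (nhds 0) := by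
      have := (Real.continuousAt_log one_ne_zero).tendsto.comp h1
      rwa [Real.log_one] at this
    apply h2.congr'
    filter_upwards [eventually_ge_atTop (0:ℝ), eventually_ge_atTop (-u)] with x hx hxu
    have he1 : (1:ℝ) ≤ Real.exp x := Real.one_le_exp hx
    have he2 : (1:ℝ) ≤ Real.exp u * Real.exp x := by
      rw [← Real.exp_add]
      exact Real.one_le_exp (by linarith)
    rw [Real.log_div (hLpos _ he2).ne' (hLpos _ he1).ne']
    rw [hgdef]
    simp only [Real.exp_add]
    ring_nf
  obtain ⟨X, hX⟩ := my_uct g hg h0 (ε/2) (by positivity)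
  refine ⟨max 1 (Real.exp X), le_max_left _ _, ?_⟩
  intro s t hs ht hst
  have hs1 : (1:ℝ) ≤ s := le_trans (le_max_left _ _) hs
  have ht1 : (1:ℝ) ≤ t := le_trans hs1 hst
  have hs0 : 0 < s := by linarith
  have ht0 : 0 < t := by linarith
  have hls : X ≤ Real.log s := by
    rw [← Real.log_exp X]
    exact Real.log_le_log (Real.exp_pos X) (le_trans (le_max_right _ _) hs)
  have hlst : Real.log s ≤ Real.log t := Real.log_le_log hs0 hst
  -- chained bound
  have key : |g (Real.log t) - g (Real.log s)| ≤ ε * (Real.log t - Real.log s) + ε := by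
    set d := Real.log t - Real.log s with hd
    have hd0 : 0 ≤ d := by linarith
    have hn : Real.log t ≤ Real.log s + (⌈d⌉₊ : ℕ) := by
      have := Nat.le_ceil d
      push_cast
      linarith [Nat.le_ceil d]
    have := my_chain g (ε/2) X (by positivity) hX ⌈d⌉₊ (Real.log s) hls (Real.log t) hlst hn
    have hceil : (⌈d⌉₊ : ℝ) ≤ d + 1 := (Nat.ceil_lt_add_one hd0).le
    calc |g (Real.log t) - g (Real.log s)| ≤ ε/2 * (⌈d⌉₊ : ℝ) := this
      _ ≤ ε/2 * (d + 1) := by nlinarith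
      _ ≤ ε * d + ε := by nlinarith
  have hgt : g (Real.log t) = Real.log (L t) := by rw [hgdef]; simp [Real.exp_log ht0]
  have hgs : g (Real.log s) = Real.log (L s) := by rw [hgdef]; simp [Real.exp_log hs0]
  rw [hgt, hgs] at key
  have hLs : 0 < L s := hLpos _ hs1
  have hLt : 0 < L t := hLpos _ ht1
  have hts : (t/s)^ε = Real.exp (ε * (Real.log t - Real.log s)) := by
    rw [Real.rpow_def_of_pos (by positivity), Real.log_div ht0.ne' hs0.ne', mul_comm]
  have habs := abs_le.1 key
  constructor
  · have : Real.log (L t) ≤ Real.log (L s) + (ε * (Real.log t - Real.log s) + ε) := by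
      linarith [habs.2]
    have := Real.exp_le_exp.2 this
    rw [Real.exp_log hLt, Real.exp_add, Real.exp_add, Real.exp_log hLs] at this
    calc L t ≤ L s * (Real.exp (ε * (Real.log t - Real.log s)) * Real.exp ε) := this
      _ = Real.exp ε * (t/s)^ε * L s := by rw [hts]; ring
  · have : Real.log (L s) ≤ Real.log (L t) + (ε * (Real.log t - Real.log s) + ε) := by
      linarith [habs.1]
    have := Real.exp_le_exp.2 this
    rw [Real.exp_log hLs, Real.exp_add, Real.exp_add, Real.exp_log hLt] at this
    calc L s ≤ L t * (Real.exp (ε * (Real.log t - Real.log s)) * Real.exp ε) := this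
      _ = Real.exp ε * (t/s)^ε * L t := by rw [hts]; ring


/-- From the proof of Proposition 5.3 (via Potter's bounds): if `a_k^β / L(a_k) = k`
then `1/a_k ≤ C k² L(R)/R^{1+β}` for all large `R ≤ 2 a_k`. -/
theorem stmt14 (β : ℝ) (hβ0 : 0 < β) (hβ1 : β < 1)
    (L : ℝ → ℝ) (hLpos : ∀ t ≥ (1:ℝ), 0 < L t)
    (hLmeas : Measurable L)
    (hLslow : SlowlyVarying L)
    (a : ℕ → ℝ) (ha1 : ∀ k : ℕ, 1 ≤ k → 1 ≤ a k)
    (ha2 : ∀ k : ℕ, 1 ≤ k → a k ^ β / L (a k) = (k : ℝ)) :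
    ∃ C : ℝ, 0 < C ∧ ∃ R₀ : ℝ, 1 ≤ R₀ ∧
      ∀ k : ℕ, 1 ≤ k → ∀ R : ℝ, R₀ ≤ R → R ≤ 2 * a k →
        1 / a k ≤ C * (k : ℝ) ^ 2 * L R / R ^ (1 + β) := by
  obtain ⟨T, hT1, hP⟩ := my_potter L hLpos hLmeas hLslow β hβ0
  refine ⟨2 * Real.exp β * 4 ^ β, by positivity, 2 * T, by linarith, ?_⟩
  intro k hk R hR0 hR2
  set A := a k with hAdef
  have hA1 : 1 ≤ A := ha1 k hk
  have hA0 : 0 < A := by linarith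
  have hLA : 0 < L A := hLpos _ hA1
  have hR1 : (1:ℝ) ≤ R := by linarith
  have hRpos : 0 < R := by linarith
  have hLR : 0 < L R := hLpos _ hR1
  have hRT : T ≤ R := by linarith
  have hAT : T ≤ A := by linarith
  have hk1 : (1:ℝ) ≤ (k:ℝ) := by exact_mod_cast hk
  have hkey : A ^ β = (k:ℝ) * L A := by
    have h := ha2 k hk
    rw [div_eq_iff hLA.ne'] at h
    exact h
  have hpot : L A * R ^ β ≤ Real.exp β * 4 ^ β * A ^ β * L R := by
    rcases le_total R A with h | h
    · have h1 := (hP R A hRT hAT h).1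
      have hsplit : (A / R) ^ β * R ^ β = A ^ β := by
        rw [← Real.mul_rpow (by positivity) (by positivity), div_mul_cancel₀ _ hRpos.ne']
      have h4 : (1:ℝ) ≤ (4:ℝ) ^ β := Real.one_le_rpow (by norm_num) hβ0.le
      calc L A * R ^ β ≤ (Real.exp β * (A/R)^β * L R) * R ^ β :=
            mul_le_mul_of_nonneg_right h1 (by positivity)
        _ = Real.exp β * ((A/R)^β * R^β) * L R := by ring
        _ = Real.exp β * A ^ β * L R := by rw [hsplit]
        _ ≤ 4 ^ β * (Real.exp β * A ^ β * L R) := by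
            refine le_mul_of_one_le_left ?_ h4
            have hAβ : (0:ℝ) ≤ A ^ β := (Real.rpow_pos_of_pos hA0 β).le
            positivity
        _ = Real.exp β * 4 ^ β * A ^ β * L R := by ring
    · have h1 := (hP A R hAT hRT h).2
      calc L A * R ^ β ≤ (Real.exp β * (R/A)^β * L R) * R ^ β :=
            mul_le_mul_of_nonneg_right h1 (by positivity)
        _ = Real.exp β * ((R/A)^β * R^β) * L R := by ring
        _ = Real.exp β * ((R/A) * R)^β * L R := by
            rw [Real.mul_rpow (by positivity) (by positivity)]
        _ ≤ Real.exp β * (4*A)^β * L R := by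
            refine mul_le_mul_of_nonneg_right (mul_le_mul_of_nonneg_left ?_ (Real.exp_pos β).le) hLR.le
            refine Real.rpow_le_rpow (by positivity) ?_ hβ0.le
            rw [div_mul_eq_mul_div, div_le_iff₀ hA0]
            nlinarith
        _ = Real.exp β * 4 ^ β * A ^ β * L R := by
            rw [Real.mul_rpow (by norm_num) hA0.le]; ring
  have hstep : R ^ β ≤ Real.exp β * 4 ^ β * (k:ℝ) * L R := by
    rw [hkey] at hpot
    have h2 : R ^ β * L A ≤ (Real.exp β * 4 ^ β * (k:ℝ) * L R) * L A := by nlinarith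
    exact le_of_mul_le_mul_right h2 hLA
  have hstep2 : R ^ β ≤ Real.exp β * 4 ^ β * (k:ℝ)^2 * L R := by
    have hk2 : (k:ℝ) ≤ (k:ℝ)^2 := by nlinarith
    have hpos : (0:ℝ) ≤ Real.exp β * 4 ^ β * L R := mul_nonneg (by positivity) hLR.le
    have hmono := mul_le_mul_of_nonneg_left hk2 hpos
    nlinarith [hmono]
  have hfinal : R ^ (1+β) ≤ (2 * Real.exp β * 4 ^ β) * (k:ℝ)^2 * L R * A := by
    rw [Real.rpow_add hRpos, Real.rpow_one]
    calc R * R ^ β ≤ R * (Real.exp β * 4^β * (k:ℝ)^2 * L R) :=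
          mul_le_mul_of_nonneg_left hstep2 hRpos.le
      _ ≤ (2*A) * (Real.exp β * 4^β * (k:ℝ)^2 * L R) := by
          refine mul_le_mul_of_nonneg_right hR2 (mul_nonneg (by positivity) hLR.le)
      _ = (2 * Real.exp β * 4 ^ β) * (k:ℝ)^2 * L R * A := by ring
  rw [div_le_div_iff₀ hA0 (Real.rpow_pos_of_pos hRpos _)]
  linarith [hfinal]
end
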